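/- arXiv:1805.07520 — 9 statements merged into one kernel-verified Lean document; each statement's English description precedes it below -/
import Mathlib

section
/- For any graphs F and any t ≥ 2, ex(n, K_t, F) ≤ ex(n,F)^{t/2}, i.e., the maximum number of copies of the complete graph K_t in an n-vertex F-free graph is at most the (t/2)-th power of the Turán number of F. -/
open SimpleGraph Finset

/-- `G'` is a copy of `H` in `G` (a subgraph isomorphic to `H`). -/
def IsCopyOf {W V : Type*} (H : SimpleGraph W) {G : SimpleGraph V} (G' : G.Subgraph) : Prop :=
  Nonempty (H ≃g G'.coe)

/-- `G` contains no subgraph isomorphic to `F`. -/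
def FreeOf {W V : Type*} (F : SimpleGraph W) (G : SimpleGraph V) : Prop :=
  ∀ G' : G.Subgraph, ¬ IsCopyOf F G'

/-- The number of copies (subgraphs isomorphic to `H`) of `H` in `G`. -/
noncomputable def numCopies {W V : Type*} (H : SimpleGraph W) (G : SimpleGraph V) : ℕ :=
  {G' : G.Subgraph | IsCopyOf H G'}.ncard

/-- The Turán number `ex(n, F)`. -/
noncomputable def exE (n : ℕ) {W : Type*} (F : SimpleGraph W) : ℕ :=
  sSup {m | ∃ G : SimpleGraph (Fin n), FreeOf F G ∧ G.edgeSet.ncard = m}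

/-- The generalized Turán number `ex(n, H, F)`. -/
noncomputable def exC (n : ℕ) {U W : Type*} (H : SimpleGraph U) (F : SimpleGraph W) : ℕ :=
  sSup {m | ∃ G : SimpleGraph (Fin n), FreeOf F G ∧ numCopies H G = m}

namespace TuranAux
variable {n : ℕ} (G : SimpleGraph (Fin n)) [DecidableRel G.Adj]

lemma L0 : (G.cliqueFinset 0).card ≤ 1 := by
  refine Finset.card_le_one.2 ?_
  intro a ha b hb
  rw [SimpleGraph.mem_cliqueFinset_iff] at ha hb
  have ha' := Finset.card_eq_zero.mp ha.2
  have hb' := Finset.card_eq_zero.mp hb.2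
  rw [ha', hb']

lemma LB {t : ℕ} (ht : 2 ≤ t) :
    (G.cliqueFinset t).card ≤ G.edgeFinset.card * (G.cliqueFinset (t-2)).card := by
  classical
  rcases (G.cliqueFinset t).eq_empty_or_nonempty with hE | ⟨s₀, hs₀⟩
  · simp [hE]
  have hs₀' := (SimpleGraph.mem_cliqueFinset_iff.mp hs₀).2
  have hpos : 0 < s₀.card := by omega
  obtain ⟨x₀, -⟩ := Finset.card_pos.mp hpos
  set f : Finset (Fin n) → Sym2 (Fin n) × Finset (Fin n) := fun s =>
    match s.sort (· ≤ ·) with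
    | a :: b :: l => (s(a, b), l.toFinset)
    | _ => (s(x₀, x₀), ∅) with hf
  rw [← Finset.card_product]
  apply Finset.card_le_card_of_injOn f
  · -- maps to
    intro s hs
    rw [Finset.mem_coe, SimpleGraph.mem_cliqueFinset_iff] at hs
    have hlen : (s.sort (· ≤ ·)).length = t := by rw [Finset.length_sort, hs.2]
    obtain ⟨a, b, l, hsort⟩ : ∃ a b l, s.sort (· ≤ ·) = a :: b :: l := by
      rcases hl : s.sort (· ≤ ·) with _ | ⟨a, _ | ⟨b, l⟩⟩ <;> rw [hl] at hlen <;>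
        simp at hlen <;> try omega
      · exact ⟨a, b, l, rfl⟩
    have hval : f s = (s(a, b), l.toFinset) := by rw [hf]; simp only; rw [hsort]
    have hnd : (a :: b :: l).Nodup := hsort ▸ s.sort_nodup (· ≤ ·)
    have hset : insert a (insert b l.toFinset) = s := by
      have := s.sort_toFinset (· ≤ ·)
      rw [hsort] at this
      simpa using this
    have hab : a ≠ b := by simp at hnd; tauto
    have has : a ∈ s := by rw [← hset]; simp
    have hbs : b ∈ s := by rw [← hset]; simp
    have hsub : l.toFinset ⊆ s := by
      rw [← hset]; intro x hx; simp [hx]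
    rw [hval, Finset.mem_coe, Finset.mem_product]
    constructor
    · rw [SimpleGraph.mem_edgeFinset, SimpleGraph.mem_edgeSet]
      exact hs.1 has hbs hab
    · rw [SimpleGraph.mem_cliqueFinset_iff]
      constructor
      · exact hs.1.subset (by exact_mod_cast hsub)
      · have : l.toFinset.card = l.length := List.toFinset_card_of_nodup (by simp at hnd; tauto)
        have hlen' : l.length + 2 = t := by rw [hsort] at hlen; simpa using hlen
        rw [this]
        omega
  · -- inj on
    intro s₁ h₁ s₂ h₂ heq
    rw [Finset.mem_coe, SimpleGraph.mem_cliqueFinset_iff] at h₁ h₂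
    have hlen₁ : (s₁.sort (· ≤ ·)).length = t := by rw [Finset.length_sort, h₁.2]
    have hlen₂ : (s₂.sort (· ≤ ·)).length = t := by rw [Finset.length_sort, h₂.2]
    obtain ⟨a₁, b₁, l₁, hsort₁⟩ : ∃ a b l, s₁.sort (· ≤ ·) = a :: b :: l := by
      rcases hl : s₁.sort (· ≤ ·) with _ | ⟨a, _ | ⟨b, l⟩⟩ <;> rw [hl] at hlen₁ <;>
        simp at hlen₁ <;> try omega
      · exact ⟨a, b, l, rfl⟩
    obtain ⟨a₂, b₂, l₂, hsort₂⟩ : ∃ a b l, s₂.sort (· ≤ ·) = a :: b :: l := by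
      rcases hl : s₂.sort (· ≤ ·) with _ | ⟨a, _ | ⟨b, l⟩⟩ <;> rw [hl] at hlen₂ <;>
        simp at hlen₂ <;> try omega
      · exact ⟨a, b, l, rfl⟩
    have hval₁ : f s₁ = (s(a₁, b₁), l₁.toFinset) := by rw [hf]; simp only; rw [hsort₁]
    have hval₂ : f s₂ = (s(a₂, b₂), l₂.toFinset) := by rw [hf]; simp only; rw [hsort₂]
    rw [hval₁, hval₂, Prod.mk.injEq] at heq
    have hset₁ : insert a₁ (insert b₁ l₁.toFinset) = s₁ := by
      have := s₁.sort_toFinset (· ≤ ·); rw [hsort₁] at this; simpa using this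
    have hset₂ : insert a₂ (insert b₂ l₂.toFinset) = s₂ := by
      have := s₂.sort_toFinset (· ≤ ·); rw [hsort₂] at this; simpa using this
    rw [← hset₁, ← hset₂, heq.2]
    rcases Sym2.eq_iff.mp heq.1 with ⟨rfl, rfl⟩ | ⟨rfl, rfl⟩
    · rfl
    · exact Finset.insert_comm _ _ _


/-- common neighborhood of the two endpoints of an edge -/
def cnb : Sym2 (Fin n) → Finset (Fin n) :=
  Sym2.lift ⟨fun u v => G.neighborFinset u ∩ G.neighborFinset v,
    fun u v => Finset.inter_comm _ _⟩

/-- product of degrees of endpoints -/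
def pd : Sym2 (Fin n) → ℕ :=
  Sym2.lift ⟨fun u v => G.degree u * G.degree v, fun u v => Nat.mul_comm _ _⟩

/-- endpoints of an edge as a finset -/
def efs : Sym2 (Fin n) → Finset (Fin n) :=
  Sym2.lift ⟨fun u v => ({u, v} : Finset (Fin n)), fun u v => Finset.pair_comm u v⟩

lemma three_mul_triangles_le :
    3 * (G.cliqueFinset 3).card ≤ ∑ e ∈ G.edgeFinset, (cnb G e).card := by
  classical
  set A := G.edgeFinset.sigma (fun e => cnb G e) with hA
  have hcard : A.card = ∑ e ∈ G.edgeFinset, (cnb G e).card := Finset.card_sigma _ _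
  set g : (Σ _ : Sym2 (Fin n), Fin n) → Finset (Fin n) :=
    fun p => insert p.2 (efs p.1) with hg
  have key : ∀ t ∈ G.cliqueFinset 3, ∃ p₁ p₂ p₃ : (Σ _ : Sym2 (Fin n), Fin n),
      p₁ ≠ p₂ ∧ p₁ ≠ p₃ ∧ p₂ ≠ p₃ ∧
      ({p₁, p₂, p₃} : Finset _) ⊆ A.filter (fun a => g a = t) := by
    intro t htm
    rw [SimpleGraph.mem_cliqueFinset_iff] at htm
    obtain ⟨x, y, z, hxy, hxz, hyz, rfl⟩ := Finset.card_eq_three.mp htm.2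
    have hx : x ∈ ({x, y, z} : Finset (Fin n)) := by simp
    have hy : y ∈ ({x, y, z} : Finset (Fin n)) := by simp
    have hz : z ∈ ({x, y, z} : Finset (Fin n)) := by simp
    have axy : G.Adj x y := htm.1 hx hy hxy
    have axz : G.Adj x z := htm.1 hx hz hxz
    have ayz : G.Adj y z := htm.1 hy hz hyz
    refine ⟨⟨s(x, y), z⟩, ⟨s(x, z), y⟩, ⟨s(y, z), x⟩, ?_, ?_, ?_, ?_⟩
    · intro h; rw [Sigma.mk.inj_iff, heq_iff_eq] at h; exact hyz h.2.symm
    · intro h; rw [Sigma.mk.inj_iff, heq_iff_eq] at h; exact hxz h.2.symm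
    · intro h; rw [Sigma.mk.inj_iff, heq_iff_eq] at h; exact hxy h.2.symm
    · intro p hp
      simp only [Finset.mem_insert, Finset.mem_singleton] at hp
      have hmem : ∀ u v w : Fin n, G.Adj u v → G.Adj u w → G.Adj v w →
          insert w (efs s(u, v)) = ({x, y, z} : Finset (Fin n)) →
          (⟨s(u, v), w⟩ : Σ _ : Sym2 (Fin n), Fin n) ∈ A.filter (fun a => g a = {x, y, z}) := by
        intro u v w huv huw hvw hins
        rw [Finset.mem_filter]
        constructor
        · rw [hA, Finset.mem_sigma]
          refine ⟨?_, ?_⟩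
          · rw [SimpleGraph.mem_edgeFinset, SimpleGraph.mem_edgeSet]; exact huv
          · show w ∈ cnb G s(u, v)
            have : cnb G s(u, v) = G.neighborFinset u ∩ G.neighborFinset v := rfl
            rw [this, Finset.mem_inter, SimpleGraph.mem_neighborFinset,
              SimpleGraph.mem_neighborFinset]
            exact ⟨huw, hvw⟩
        · exact hins
      rcases hp with rfl | rfl | rfl
      · refine hmem x y z axy axz ayz ?_
        show insert z {x, y} = _
        ext a; simp; try tauto
      · refine hmem x z y axz axy ayz.symm ?_
        show insert y {x, z} = _
        ext a; simp; try tauto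
      · refine hmem y z x ayz axy.symm axz.symm ?_
        show insert x {y, z} = _
        ext a; simp; try tauto
  have hsub : G.cliqueFinset 3 ⊆ A.image g := by
    intro t htm
    obtain ⟨p₁, p₂, p₃, -, -, -, hsubs⟩ := key t htm
    have : p₁ ∈ A.filter (fun a => g a = t) := hsubs (by simp)
    rw [Finset.mem_filter] at this
    exact Finset.mem_image.mpr ⟨p₁, this.1, this.2⟩
  have hfib : ∀ t ∈ G.cliqueFinset 3, 3 ≤ (A.filter (fun a => g a = t)).card := by
    intro t htm
    obtain ⟨p₁, p₂, p₃, h12, h13, h23, hsubs⟩ := key t htm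
    have h3 : ({p₁, p₂, p₃} : Finset _).card = 3 := by
      rw [Finset.card_insert_of_notMem (by simp [h12, h13]),
        Finset.card_insert_of_notMem (by simp [h23]), Finset.card_singleton]
    rw [← h3]
    exact Finset.card_le_card hsubs
  calc 3 * (G.cliqueFinset 3).card = ∑ _t ∈ G.cliqueFinset 3, 3 := by
        rw [Finset.sum_const, smul_eq_mul, mul_comm]
    _ ≤ ∑ t ∈ G.cliqueFinset 3, (A.filter (fun a => g a = t)).card :=
        Finset.sum_le_sum hfib
    _ ≤ ∑ b ∈ A.image g, (A.filter (fun a => g a = b)).card :=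
        Finset.sum_le_sum_of_subset hsub
    _ = A.card := (Finset.card_eq_sum_card_image g A).symm
    _ = _ := hcard


lemma cnb_sq_le_pd (e : Sym2 (Fin n)) : (cnb G e).card ^ 2 ≤ pd G e := by
  induction e with
  | _ u v =>
    have h : cnb G s(u, v) = G.neighborFinset u ∩ G.neighborFinset v := rfl
    have hp : pd G s(u, v) = G.degree u * G.degree v := rfl
    rw [h, hp, pow_two]
    apply Nat.mul_le_mul
    · exact le_trans (Finset.card_le_card Finset.inter_subset_left)
        (le_of_eq (G.card_neighborFinset_eq_degree u))
    · exact le_trans (Finset.card_le_card Finset.inter_subset_right)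
        (le_of_eq (G.card_neighborFinset_eq_degree v))

lemma sum_pd_le : ∑ e ∈ G.edgeFinset, pd G e ≤ 2 * G.edgeFinset.card ^ 2 := by
  classical
  have hdart : ∑ d : G.Dart, pd G d.edge = 2 * ∑ e ∈ G.edgeFinset, pd G e := by
    rw [← Finset.sum_fiberwise_of_maps_to
      (fun (d : G.Dart) (_ : d ∈ Finset.univ) => SimpleGraph.mem_edgeFinset.mpr d.edge_mem)
      (fun d => pd G d.edge)]
    rw [Finset.mul_sum]
    apply Finset.sum_congr rfl
    intro e he
    have hcongr : ∑ d ∈ Finset.univ.filter (fun d : G.Dart => d.edge = e), pd G d.edge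
        = ∑ _d ∈ Finset.univ.filter (fun d : G.Dart => d.edge = e), pd G e := by
      apply Finset.sum_congr rfl
      intro d hd
      rw [Finset.mem_filter] at hd
      rw [hd.2]
    rw [hcongr, Finset.sum_const, smul_eq_mul]
    congr 1
    exact G.dart_edge_fiber_card e (SimpleGraph.mem_edgeFinset.mp he)
  have hsnd : ∀ v : Fin n, ∑ d ∈ Finset.univ.filter (fun d : G.Dart => d.fst = v),
      G.degree d.snd ≤ 2 * G.edgeFinset.card := by
    intro v
    set fib := Finset.univ.filter (fun d : G.Dart => d.fst = v) with hfib
    have hinj : Set.InjOn (fun d : G.Dart => d.snd) fib := by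
      intro d₁ h₁ d₂ h₂ h
      rw [hfib, Finset.coe_filter] at h₁ h₂
      have : d₁.toProd = d₂.toProd := Prod.ext (h₁.2.trans h₂.2.symm) h
      exact SimpleGraph.Dart.ext _ _ this
    have := Finset.sum_image (f := fun w => G.degree w) (g := fun d : G.Dart => d.snd)
      (s := fib) (fun x hx y hy h => hinj hx hy h)
    rw [← this]
    calc ∑ w ∈ fib.image (fun d : G.Dart => d.snd), G.degree w
        ≤ ∑ w : Fin n, G.degree w :=
          Finset.sum_le_sum_of_subset (Finset.subset_univ _)
      _ = 2 * G.edgeFinset.card := G.sum_degrees_eq_twice_card_edges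
  have hdart2 : ∑ d : G.Dart, pd G d.edge ≤ 4 * G.edgeFinset.card ^ 2 := by
    have h1 : ∀ d : G.Dart, pd G d.edge = G.degree d.fst * G.degree d.snd := by
      rintro ⟨⟨u, v⟩, h⟩; rfl
    calc ∑ d : G.Dart, pd G d.edge = ∑ d : G.Dart, G.degree d.fst * G.degree d.snd := by
          apply Finset.sum_congr rfl; intro d _; exact h1 d
      _ = ∑ v : Fin n, ∑ d ∈ Finset.univ.filter (fun d : G.Dart => d.fst = v),
            G.degree d.fst * G.degree d.snd :=
          (Finset.sum_fiberwise_of_maps_to (fun d _ => Finset.mem_univ _) _).symm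
      _ ≤ ∑ v : Fin n, G.degree v * (2 * G.edgeFinset.card) := by
          apply Finset.sum_le_sum
          intro v _
          have : ∑ d ∈ Finset.univ.filter (fun d : G.Dart => d.fst = v),
              G.degree d.fst * G.degree d.snd
              = G.degree v * ∑ d ∈ Finset.univ.filter (fun d : G.Dart => d.fst = v),
                G.degree d.snd := by
            rw [Finset.mul_sum]
            apply Finset.sum_congr rfl
            intro d hd
            rw [Finset.mem_filter] at hd
            rw [hd.2]
          rw [this]
          exact Nat.mul_le_mul_left _ (hsnd v)
      _ = (∑ v : Fin n, G.degree v) * (2 * G.edgeFinset.card) := by rw [Finset.sum_mul]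
      _ = 4 * G.edgeFinset.card ^ 2 := by
          rw [G.sum_degrees_eq_twice_card_edges]; ring
  omega

lemma triangle_bound :
    9 * (G.cliqueFinset 3).card ^ 2 ≤ 2 * G.edgeFinset.card ^ 3 := by
  classical
  have h1 := three_mul_triangles_le G
  have h2 : (∑ e ∈ G.edgeFinset, (cnb G e).card) ^ 2
      ≤ (∑ e ∈ G.edgeFinset, (cnb G e).card ^ 2) * G.edgeFinset.card := by
    have := sum_mul_sq_le_sq_mul_sq (R := ℕ) G.edgeFinset
      (fun e => (cnb G e).card) (fun _ => 1)
    simpa using this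
  have h3 : ∑ e ∈ G.edgeFinset, (cnb G e).card ^ 2 ≤ ∑ e ∈ G.edgeFinset, pd G e :=
    Finset.sum_le_sum (fun e _ => cnb_sq_le_pd G e)
  have h4 := sum_pd_le G
  calc 9 * (G.cliqueFinset 3).card ^ 2 = (3 * (G.cliqueFinset 3).card) ^ 2 := by ring
    _ ≤ (∑ e ∈ G.edgeFinset, (cnb G e).card) ^ 2 := Nat.pow_le_pow_left h1 2
    _ ≤ (∑ e ∈ G.edgeFinset, (cnb G e).card ^ 2) * G.edgeFinset.card := h2
    _ ≤ (∑ e ∈ G.edgeFinset, pd G e) * G.edgeFinset.card :=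
        Nat.mul_le_mul_right _ h3
    _ ≤ (2 * G.edgeFinset.card ^ 2) * G.edgeFinset.card :=
        Nat.mul_le_mul_right _ h4
    _ = 2 * G.edgeFinset.card ^ 3 := by ring


lemma clique_sq_le : ∀ t : ℕ, 2 ≤ t →
    (G.cliqueFinset t).card ^ 2 ≤ G.edgeFinset.card ^ t := by
  intro t
  induction t using Nat.strong_induction_on with
  | _ t ih =>
    intro ht
    rcases Nat.lt_or_ge t 4 with h4 | h4
    · interval_cases t
      · -- t = 2
        have h := LB G (le_refl 2)
        have h0 := L0 G
        have : (G.cliqueFinset 2).card ≤ G.edgeFinset.card := by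
          calc (G.cliqueFinset 2).card ≤ G.edgeFinset.card * (G.cliqueFinset 0).card := h
            _ ≤ G.edgeFinset.card * 1 := Nat.mul_le_mul_left _ h0
            _ = G.edgeFinset.card := Nat.mul_one _
        exact Nat.pow_le_pow_left this 2
      · -- t = 3
        have h := triangle_bound G
        have h9 : 9 * (G.cliqueFinset 3).card ^ 2 ≤ 9 * G.edgeFinset.card ^ 3 := by omega
        omega
    · have hLB := LB G ht
      have hih := ih (t - 2) (by omega) (by omega)
      calc (G.cliqueFinset t).card ^ 2
          ≤ (G.edgeFinset.card * (G.cliqueFinset (t - 2)).card) ^ 2 :=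
            Nat.pow_le_pow_left hLB 2
        _ = G.edgeFinset.card ^ 2 * (G.cliqueFinset (t - 2)).card ^ 2 := by ring
        _ ≤ G.edgeFinset.card ^ 2 * G.edgeFinset.card ^ (t - 2) :=
            Nat.mul_le_mul_left _ hih
        _ = G.edgeFinset.card ^ t := by
            rw [← pow_add]
            congr 1
            omega

lemma clique_real (t : ℕ) (ht : 2 ≤ t) :
    ((G.cliqueFinset t).card : ℝ) ≤ (G.edgeFinset.card : ℝ) ^ ((t : ℝ) / 2) := by
  have h := clique_sq_le G t ht
  have hcast : ((G.cliqueFinset t).card : ℝ) ^ 2 ≤ (G.edgeFinset.card : ℝ) ^ t := by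
    exact_mod_cast h
  set N := ((G.cliqueFinset t).card : ℝ)
  set x := (G.edgeFinset.card : ℝ) ^ ((t : ℝ) / 2) with hx
  have hm0 : (0 : ℝ) ≤ (G.edgeFinset.card : ℝ) := Nat.cast_nonneg _
  have hx0 : 0 ≤ x := Real.rpow_nonneg hm0 _
  have hxsq : x ^ 2 = (G.edgeFinset.card : ℝ) ^ t := by
    rw [hx, ← Real.rpow_natCast ((G.edgeFinset.card : ℝ) ^ ((t : ℝ) / 2)) 2,
      ← Real.rpow_mul hm0]
    rw [show (t : ℝ) / 2 * ((2 : ℕ) : ℝ) = ((t : ℕ) : ℝ) by push_cast; ring]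
    rw [Real.rpow_natCast]
  have hN0 : 0 ≤ N := Nat.cast_nonneg _
  nlinarith [hcast, hxsq, hx0, hN0]


/-- The subgraph induced by a finset, with all `G`-edges inside it. -/
def csub (s : Finset (Fin n)) : G.Subgraph where
  verts := ↑s
  Adj u v := u ∈ s ∧ v ∈ s ∧ G.Adj u v
  adj_sub h := h.2.2
  edge_vert h := h.1
  symm := ⟨fun u v h => ⟨h.2.1, h.1, h.2.2.symm⟩⟩

lemma copies_eq_cliques (t : ℕ) :
    numCopies (⊤ : SimpleGraph (Fin t)) G = (G.cliqueFinset t).card := by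
  classical
  have hinj : Function.Injective (csub G) := by
    intro s₁ s₂ h
    have : (csub G s₁).verts = (csub G s₂).verts := by rw [h]
    exact Finset.coe_injective this
  have himg : {G' : G.Subgraph | IsCopyOf (⊤ : SimpleGraph (Fin t)) G'}
      = csub G '' ↑(G.cliqueFinset t) := by
    ext G'
    constructor
    · rintro ⟨e⟩
      have hfin : G'.verts.Finite := Set.toFinite _
      refine ⟨hfin.toFinset, ?_, ?_⟩
      · -- it's a t-clique
        rw [Finset.mem_coe, SimpleGraph.mem_cliqueFinset_iff]
        have hadj : ∀ u v, u ∈ G'.verts → v ∈ G'.verts → u ≠ v → G'.Adj u v := by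
          intro u v hu hv hne
          have hab : e.symm ⟨u, hu⟩ ≠ e.symm ⟨v, hv⟩ := by
            intro h
            apply hne
            have := congrArg e h
            simp only [RelIso.apply_symm_apply] at this
            exact congrArg Subtype.val this
          have htop : (⊤ : SimpleGraph (Fin t)).Adj (e.symm ⟨u, hu⟩) (e.symm ⟨v, hv⟩) :=
            (SimpleGraph.top_adj _ _).mpr hab
          have := e.map_adj_iff.mpr htop
          simp only [RelIso.apply_symm_apply] at this
          exact this
        constructor
        · intro u hu v hv hne
          rw [Finset.mem_coe, Set.Finite.mem_toFinset] at hu hv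
          exact G'.adj_sub (hadj u v hu hv hne)
        · have h1 : hfin.toFinset.card = Nat.card G'.verts :=
            (Nat.card_eq_card_finite_toFinset hfin).symm
          have h2 : Nat.card G'.verts = Nat.card (Fin t) := Nat.card_congr e.toEquiv.symm
          rw [h1, h2, Nat.card_eq_fintype_card, Fintype.card_fin]
      · -- G' = csub of its vertex set
        have hadj : ∀ u v, u ∈ G'.verts → v ∈ G'.verts → u ≠ v → G'.Adj u v := by
          intro u v hu hv hne
          have hab : e.symm ⟨u, hu⟩ ≠ e.symm ⟨v, hv⟩ := by
            intro h
            apply hne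
            have := congrArg e h
            simp only [RelIso.apply_symm_apply] at this
            exact congrArg Subtype.val this
          have htop : (⊤ : SimpleGraph (Fin t)).Adj (e.symm ⟨u, hu⟩) (e.symm ⟨v, hv⟩) :=
            (SimpleGraph.top_adj _ _).mpr hab
          have := e.map_adj_iff.mpr htop
          simp only [RelIso.apply_symm_apply] at this
          exact this
        apply SimpleGraph.Subgraph.ext
        · exact hfin.coe_toFinset
        · funext u v
          show (u ∈ hfin.toFinset ∧ v ∈ hfin.toFinset ∧ G.Adj u v) = G'.Adj u v
          rw [eq_iff_iff]
          constructor
          · rintro ⟨hu, hv, hG⟩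
            rw [Set.Finite.mem_toFinset] at hu hv
            exact hadj u v hu hv hG.ne
          · intro h
            refine ⟨?_, ?_, G'.adj_sub h⟩
            · rw [Set.Finite.mem_toFinset]; exact G'.edge_vert h
            · rw [Set.Finite.mem_toFinset]; exact G'.edge_vert h.symm
    · rintro ⟨s, hs, rfl⟩
      rw [Finset.mem_coe, SimpleGraph.mem_cliqueFinset_iff] at hs
      have hc : Nat.card ((csub G s).verts) = t := by
        rw [show ((csub G s).verts) = (↑s : Set (Fin n)) from rfl,
          Nat.card_coe_set_eq, Set.ncard_coe_finset, hs.2]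
      have hq : Nonempty (Fin t ≃ (csub G s).verts) := by
        haveI : Fintype ((csub G s).verts) := (Set.toFinite _).fintype
        have hc' : Fintype.card ((csub G s).verts) = t := by
          rw [← Nat.card_eq_fintype_card]; exact hc
        exact ⟨(Fintype.equivFinOfCardEq hc').symm⟩
      obtain ⟨q⟩ := hq
      refine ⟨⟨q, ?_⟩⟩
      intro a b
      show (csub G s).coe.Adj (q a) (q b) ↔ _
      rw [SimpleGraph.Subgraph.coe_adj, SimpleGraph.top_adj]
      constructor
      · intro h hab
        have : G.Adj ↑(q a) ↑(q b) := h.2.2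
        rw [hab] at this
        exact this.ne rfl
      · intro hab
        have hqa : (↑(q a) : Fin n) ∈ s := (q a).2
        have hqb : (↑(q b) : Fin n) ∈ s := (q b).2
        refine ⟨hqa, hqb, ?_⟩
        apply hs.1 hqa hqb
        intro h
        exact hab (q.injective (Subtype.ext h))
  rw [numCopies, himg, Set.ncard_image_of_injective _ hinj, Set.ncard_coe_finset]

end TuranAux

open TuranAux in
theorem stmt1 {W : Type*} (F : SimpleGraph W) (t n : ℕ) (ht : 2 ≤ t) :
    (exC n (⊤ : SimpleGraph (Fin t)) F : ℝ) ≤ (exE n F : ℝ) ^ ((t : ℝ) / 2) := by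
  classical
  set C := {m | ∃ G : SimpleGraph (Fin n), FreeOf F G ∧ numCopies (⊤ : SimpleGraph (Fin t)) G = m}
    with hC
  have hexC : exC n (⊤ : SimpleGraph (Fin t)) F = sSup C := rfl
  rcases C.eq_empty_or_nonempty with hCe | hCne
  · rw [hexC, hCe, csSup_empty]
    simp only [Nat.bot_eq_zero, Nat.cast_zero]
    positivity
  · have hbddC : BddAbove C := by
      refine ⟨Fintype.card (Finset (Fin n)), ?_⟩
      rintro m ⟨G, -, rfl⟩
      letI : DecidableRel G.Adj := fun a b => Classical.dec _
      rw [copies_eq_cliques G t]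
      exact Finset.card_le_univ _
    obtain ⟨G, hGfree, hGeq⟩ := Nat.sSup_mem hCne hbddC
    letI : DecidableRel G.Adj := fun a b => Classical.dec _
    have h1 : exC n (⊤ : SimpleGraph (Fin t)) F = (G.cliqueFinset t).card := by
      rw [hexC, ← hGeq, copies_eq_cliques G t]
    have hedge : G.edgeSet.ncard = G.edgeFinset.card := by
      rw [← SimpleGraph.coe_edgeFinset, Set.ncard_coe_finset]
    have hm0 : G.edgeFinset.card ≤ exE n F := by
      apply le_csSup
      · refine ⟨Nat.card (Sym2 (Fin n)), ?_⟩
        rintro m ⟨G', -, rfl⟩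
        calc G'.edgeSet.ncard ≤ (Set.univ : Set (Sym2 (Fin n))).ncard :=
              Set.ncard_le_ncard (Set.subset_univ _) Set.finite_univ
          _ = Nat.card (Sym2 (Fin n)) := Set.ncard_univ _
      · exact ⟨G, hGfree, hedge⟩
    calc (exC n (⊤ : SimpleGraph (Fin t)) F : ℝ) = ((G.cliqueFinset t).card : ℝ) := by
          rw [h1]
      _ ≤ (G.edgeFinset.card : ℝ) ^ ((t : ℝ) / 2) := clique_real G t ht
      _ ≤ (exE n F : ℝ) ^ ((t : ℝ) / 2) := by
          apply Real.rpow_le_rpow (Nat.cast_nonneg _) (Nat.cast_le.mpr hm0)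
          positivity
end

section
/- Let H be a k-uniform hypergraph with |E(H)| = C(x,k) = x(x-1)···(x-k+1)/k! for some real x ≥ k. Then the i-shadow of H has at least C(x,i) edges, where C(x,i) = x(x-1)···(x-i+1)/i!. -/
attribute [-instance] instDecidableEqFin

open Finset

/-- The generalized binomial coefficient `C(x, k)` for a real `x`. -/
noncomputable def genChoose (x : ℝ) (k : ℕ) : ℝ :=
  (∏ j ∈ Finset.range k, (x - j)) / (Nat.factorial k : ℝ)

lemma gc_zero (x : ℝ) : genChoose x 0 = 1 := by simp [genChoose]

lemma factor_nonneg {x : ℝ} {k j : ℕ} (h : (k : ℝ) - 1 ≤ x) (hj : j ∈ Finset.range k) :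
    0 ≤ x - j := by
  rw [Finset.mem_range] at hj
  have : (j : ℝ) + 1 ≤ (k : ℝ) := by exact_mod_cast hj
  linarith

lemma gc_nonneg {x : ℝ} {k : ℕ} (h : (k : ℝ) - 1 ≤ x) : 0 ≤ genChoose x k :=
  div_nonneg (Finset.prod_nonneg fun j hj => factor_nonneg h hj) (by positivity)

lemma prod_nat_cast_k (k : ℕ) : (∏ j ∈ Finset.range k, ((k : ℝ) - j)) = (Nat.factorial k : ℝ) := by
  have h : ∀ j ∈ Finset.range k, ((k : ℝ) - j) = ((k - j : ℕ) : ℝ) := by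
    intro j hj
    rw [Finset.mem_range] at hj
    rw [Nat.cast_sub hj.le]
  rw [Finset.prod_congr rfl h, ← Nat.cast_prod, ← Nat.descFactorial_eq_prod_range,
    Nat.descFactorial_self]

lemma gc_one_le {x : ℝ} {k : ℕ} (h : (k : ℝ) ≤ x) : 1 ≤ genChoose x k := by
  rw [genChoose, le_div_iff₀ (by positivity), one_mul, ← prod_nat_cast_k]
  apply Finset.prod_le_prod
  · intro j hj
    rw [Finset.mem_range] at hj
    have : (j : ℝ) < (k : ℝ) := by exact_mod_cast hj
    linarith
  · intro j _hj
    linarith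

lemma gc_mono {x y : ℝ} {k : ℕ} (hy : (k : ℝ) - 1 ≤ y) (hxy : y ≤ x) :
    genChoose y k ≤ genChoose x k := by
  rw [genChoose, genChoose, div_le_div_iff_of_pos_right (by positivity)]
  exact Finset.prod_le_prod (fun j hj => factor_nonneg hy hj) (fun j _ => by linarith)

lemma gc_succ (x : ℝ) (k : ℕ) :
    genChoose x (k + 1) = genChoose x k * ((x - k) / (k + 1)) := by
  rw [genChoose, genChoose, Finset.prod_range_succ, Nat.factorial_succ]
  push_cast
  field_simp

lemma gc_shift (x : ℝ) (k : ℕ) :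
    genChoose x (k + 1) = (x / (k + 1)) * genChoose (x - 1) k := by
  rw [genChoose, genChoose, Finset.prod_range_succ', Nat.factorial_succ]
  push_cast
  have : ∀ j ∈ Finset.range k, (x - ((j : ℝ) + 1)) = (x - 1 - j) := by
    intro j _; ring
  rw [Finset.prod_congr rfl this]
  field_simp
  ring

lemma gc_pascal (x : ℝ) (k : ℕ) :
    genChoose x (k + 1) = genChoose (x - 1) (k + 1) + genChoose (x - 1) k := by
  rw [gc_shift, gc_succ]
  have hk : ((k : ℝ) + 1) ≠ 0 := by positivity
  field_simp
  ring

lemma gc_nat {n k : ℕ} (h : k ≤ n) : genChoose (n : ℝ) k = (n.choose k : ℝ) := by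
  have hp : (∏ j ∈ Finset.range k, ((n : ℝ) - j)) = ((n.descFactorial k : ℕ) : ℝ) := by
    rw [Nat.descFactorial_eq_prod_range, Nat.cast_prod]
    apply Finset.prod_congr rfl
    intro j hj
    rw [Finset.mem_range] at hj
    rw [Nat.cast_sub (hj.le.trans h)]
  rw [genChoose, hp, Nat.descFactorial_eq_factorial_mul_choose]
  push_cast
  field_simp

section InitSeg
open Finset

lemma exists_lower_subset {β : Type*} [LinearOrder β] [DecidableEq β] (T : Finset β) :
    ∀ m : ℕ, m ≤ T.card → ∃ C ⊆ T, C.card = m ∧ ∀ x ∈ C, ∀ y ∈ T, y ≤ x → y ∈ C := by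
  intro m
  induction m with
  | zero => exact fun _ => ⟨∅, empty_subset _, rfl, by simp⟩
  | succ m ih =>
    intro hm
    obtain ⟨C, hCT, hCcard, hClow⟩ := ih (Nat.le_of_succ_le hm)
    have hne : (T \ C).Nonempty := by
      rw [← Finset.card_pos, Finset.card_sdiff_of_subset hCT]
      omega
    set z := (T \ C).min' hne with hz
    have hzT : z ∈ T \ C := Finset.min'_mem _ _
    refine ⟨insert z C, ?_, ?_, ?_⟩
    · exact Finset.insert_subset (Finset.mem_sdiff.1 hzT).1 hCT
    · rw [Finset.card_insert_of_notMem (Finset.mem_sdiff.1 hzT).2, hCcard]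
    · intro a ha y hy hya
      rcases Finset.mem_insert.1 ha with rfl | haC
      · by_cases hyC : y ∈ C
        · exact Finset.mem_insert_of_mem hyC
        · have : z ≤ y := Finset.min'_le _ _ (Finset.mem_sdiff.2 ⟨hy, hyC⟩)
          have : y = z := le_antisymm hya this
          subst this
          exact Finset.mem_insert_self _ _
      · exact Finset.mem_insert_of_mem (hClow a haC y hy hya)

variable {n : ℕ}

lemma exists_initSeg (k m : ℕ) (hm : m ≤ (Finset.powersetCard k (Finset.univ : Finset (Fin n))).card) :
    ∃ 𝒞 : Finset (Finset (Fin n)), Finset.Colex.IsInitSeg 𝒞 k ∧ 𝒞.card = m := by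
  classical
  set P := Finset.powersetCard k (Finset.univ : Finset (Fin n))
  set Q := P.image toColex with hQ
  have hQcard : Q.card = P.card :=
    Finset.card_image_of_injective _ toColex.injective
  obtain ⟨C, hCQ, hCcard, hClow⟩ := exists_lower_subset Q m (by rw [hQcard]; exact hm)
  refine ⟨C.image ofColex, ⟨?_, ?_⟩, ?_⟩
  · intro s hs
    simp only [Finset.coe_image, Set.mem_image, Finset.mem_coe] at hs
    obtain ⟨c, hc, rfl⟩ := hs
    have := hCQ hc
    rw [hQ, Finset.mem_image] at this
    obtain ⟨t, htP, ht⟩ := this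
    have : ofColex c = t := by rw [← ht]; rfl
    rw [this]
    exact (Finset.mem_powersetCard.1 htP).2
  · rintro s t hs ⟨hts, htcard⟩
    rw [Finset.mem_image] at hs ⊢
    obtain ⟨c, hc, rfl⟩ := hs
    refine ⟨toColex t, ?_, rfl⟩
    have htQ : toColex t ∈ Q := by
      rw [hQ, Finset.mem_image]
      exact ⟨t, Finset.mem_powersetCard.2 ⟨Finset.subset_univ _, htcard⟩, rfl⟩
    exact hClow c hc _ htQ (le_of_lt (by simpa using hts))
  · rw [Finset.card_image_of_injective _ ofColex.injective, hCcard]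

end InitSeg

section Step
open Finset
open scoped FinsetFamily

variable {β : Type*} [LinearOrder β] [Fintype β] [DecidableEq β]

/-- Left-compressed relative to ground set `S`. -/
def LC (S : Finset β) (H : Finset (Finset β)) : Prop :=
  ∀ e ∈ H, e ⊆ S ∧ ∀ b ∈ e, ∀ a ∈ S, a < b → a ∉ e → insert a (e.erase b) ∈ H

lemma lovasz_step : ∀ (k m : ℕ) (S : Finset β) (H : Finset (Finset β)),
    H.card = m → (∀ e ∈ H, e.card = k) → LC S H →
    ∀ x : ℝ, 1 ≤ k → (k : ℝ) ≤ x → genChoose x k ≤ (m : ℝ) →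
    genChoose x (k - 1) ≤ ((∂ H).card : ℝ) := by
  intro k
  induction k using Nat.strong_induction_on with
  | _ k ihk =>
  intro m
  induction m using Nat.strong_induction_on with
  | _ m ihm =>
  intro S H hHm hsz hLC x hk1 hkx hxm
  have hm1 : 1 ≤ m := by
    have := (gc_one_le hkx).trans hxm
    exact_mod_cast this
  have hHne : H.Nonempty := by
    rw [← Finset.card_pos, hHm]; omega
  obtain _ | k := k
  · omega
  obtain _ | K := k
  · -- k = 1
    simp only [Nat.sub_self, gc_zero]
    obtain ⟨e₀, he₀⟩ := hHne
    have hc : e₀.card = 1 := hsz e₀ he₀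
    obtain ⟨u, hu⟩ := Finset.card_pos.1 (by omega : 0 < e₀.card)
    have : e₀.erase u ∈ ∂ H := Finset.erase_mem_shadow he₀ hu
    have : 0 < (∂ H).card := Finset.card_pos.2 ⟨_, this⟩
    exact_mod_cast this
  -- k = K + 2
  have hk' : K + 2 - 1 = K + 1 := rfl
  rw [hk', ← hk'] at *
  clear hk'
  set A : Finset β := H.sup id with hA
  have hAne : A.Nonempty := by
    obtain ⟨e₀, he₀⟩ := hHne
    have hc : e₀.card = K + 2 := hsz e₀ he₀
    obtain ⟨u, hu⟩ := Finset.card_pos.1 (by omega : 0 < e₀.card)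
    exact ⟨u, Finset.mem_sup.2 ⟨e₀, he₀, hu⟩⟩
  set p : β := A.min' hAne with hp
  obtain ⟨ep, hep, hpep⟩ : ∃ e ∈ H, p ∈ e := Finset.mem_sup.1 (A.min'_mem hAne)
  have hple : ∀ e ∈ H, ∀ u ∈ e, p ≤ u := fun e he u hu =>
    Finset.min'_le _ _ (Finset.mem_sup.2 ⟨e, he, hu⟩)
  have hpS : p ∈ S := (hLC ep hep).1 hpep
  set Hc : Finset (Finset β) := H.filter (fun e => p ∈ e) with hHc
  set H₀ : Finset (Finset β) := H.filter (fun e => p ∉ e) with hH₀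
  set H₁ : Finset (Finset β) := Hc.image (fun e => e.erase p) with hH₁
  have hsplit : Hc.card + H₀.card = m := by
    rw [hHc, hH₀, Finset.card_filter_add_card_filter_not, hHm]
  have hH₁card : H₁.card = Hc.card := by
    rw [hH₁]
    apply Finset.card_image_of_injOn
    intro e he f hf hef
    have hpe : p ∈ e := (Finset.mem_filter.1 he).2
    have hpf : p ∈ f := (Finset.mem_filter.1 hf).2
    rw [← Finset.insert_erase hpe, ← Finset.insert_erase hpf]
    exact congrArg (insert p) hef
  have mem_H₁ : ∀ f : Finset β, f ∈ H₁ ↔ p ∉ f ∧ insert p f ∈ H := by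
    intro f
    constructor
    · rw [hH₁, Finset.mem_image]
      rintro ⟨e, he, rfl⟩
      have hpe : p ∈ e := (Finset.mem_filter.1 he).2
      refine ⟨Finset.notMem_erase _ _, ?_⟩
      rw [Finset.insert_erase hpe]
      exact (Finset.mem_filter.1 he).1
    · rintro ⟨hpf, hf⟩
      rw [hH₁, Finset.mem_image]
      exact ⟨insert p f, Finset.mem_filter.2 ⟨hf, Finset.mem_insert_self _ _⟩,
        Finset.erase_insert hpf⟩
  have hH₁sz : ∀ f ∈ H₁, f.card = K + 1 := by
    intro f hf
    obtain ⟨hpf, hspf⟩ := (mem_H₁ f).1 hf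
    have := hsz _ hspf
    rw [Finset.card_insert_of_notMem hpf] at this
    omega
  have hH₁LC : LC (S.erase p) H₁ := by
    intro f hf
    obtain ⟨hpf, hspf⟩ := (mem_H₁ f).1 hf
    constructor
    · intro c hcf
      exact Finset.mem_erase.2 ⟨fun h => hpf (h ▸ hcf), (hLC _ hspf).1 (Finset.mem_insert_of_mem hcf)⟩
    · intro b hbf a haS hab haf
      have haS' : a ∈ S := Finset.mem_of_mem_erase haS
      have hanep : a ≠ p := Finset.ne_of_mem_erase haS
      have hbnep : b ≠ p := fun h => hpf (h ▸ hbf)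
      have hbe : b ∈ insert p f := Finset.mem_insert_of_mem hbf
      have hanotin : a ∉ insert p f := by
        simp only [Finset.mem_insert]
        push_neg
        exact ⟨hanep, haf⟩
      have hg : insert a ((insert p f).erase b) ∈ H := (hLC _ hspf).2 b hbe a haS' hab hanotin
      have hpg : p ∈ insert a ((insert p f).erase b) :=
        Finset.mem_insert_of_mem (Finset.mem_erase.2 ⟨(Ne.symm hbnep), Finset.mem_insert_self _ _⟩)
      rw [mem_H₁]
      constructor
      · simp only [Finset.mem_insert, Finset.mem_erase]
        push_neg
        exact ⟨Ne.symm hanep, fun _ => hpf⟩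
      · have heq : insert p (insert a (f.erase b)) = insert a ((insert p f).erase b) := by
          ext c
          simp only [Finset.mem_insert, Finset.mem_erase]
          constructor
          · rintro (rfl | ha | ⟨hcb, hcf⟩)
            · exact Or.inr ⟨Ne.symm hbnep, Or.inl rfl⟩
            · exact Or.inl ha
            · exact Or.inr ⟨hcb, Or.inr hcf⟩
          · rintro (rfl | ⟨hcb, (rfl | hcf)⟩)
            · exact Or.inr (Or.inl rfl)
            · exact Or.inl rfl
            · exact Or.inr (Or.inr ⟨hcb, hcf⟩)
        rw [heq]
        exact hg
  have hH₀sz : ∀ e ∈ H₀, e.card = K + 2 := fun e he => hsz e (Finset.mem_filter.1 he).1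
  have hH₀LC : LC (S.erase p) H₀ := by
    intro e he
    obtain ⟨heH, hpe⟩ := Finset.mem_filter.1 he
    constructor
    · intro c hce
      exact Finset.mem_erase.2 ⟨fun h => hpe (h ▸ hce), (hLC _ heH).1 hce⟩
    · intro b hbe a haS hab haf
      have haS' : a ∈ S := Finset.mem_of_mem_erase haS
      have hanep : a ≠ p := Finset.ne_of_mem_erase haS
      have := (hLC _ heH).2 b hbe a haS' hab haf
      rw [hH₀, Finset.mem_filter]
      refine ⟨this, ?_⟩
      simp only [Finset.mem_insert, Finset.mem_erase]
      push_neg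
      exact ⟨Ne.symm hanep, fun _ => hpe⟩
  have F2 : ∂ H₀ ⊆ H₁ := by
    intro t ht
    rw [Finset.mem_shadow_iff] at ht
    obtain ⟨e, he, u, hu, rfl⟩ := ht
    obtain ⟨heH, hpe⟩ := Finset.mem_filter.1 he
    have hpu : p < u := lt_of_le_of_ne (hple e heH u hu) (fun h => hpe (h ▸ hu))
    have := (hLC e heH).2 u hu p hpS hpu hpe
    rw [mem_H₁]
    exact ⟨fun h => hpe (Finset.mem_of_mem_erase h), this⟩
  have F1 : H₁.card + (∂ H₁).card ≤ (∂ H).card := by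
    have sub1 : H₁ ⊆ ∂ H := by
      intro f hf
      obtain ⟨hpf, hspf⟩ := (mem_H₁ f).1 hf
      have : (insert p f).erase p ∈ ∂ H := Finset.erase_mem_shadow hspf (Finset.mem_insert_self _ _)
      rwa [Finset.erase_insert hpf] at this
    have hg_p : ∀ g ∈ ∂ H₁, p ∉ g := by
      intro g hg
      rw [Finset.mem_shadow_iff] at hg
      obtain ⟨f, hf, u, hu, rfl⟩ := hg
      exact fun h => ((mem_H₁ f).1 hf).1 (Finset.mem_of_mem_erase h)
    have sub2 : (∂ H₁).image (insert p) ⊆ ∂ H := by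
      intro t ht
      rw [Finset.mem_image] at ht
      obtain ⟨g, hg, rfl⟩ := ht
      rw [Finset.mem_shadow_iff] at hg
      obtain ⟨f, hf, u, hu, rfl⟩ := hg
      obtain ⟨hpf, hspf⟩ := (mem_H₁ f).1 hf
      have hune : u ≠ p := fun h => hpf (h ▸ hu)
      have heq : insert p (f.erase u) = (insert p f).erase u := by
        ext c
        simp only [Finset.mem_insert, Finset.mem_erase]
        constructor
        · rintro (rfl | ⟨hcu, hcf⟩)
          · exact ⟨Ne.symm hune, Or.inl rfl⟩
          · exact ⟨hcu, Or.inr hcf⟩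
        · rintro ⟨hcu, (rfl | hcf)⟩
          · exact Or.inl rfl
          · exact Or.inr ⟨hcu, hcf⟩
      rw [heq]
      exact Finset.erase_mem_shadow hspf (Finset.mem_insert_of_mem hu)
    have hdisj : Disjoint H₁ ((∂ H₁).image (insert p)) := by
      rw [Finset.disjoint_left]
      intro f hf hf'
      rw [Finset.mem_image] at hf'
      obtain ⟨g, _, rfl⟩ := hf'
      exact ((mem_H₁ _).1 hf).1 (Finset.mem_insert_self _ _)
    have himcard : ((∂ H₁).image (insert p)).card = (∂ H₁).card := by
      apply Finset.card_image_of_injOn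
      intro g hg g' hg' hgg'
      have h1 := hg_p g hg
      have h2 := hg_p g' hg'
      rw [← Finset.erase_insert h1, ← Finset.erase_insert h2, hgg']
    calc H₁.card + (∂ H₁).card = (H₁ ∪ (∂ H₁).image (insert p)).card := by
          rw [Finset.card_union_of_disjoint hdisj, himcard]
      _ ≤ (∂ H).card := Finset.card_le_card (Finset.union_subset sub1 sub2)
  -- Now the numeric part
  have hHcpos : 1 ≤ Hc.card := Finset.card_pos.2 ⟨ep, Finset.mem_filter.2 ⟨hep, hpep⟩⟩
  have hxK : ((K : ℝ) + 2) ≤ x := by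
    have : ((K + 2 : ℕ) : ℝ) ≤ x := hkx
    push_cast at this
    exact this
  have hlink : genChoose (x - 1) (K + 1) ≤ (H₁.card : ℝ) := by
    by_contra hlt
    push_neg at hlt
    rcases le_or_gt ((K : ℝ) + 2) (x - 1) with hx1 | hx1
    · -- x - 1 ≥ K + 2
      have hx1' : ((K + 2 : ℕ) : ℝ) ≤ x - 1 := by push_cast; exact hx1
      have hH₀lt : (H₀.card : ℝ) < genChoose (x - 1) (K + 2) := by
        by_contra hge
        push_neg at hge
        have hH₀m : H₀.card < m := by omega
        have happ := ihm H₀.card hH₀m (S.erase p) H₀ rfl hH₀sz hH₀LC (x - 1)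
          (by omega) hx1' hge
        have hsub : (∂ H₀).card ≤ H₁.card := Finset.card_le_card F2
        have : genChoose (x - 1) (K + 2 - 1) ≤ (H₁.card : ℝ) :=
          happ.trans (by exact_mod_cast hsub)
        rw [(by rfl : K + 2 - 1 = K + 1)] at this
        linarith
      have hsum : (m : ℝ) = (H₀.card : ℝ) + (H₁.card : ℝ) := by
        rw [hH₁card]
        exact_mod_cast (by omega : m = H₀.card + Hc.card)
      have hps := gc_pascal x (K + 1)
      linarith
    · -- x < K + 3
      have hb : genChoose (x - 1) (K + 1) ≤ ((K : ℝ) + 2) := by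
        have h1 : genChoose (x - 1) (K + 1) ≤ genChoose (((K + 2 : ℕ) : ℝ)) (K + 1) := by
          apply gc_mono _ (by push_cast; linarith)
          push_cast
          linarith
        have h2 : genChoose (((K + 2 : ℕ) : ℝ)) (K + 1) = (((K + 2).choose (K + 1) : ℕ) : ℝ) :=
          gc_nat (by omega)
        have h3 : (K + 2).choose (K + 1) = K + 2 := by
          have := Nat.choose_symm (show 1 ≤ K + 2 by omega)
          simpa using this
        rw [h2, h3] at h1
        push_cast at h1
        linarith
      rcases H₀.eq_empty_or_nonempty with h0e | h0ne
      · have hmH₁ : m = H₁.card := by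
          rw [hH₁card]
          have : H₀.card = 0 := by rw [h0e]; exact Finset.card_empty
          omega
        have h2 : genChoose x (K + 2) ≤ (H₁.card : ℝ) := by rw [← hmH₁]; exact hxm
        have h3 : genChoose (x - 1) (K + 1) ≤ genChoose x (K + 2) := by
          have hsh := gc_shift x (K + 1)
          have hnn : 0 ≤ genChoose (x - 1) (K + 1) := by
            apply gc_nonneg
            push_cast
            linarith
          have hfrac : 1 ≤ x / ((K : ℝ) + 1 + 1) := by
            rw [le_div_iff₀ (by positivity)]
            linarith
          have hmul := mul_le_mul_of_nonneg_right hfrac hnn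
          rw [show K + 2 = K + 1 + 1 from rfl, hsh]
          push_cast at hmul ⊢
          linarith
        linarith
      · obtain ⟨e, he0⟩ := h0ne
        have hsubim : e.image (fun u => e.erase u) ⊆ H₁ := by
          intro t ht
          rw [Finset.mem_image] at ht
          obtain ⟨u, hu, rfl⟩ := ht
          exact F2 (Finset.erase_mem_shadow he0 hu)
        have hcard_im : (e.image (fun u => e.erase u)).card = K + 2 := by
          rw [Finset.card_image_of_injOn, hH₀sz e he0]
          intro u hu v hv huv
          by_contra hne
          have huv' : e.erase u = e.erase v := huv
          have : u ∈ e.erase v := Finset.mem_erase.2 ⟨hne, hu⟩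
          rw [← huv'] at this
          exact (Finset.notMem_erase u e) this
        have : K + 2 ≤ H₁.card := hcard_im ▸ Finset.card_le_card hsubim
        have : ((K : ℝ) + 2) ≤ (H₁.card : ℝ) := by exact_mod_cast this
        linarith
  -- conclude
  have hx1'' : ((K + 1 : ℕ) : ℝ) ≤ x - 1 := by push_cast; linarith
  have happ1 := ihk (K + 1) (by omega) H₁.card (S.erase p) H₁ rfl hH₁sz hH₁LC (x - 1)
    (by omega) hx1'' hlink
  rw [(by rfl : K + 1 - 1 = K)] at happ1
  have hF1 : ((H₁.card : ℝ) + ((∂ H₁).card : ℝ)) ≤ ((∂ H).card : ℝ) := by exact_mod_cast F1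
  have hps := gc_pascal x K
  linarith

end Step

section Main
open Finset
open scoped FinsetFamily

variable {n : ℕ}

lemma initSeg_LC {𝒞 : Finset (Finset (Fin n))} {k : ℕ} (h : Finset.Colex.IsInitSeg 𝒞 k) :
    LC Finset.univ 𝒞 := by
  intro e he
  refine ⟨Finset.subset_univ _, ?_⟩
  intro b hbe a _ hab hae
  apply h.2 he
  constructor
  · rw [Finset.Colex.toColex_lt_toColex_iff_exists_forall_lt]
    refine ⟨b, hbe, ?_, ?_⟩
    · simp only [Finset.mem_insert, Finset.mem_erase]
      push_neg
      exact ⟨hab.ne', fun hh => absurd rfl hh⟩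
    · intro c hc hce
      rcases Finset.mem_insert.1 hc with rfl | hc'
      · exact hab
      · exact absurd (Finset.mem_of_mem_erase hc') hce
  · rw [Finset.card_insert_of_notMem (fun hh => hae (Finset.mem_of_mem_erase hh)),
      Finset.card_erase_add_one hbe]
    exact h.1 he

lemma initSeg_step {𝒞 : Finset (Finset (Fin n))} {k : ℕ} {x : ℝ}
    (h : Finset.Colex.IsInitSeg 𝒞 k) (hk : 1 ≤ k) (hx : (k : ℝ) ≤ x)
    (hc : genChoose x k ≤ (𝒞.card : ℝ)) : genChoose x (k - 1) ≤ ((∂ 𝒞).card : ℝ) :=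
  lovasz_step k 𝒞.card Finset.univ 𝒞 rfl (fun e he => h.1 he) (initSeg_LC h) x hk hx hc

lemma initSeg_iterate {𝒞 : Finset (Finset (Fin n))} {k : ℕ} {x : ℝ}
    (h : Finset.Colex.IsInitSeg 𝒞 k) (hx : (k : ℝ) ≤ x)
    (hc : genChoose x k ≤ (𝒞.card : ℝ)) :
    ∀ t : ℕ, t ≤ k → genChoose x (k - t) ≤ (((Finset.shadow)^[t] 𝒞).card : ℝ) := by
  intro t
  induction t with
  | zero => simpa using hc
  | succ t ih =>
    intro ht
    have ht' : t ≤ k := by omega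
    have hIS : Finset.Colex.IsInitSeg ((Finset.shadow)^[t] 𝒞) (k - t) := by
      clear ih ht
      induction t with
      | zero => simpa using h
      | succ t ih2 =>
        have ht'' : t ≤ k := by omega
        rw [Function.iterate_succ_apply']
        have := (ih2 (by omega)).shadow
        rwa [(by omega : k - t - 1 = k - (t + 1))] at this
    have hstep := initSeg_step hIS (by omega)
      (le_trans (by exact_mod_cast Nat.cast_le.2 (Nat.sub_le k t)) hx) (ih ht')
    rw [Function.iterate_succ_apply']
    rwa [(by omega : k - t - 1 = k - (t + 1))] at hstep

lemma main_fin {𝒜 : Finset (Finset (Fin n))} {k i : ℕ} {x : ℝ}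
    (hsz : ∀ e ∈ 𝒜, e.card = k) (hik : i ≤ k) (hx : (k : ℝ) ≤ x)
    (hc : genChoose x k ≤ (𝒜.card : ℝ)) :
    genChoose x i ≤ (((Finset.shadow)^[k - i] 𝒜).card : ℝ) := by
  have hsub : 𝒜 ⊆ Finset.powersetCard k Finset.univ := by
    intro e he
    exact Finset.mem_powersetCard.2 ⟨Finset.subset_univ _, hsz e he⟩
  obtain ⟨𝒞, hIS, hcard⟩ := exists_initSeg k 𝒜.card (Finset.card_le_card hsub)
  have hkk := Finset.iterated_kk (k := k - i) (fun e he => hsz e he) (le_of_eq hcard) hIS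
  have hit := initSeg_iterate hIS hx (by rw [hcard]; exact hc) (k - i) (by omega)
  rw [(by omega : k - (k - i) = i)] at hit
  exact hit.trans (by exact_mod_cast hkk)

end Main

/-- Lovász's version of the Kruskal–Katona theorem. -/
theorem stmt2 {α : Type*} [Fintype α] [DecidableEq α] (k i : ℕ) (x : ℝ)
    (H : Finset (Finset α)) (hunif : ∀ s ∈ H, s.card = k)
    (hik : i ≤ k) (hx : (k : ℝ) ≤ x)
    (hcard : (H.card : ℝ) = genChoose x k) :
    genChoose x i ≤ (({s : Finset α | s.card = i ∧ ∃ t ∈ H, s ⊆ t}).ncard : ℝ) := by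
  classical
  set n := Fintype.card α
  set e : α ≃ Fin n := Fintype.equivFin α with he
  set H' : Finset (Finset (Fin n)) := H.image (Finset.image e) with hH'
  have hH'sz : ∀ s ∈ H', s.card = k := by
    intro s hs
    rw [hH', Finset.mem_image] at hs
    obtain ⟨t, ht, rfl⟩ := hs
    rw [Finset.card_image_of_injective _ e.injective]
    exact hunif t ht
  have hH'card : H'.card = H.card := by
    rw [hH']
    apply Finset.card_image_of_injective
    exact Finset.image_injective e.injective
  have hmain := main_fin hH'sz hik hx (by rw [hH'card, ← hcard])
  set F : Finset (Finset α) := Finset.univ.filter (fun s => s.card = i ∧ ∃ t ∈ H, s ⊆ t) with hF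
  have hTF : {s : Finset α | s.card = i ∧ ∃ t ∈ H, s ⊆ t} = ↑F := by
    rw [hF]
    ext s
    simp
  rw [hTF, Set.ncard_coe_finset]
  -- injection from the iterated shadow of H' into F
  have hinj : ((Finset.shadow)^[k - i] H').card ≤ F.card := by
    have hsubF : ((Finset.shadow)^[k - i] H').image (Finset.image e.symm) ⊆ F := by
      intro s hs
      rw [Finset.mem_image] at hs
      obtain ⟨g, hg, rfl⟩ := hs
      rw [Finset.mem_shadow_iterate_iff_exists_sdiff] at hg
      obtain ⟨t', ht', hsub, hdiff⟩ := hg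
      rw [hH', Finset.mem_image] at ht'
      obtain ⟨t, ht, rfl⟩ := ht'
      have hcardg : g.card = i := by
        have h1 : (Finset.image e t).card = k := by
          rw [Finset.card_image_of_injective _ e.injective]; exact hunif t ht
        have h2 : g.card + (Finset.image e t \ g).card = k := by
          rw [← Finset.card_sdiff_add_card_eq_card hsub] at h1
          omega
        omega
      rw [hF, Finset.mem_filter]
      refine ⟨Finset.mem_univ _, ?_, t, ht, ?_⟩
      · rw [Finset.card_image_of_injective _ e.symm.injective]
        exact hcardg
      · intro a ha
        rw [Finset.mem_image] at ha
        obtain ⟨b, hb, rfl⟩ := ha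
        have := hsub hb
        rw [Finset.mem_image] at this
        obtain ⟨c, hc, rfl⟩ := this
        simpa using hc
    calc ((Finset.shadow)^[k - i] H').card
        = (((Finset.shadow)^[k - i] H').image (Finset.image e.symm)).card := by
          rw [Finset.card_image_of_injective _ (Finset.image_injective e.symm.injective)]
      _ ≤ F.card := Finset.card_le_card hsubF
  refine hmain.trans ?_
  exact_mod_cast hinj
end

section
/- If G is an n-vertex K_{2,t}-free graph (t ≥ 3), then the number of copies of the 4-cycle C_4 in G is at most (1/4)·C(t-1,2)·n^2. -/
open SimpleGraph Finset

lemma codeg_bound {n t : ℕ} (ht : 1 ≤ t) {G : SimpleGraph (Fin n)}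
    (hG : FreeOf (completeBipartiteGraph (Fin 2) (Fin t)) G) {u v : Fin n} (huv : u ≠ v)
    (W : Finset (Fin n)) (hW : ∀ x ∈ W, G.Adj u x ∧ G.Adj v x) :
    W.card ≤ t - 1 := by
  classical
  by_contra hlt
  push_neg at hlt
  have hcard : t ≤ W.card := by omega
  obtain ⟨S, hSsub, hScard⟩ := Finset.exists_subset_card_eq hcard
  have hScn : ∀ x ∈ S, G.Adj u x ∧ G.Adj v x := fun x hx => hW x (hSsub hx)
  have hu : u ∉ S := fun h => G.irrefl (hScn u h).1
  have hv : v ∉ S := fun h => G.irrefl (hScn v h).2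
  set H : G.Subgraph :=
    { verts := {u, v} ∪ ↑S
      Adj := fun x y => ((x = u ∨ x = v) ∧ y ∈ S) ∨ ((y = u ∨ y = v) ∧ x ∈ S)
      adj_sub := by
        rintro x y (⟨rfl | rfl, hy⟩ | ⟨rfl | rfl, hx⟩)
        · exact (hScn y hy).1
        · exact (hScn y hy).2
        · exact (hScn x hx).1.symm
        · exact (hScn x hx).2.symm
      edge_vert := by
        rintro x y (⟨rfl | rfl, hy⟩ | ⟨hy, hx⟩)
        · exact Or.inl (Or.inl rfl)
        · exact Or.inl (Or.inr rfl)
        · exact Or.inr (by simpa using hx)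
      symm := by
        refine ⟨fun x y h => ?_⟩
        tauto } with hH
  have hvertsu : u ∈ H.verts := Or.inl (Or.inl rfl)
  have hvertsv : v ∈ H.verts := Or.inl (Or.inr rfl)
  have hHadj : ∀ x y, H.Adj x y ↔ (((x = u ∨ x = v) ∧ y ∈ S) ∨ ((y = u ∨ y = v) ∧ x ∈ S)) :=
    fun x y => Iff.rfl
  set eS : Fin t ≃ ↥S := (Finset.equivFinOfCardEq hScard).symm with heS
  have hfvalS : ∀ j : Fin t, ((eS j : Fin n)) ∈ S := fun j => (eS j).2
  set f : Fin 2 ⊕ Fin t → ↥H.verts :=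
    Sum.elim ![⟨u, hvertsu⟩, ⟨v, hvertsv⟩] (fun j => ⟨(eS j : Fin n), Or.inr (eS j).2⟩) with hfdef
  have hf0 : (f (Sum.inl 0) : Fin n) = u := rfl
  have hf1 : (f (Sum.inl 1) : Fin n) = v := rfl
  have hfr : ∀ j, (f (Sum.inr j) : Fin n) = (eS j : Fin n) := fun _ => rfl
  have hfl : ∀ i : Fin 2, (f (Sum.inl i) : Fin n) = u ∨ (f (Sum.inl i) : Fin n) = v := by
    intro i
    fin_cases i
    · exact Or.inl rfl
    · exact Or.inr rfl
  have hflS : ∀ i : Fin 2, (f (Sum.inl i) : Fin n) ∉ S := by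
    intro i
    rcases hfl i with h | h <;> rw [h] <;> assumption
  have hbij : Function.Bijective f := by
    constructor
    · rintro (i | j) (i' | j') hxy
      · congr 1
        fin_cases i <;> fin_cases i' <;> first
          | rfl
          | exact absurd (congrArg Subtype.val hxy) huv
          | exact absurd (congrArg Subtype.val hxy) huv.symm
      · exfalso
        have hval := congrArg Subtype.val hxy
        rw [hfr] at hval
        exact hflS i (hval ▸ hfvalS j')
      · exfalso
        have hval := congrArg Subtype.val hxy
        rw [hfr] at hval
        exact hflS i' (hval.symm ▸ hfvalS j)
      · have hval := congrArg Subtype.val hxy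
        rw [hfr, hfr] at hval
        exact congrArg Sum.inr (eS.injective (Subtype.ext hval))
    · rintro ⟨x, hx⟩
      rcases hx with (rfl | rfl) | hx
      · exact ⟨Sum.inl 0, rfl⟩
      · exact ⟨Sum.inl 1, rfl⟩
      · refine ⟨Sum.inr (eS.symm ⟨x, by simpa using hx⟩), Subtype.ext ?_⟩
        rw [hfr]
        simp
  have hadj : ∀ a b : Fin 2 ⊕ Fin t,
      H.coe.Adj (f a) (f b) ↔ (completeBipartiteGraph (Fin 2) (Fin t)).Adj a b := by
    rintro (i | j) (i' | j')
    · refine iff_of_false ?_ (by simp)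
      intro hadj
      rw [Subgraph.coe_adj, hHadj] at hadj
      rcases hadj with ⟨_, hmem⟩ | ⟨_, hmem⟩
      · exact hflS i' hmem
      · exact hflS i hmem
    · refine iff_of_true ?_ (by simp)
      rw [Subgraph.coe_adj, hHadj]
      exact Or.inl ⟨hfl i, hfr j' ▸ hfvalS j'⟩
    · refine iff_of_true ?_ (by simp)
      rw [Subgraph.coe_adj, hHadj]
      exact Or.inr ⟨hfl i', hfr j ▸ hfvalS j⟩
    · refine iff_of_false ?_ (by simp)
      intro hadj
      rw [Subgraph.coe_adj, hHadj] at hadj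
      rcases hadj with ⟨h1 | h1, _⟩ | ⟨h1 | h1, _⟩
      · exact hu (h1 ▸ (hfr j ▸ hfvalS j))
      · exact hv (h1 ▸ (hfr j ▸ hfvalS j))
      · exact hu (h1 ▸ (hfr j' ▸ hfvalS j'))
      · exact hv (h1 ▸ (hfr j' ▸ hfvalS j'))
  exact hG H ⟨⟨Equiv.ofBijective f hbij, fun {a b} => hadj a b⟩⟩

lemma c4_structure {n : ℕ} {G : SimpleGraph (Fin n)} {G' : G.Subgraph}
    (h : IsCopyOf (cycleGraph 4) G') :
    ∃ p q : Finset (Fin n), p.card = 2 ∧ q.card = 2 ∧ Disjoint p q ∧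
      ↑(p ∪ q) = G'.verts ∧
      (∀ x y, G'.Adj x y ↔ ((x ∈ p ∧ y ∈ q) ∨ (x ∈ q ∧ y ∈ p))) := by
  classical
  obtain ⟨e⟩ := h
  set f : Fin 4 → Fin n := fun i => (e i : Fin n) with hf
  have hinj : Function.Injective f := fun i j hij => e.toEquiv.injective (Subtype.ext hij)
  have hmem : ∀ i, f i ∈ G'.verts := fun i => (e i).2
  have hsurj : ∀ x ∈ G'.verts, ∃ i, f i = x := by
    intro x hx
    exact ⟨e.symm ⟨x, hx⟩, congrArg Subtype.val (e.apply_symm_apply ⟨x, hx⟩)⟩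
  have hAdjf : ∀ i j : Fin 4, G'.Adj (f i) (f j) ↔ (cycleGraph 4).Adj i j := by
    intro i j
    constructor
    · intro hij
      exact e.map_rel_iff.mp (by exact hij)
    · intro hij
      exact e.map_rel_iff.mpr hij
  refine ⟨{f 0, f 2}, {f 1, f 3}, ?_, ?_, ?_, ?_, ?_⟩
  · rw [Finset.card_pair (fun h => by simpa using hinj h)]
  · rw [Finset.card_pair (fun h => by simpa using hinj h)]
  · simp only [Finset.disjoint_left, Finset.mem_insert, Finset.mem_singleton]
    rintro a (rfl | rfl) (h | h) <;> simpa using hinj h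
  · ext x
    simp only [Finset.coe_union, Finset.coe_insert, Finset.coe_singleton, Set.mem_union,
      Set.mem_insert_iff, Set.mem_singleton_iff]
    constructor
    · rintro ((rfl | rfl) | (rfl | rfl)) <;> exact hmem _
    · intro hx
      obtain ⟨i, rfl⟩ := hsurj x hx
      have : i = 0 ∨ i = 1 ∨ i = 2 ∨ i = 3 := by omega
      rcases this with rfl | rfl | rfl | rfl <;> tauto
  · intro x y
    simp only [Finset.mem_insert, Finset.mem_singleton]
    constructor
    · intro hxy
      obtain ⟨i, rfl⟩ := hsurj x hxy.fst_mem
      obtain ⟨j, rfl⟩ := hsurj y hxy.snd_mem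
      have hc : (cycleGraph 4).Adj i j := (hAdjf i j).mp hxy
      have key : ∀ i j : Fin 4, (cycleGraph 4).Adj i j →
          ((i = 0 ∨ i = 2) ∧ (j = 1 ∨ j = 3)) ∨ ((i = 1 ∨ i = 3) ∧ (j = 0 ∨ j = 2)) := by
        decide
      rcases key i j hc with ⟨hi | hi, hj | hj⟩ | ⟨hi | hi, hj | hj⟩ <;>
        subst hi <;> subst hj <;> tauto
    · have h01 : (cycleGraph 4).Adj 0 1 := by decide
      have h03 : (cycleGraph 4).Adj 0 3 := by decide
      have h21 : (cycleGraph 4).Adj 2 1 := by decide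
      have h23 : (cycleGraph 4).Adj 2 3 := by decide
      rintro (⟨rfl | rfl, rfl | rfl⟩ | ⟨rfl | rfl, rfl | rfl⟩)
      · exact (hAdjf _ _).mpr h01
      · exact (hAdjf _ _).mpr h03
      · exact (hAdjf _ _).mpr h21
      · exact (hAdjf _ _).mpr h23
      · exact ((hAdjf _ _).mpr h01).symm
      · exact ((hAdjf _ _).mpr h21).symm
      · exact ((hAdjf _ _).mpr h03).symm
      · exact ((hAdjf _ _).mpr h23).symm

theorem stmt3 (n t : ℕ) (ht : 3 ≤ t) (G : SimpleGraph (Fin n))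
    (hG : FreeOf (completeBipartiteGraph (Fin 2) (Fin t)) G) :
    (numCopies (cycleGraph 4) G : ℝ) ≤ (1 / 4) * ((t - 1).choose 2 : ℝ) * (n : ℝ) ^ 2 := by
  classical
  set S : Set G.Subgraph := {G' | IsCopyOf (cycleGraph 4) G'} with hSdef
  set cn : Finset (Fin n) → Finset (Fin n) :=
    fun p => univ.filter (fun x => ∀ u ∈ p, G.Adj u x) with hcn
  set T : Finset (Finset (Fin n) × Finset (Fin n)) :=
    (Finset.powersetCard 2 (univ : Finset (Fin n))).biUnion
      (fun p => ((cn p).powersetCard 2).image (fun q => (p, q))) with hTdef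
  -- bound on |T|
  have hTcard : T.card ≤ n.choose 2 * (t - 1).choose 2 := by
    refine le_trans (Finset.card_biUnion_le) ?_
    have hterm : ∀ p ∈ Finset.powersetCard 2 (univ : Finset (Fin n)),
        (((cn p).powersetCard 2).image (fun q => (p, q))).card ≤ (t - 1).choose 2 := by
      intro p hp
      refine le_trans Finset.card_image_le ?_
      rw [Finset.card_powersetCard]
      have hp2 : p.card = 2 := (Finset.mem_powersetCard.mp hp).2
      obtain ⟨u, v, huv, rfl⟩ := Finset.card_eq_two.mp hp2
      have hbound : (cn {u, v}).card ≤ t - 1 := by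
        refine codeg_bound (by omega) hG huv _ ?_
        intro x hx
        simp only [hcn, Finset.mem_filter, Finset.mem_insert, Finset.mem_singleton] at hx
        exact ⟨hx.2 u (by simp), hx.2 v (by simp)⟩
      exact Nat.choose_le_choose 2 hbound
    calc ∑ p ∈ Finset.powersetCard 2 (univ : Finset (Fin n)),
          (((cn p).powersetCard 2).image (fun q => (p, q))).card
        ≤ ∑ p ∈ Finset.powersetCard 2 (univ : Finset (Fin n)), (t - 1).choose 2 :=
          Finset.sum_le_sum hterm
      _ = n.choose 2 * (t - 1).choose 2 := by
          rw [Finset.sum_const, smul_eq_mul, Finset.card_powersetCard, Finset.card_univ,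
            Fintype.card_fin]
  -- canonical maps
  set V' : G.Subgraph → Finset (Fin n) := fun G' => univ.filter (· ∈ G'.verts) with hV'def
  set P : G.Subgraph → Finset (Fin n) :=
    fun G' => (V' G').filter (fun x => ∀ y : Fin n, (V' G').min = ↑y → ¬ G'.Adj y x) with hPdef
  set Q : G.Subgraph → Finset (Fin n) :=
    fun G' => (V' G').filter (fun x => ∃ y : Fin n, (V' G').min = ↑y ∧ G'.Adj y x) with hQdef
  -- main structural facts
  have main : ∀ G' ∈ S, (P G').card = 2 ∧ (Q G').card = 2 ∧ Disjoint (P G') (Q G') ∧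
      ↑(P G' ∪ Q G') = G'.verts ∧
      (∀ x y, G'.Adj x y ↔ ((x ∈ P G' ∧ y ∈ Q G') ∨ (x ∈ Q G' ∧ y ∈ P G'))) ∧
      (∃ m : Fin n, m ∈ P G' ∧ (P G' ∪ Q G').min = ↑m) := by
    intro G' hG'
    obtain ⟨p, q, hp2, hq2, hdisj, hverts, hadj⟩ := c4_structure hG'
    have hVpq : V' G' = p ∪ q := by
      ext x
      simp only [hV'def, Finset.mem_filter, Finset.mem_univ, true_and]
      rw [← hverts]
      simp
    have hne : (V' G').Nonempty := by
      rw [hVpq]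
      obtain ⟨x, hx⟩ := Finset.card_pos.mp (hp2 ▸ (by norm_num : (0:ℕ) < 2))
      exact ⟨x, Finset.mem_union_left _ hx⟩
    set m : Fin n := (V' G').min' hne with hmdef
    have hmin : (V' G').min = ↑m := (Finset.coe_min' hne).symm
    have hm0mem : m ∈ V' G' := Finset.min'_mem _ hne
    have hPalt : P G' = (V' G').filter (fun x => ¬ G'.Adj m x) := by
      ext x
      simp only [hPdef, Finset.mem_filter]
      constructor
      · rintro ⟨hx, h⟩
        exact ⟨hx, h m hmin⟩
      · rintro ⟨hx, h⟩
        refine ⟨hx, fun y hy => ?_⟩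
        rw [hmin] at hy
        rwa [← WithTop.coe_inj.mp hy]
    have hQalt : Q G' = (V' G').filter (fun x => G'.Adj m x) := by
      ext x
      simp only [hQdef, Finset.mem_filter]
      constructor
      · rintro ⟨hx, y, hy, hadjy⟩
        rw [hmin] at hy
        exact ⟨hx, (WithTop.coe_inj.mp hy) ▸ hadjy⟩
      · rintro ⟨hx, h⟩
        exact ⟨hx, m, hmin, h⟩
    have hPQV : P G' ∪ Q G' = V' G' := by
      rw [hPalt, hQalt, Finset.union_comm]
      exact Finset.filter_union_filter_not_eq _ _
    -- generic claim
    have sub : ∀ p' q' : Finset (Fin n), Disjoint p' q' → V' G' = p' ∪ q' →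
        (∀ x y, G'.Adj x y ↔ ((x ∈ p' ∧ y ∈ q') ∨ (x ∈ q' ∧ y ∈ p'))) → m ∈ p' →
        P G' = p' ∧ Q G' = q' := by
      intro p' q' hdisj' hVpq' hadj' hm0p
      have hm0q : m ∉ q' := Finset.disjoint_left.mp hdisj' hm0p
      have hQq : Q G' = q' := by
        rw [hQalt]
        ext x
        simp only [Finset.mem_filter]
        constructor
        · rintro ⟨-, hx⟩
          rcases (hadj' _ _).mp hx with ⟨_, h⟩ | ⟨h, _⟩
          · exact h
          · exact absurd h hm0q
        · intro hx
          refine ⟨by rw [hVpq']; exact Finset.mem_union_right _ hx, ?_⟩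
          exact (hadj' _ _).mpr (Or.inl ⟨hm0p, hx⟩)
      have hPp : P G' = p' := by
        rw [hPalt]
        ext x
        simp only [Finset.mem_filter]
        constructor
        · rintro ⟨hxV, hxP⟩
          rw [hVpq'] at hxV
          rcases Finset.mem_union.mp hxV with h | h
          · exact h
          · exact absurd ((hadj' _ _).mpr (Or.inl ⟨hm0p, h⟩)) hxP
        · intro hx
          refine ⟨by rw [hVpq']; exact Finset.mem_union_left _ hx, ?_⟩
          intro hadj0
          rcases (hadj' _ _).mp hadj0 with ⟨_, h⟩ | ⟨h, _⟩
          · exact Finset.disjoint_left.mp hdisj' hx h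
          · exact Finset.disjoint_left.mp hdisj' hm0p h
      exact ⟨hPp, hQq⟩
    have hm0pq : m ∈ p ∪ q := hVpq ▸ hm0mem
    have hPQeq : P G' = p ∧ Q G' = q ∨ P G' = q ∧ Q G' = p := by
      rcases Finset.mem_union.mp hm0pq with h | h
      · exact Or.inl (sub p q hdisj hVpq hadj h)
      · refine Or.inr (sub q p hdisj.symm (by rw [hVpq, Finset.union_comm]) ?_ h)
        intro x y
        rw [hadj x y]
        tauto
    have hminPQ : (P G' ∪ Q G').min = ↑m := by
      rw [hPQV, hmin]
    have hm0P : m ∈ P G' := by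
      rw [hPalt]
      refine Finset.mem_filter.mpr ⟨hm0mem, fun h => ?_⟩
      exact G.irrefl (G'.adj_sub h)
    rcases hPQeq with ⟨hP, hQ⟩ | ⟨hP, hQ⟩
    · refine ⟨hP ▸ hp2, hQ ▸ hq2, ?_, ?_, ?_, m, hm0P, hminPQ⟩
      · rw [hP, hQ]; exact hdisj
      · rw [hP, hQ, hverts]
      · intro x y
        rw [hP, hQ]
        exact hadj x y
    · refine ⟨hP ▸ hq2, hQ ▸ hp2, ?_, ?_, ?_, m, hm0P, hminPQ⟩
      · rw [hP, hQ]; exact hdisj.symm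
      · rw [hP, hQ, Finset.union_comm, hverts]
      · intro x y
        rw [hP, hQ, hadj x y]
        tauto
  -- membership in T
  have hmemT : ∀ G' ∈ S, (P G', Q G') ∈ T ∧ (Q G', P G') ∈ T := by
    intro G' hG'
    obtain ⟨hP2, hQ2, hdisj, hverts, hadj, -, -⟩ := main G' hG'
    have hcross : ∀ u ∈ P G', ∀ x ∈ Q G', G.Adj u x := by
      intro u hu x hx
      exact G'.adj_sub ((hadj u x).mpr (Or.inl ⟨hu, hx⟩))
    constructor
    · rw [hTdef]
      refine Finset.mem_biUnion.mpr ⟨P G', Finset.mem_powersetCard.mpr ⟨Finset.subset_univ _, hP2⟩,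
        Finset.mem_image.mpr ⟨Q G', ?_, rfl⟩⟩
      refine Finset.mem_powersetCard.mpr ⟨?_, hQ2⟩
      intro x hx
      simp only [hcn, Finset.mem_filter, Finset.mem_univ, true_and]
      exact fun u hu => hcross u hu x hx
    · rw [hTdef]
      refine Finset.mem_biUnion.mpr ⟨Q G', Finset.mem_powersetCard.mpr ⟨Finset.subset_univ _, hQ2⟩,
        Finset.mem_image.mpr ⟨P G', ?_, rfl⟩⟩
      refine Finset.mem_powersetCard.mpr ⟨?_, hP2⟩
      intro x hx
      simp only [hcn, Finset.mem_filter, Finset.mem_univ, true_and]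
      exact fun u hu => (hcross x hx u hu).symm
  -- injectivity
  have hdet : ∀ G1 ∈ S, ∀ G2 ∈ S, P G1 = P G2 → Q G1 = Q G2 → G1 = G2 := by
    intro G1 h1 G2 h2 hP hQ
    obtain ⟨-, -, -, hv1, ha1, -, -⟩ := main G1 h1
    obtain ⟨-, -, -, hv2, ha2, -, -⟩ := main G2 h2
    refine SimpleGraph.Subgraph.ext ?_ ?_
    · rw [← hv1, ← hv2, hP, hQ]
    · funext x y
      rw [eq_iff_iff, ha1, ha2, hP, hQ]
  set F1 : G.Subgraph → Finset (Fin n) × Finset (Fin n) := fun G' => (P G', Q G') with hF1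
  set F2 : G.Subgraph → Finset (Fin n) × Finset (Fin n) := fun G' => (Q G', P G') with hF2
  have hinj1 : Set.InjOn F1 S := by
    intro G1 h1 G2 h2 h
    exact hdet G1 h1 G2 h2 (congrArg Prod.fst h) (congrArg Prod.snd h)
  have hinj2 : Set.InjOn F2 S := by
    intro G1 h1 G2 h2 h
    exact hdet G1 h1 G2 h2 (congrArg Prod.snd h) (congrArg Prod.fst h)
  have hsub1 : F1 '' S ⊆ ↑T := by
    rintro z ⟨G', hG', rfl⟩
    exact (hmemT G' hG').1
  have hsub2 : F2 '' S ⊆ ↑T := by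
    rintro z ⟨G', hG', rfl⟩
    exact (hmemT G' hG').2
  have hdisjim : Disjoint (F1 '' S) (F2 '' S) := by
    rw [Set.disjoint_left]
    rintro z ⟨G1, h1, rfl⟩ ⟨G2, h2, heq⟩
    obtain ⟨-, -, hd1, -, -, m1, hm1, hmin1⟩ := main G1 h1
    obtain ⟨-, -, hd2, -, -, m2, hm2, hmin2⟩ := main G2 h2
    have hz1 : Q G2 = P G1 := congrArg Prod.fst heq
    have hz2 : P G2 = Q G1 := congrArg Prod.snd heq
    have hmin2' : (P G1 ∪ Q G1).min = ↑m2 := by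
      rw [← hz1, ← hz2, Finset.union_comm, hmin2]
    have hmm : m1 = m2 := by
      have := hmin1.symm.trans hmin2'
      exact_mod_cast this
    have : m2 ∈ Q G2 := by
      rw [hz1, ← hmm]
      exact hm1
    exact Finset.disjoint_left.mp hd2 hm2 this
  -- counting
  have hfin1 : (F1 '' S).Finite := Set.Finite.subset T.finite_toSet hsub1
  have hfin2 : (F2 '' S).Finite := Set.Finite.subset T.finite_toSet hsub2
  have hcount : 2 * S.ncard ≤ T.card := by
    have h1 : (F1 '' S).ncard = S.ncard := Set.ncard_image_of_injOn hinj1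
    have h2 : (F2 '' S).ncard = S.ncard := Set.ncard_image_of_injOn hinj2
    have hu : (F1 '' S ∪ F2 '' S).ncard = S.ncard + S.ncard := by
      rw [Set.ncard_union_eq hdisjim hfin1 hfin2, h1, h2]
    have hle : (F1 '' S ∪ F2 '' S).ncard ≤ (↑T : Set _).ncard :=
      Set.ncard_le_ncard (Set.union_subset hsub1 hsub2) T.finite_toSet
    rw [Set.ncard_coe_finset] at hle
    omega
  -- arithmetic
  have hN : numCopies (cycleGraph 4) G = S.ncard := rfl
  have hnat : 4 * numCopies (cycleGraph 4) G ≤ (t - 1).choose 2 * n ^ 2 := by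
    have h2n : 2 * n.choose 2 ≤ n ^ 2 := by
      rw [Nat.choose_two_right]
      calc 2 * (n * (n - 1) / 2) ≤ n * (n - 1) := by
            rw [mul_comm]
            exact Nat.div_mul_le_self _ _
        _ ≤ n ^ 2 := by
            rw [pow_two]
            exact Nat.mul_le_mul_left n (Nat.sub_le n 1)
    calc 4 * numCopies (cycleGraph 4) G = 2 * (2 * S.ncard) := by rw [hN]; ring
      _ ≤ 2 * (n.choose 2 * (t - 1).choose 2) :=
          Nat.mul_le_mul_left 2 (le_trans hcount hTcard)
      _ = (2 * n.choose 2) * (t - 1).choose 2 := by ring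
      _ ≤ n ^ 2 * (t - 1).choose 2 := Nat.mul_le_mul_right _ h2n
      _ = (t - 1).choose 2 * n ^ 2 := by ring
  have hreal : (4 : ℝ) * (numCopies (cycleGraph 4) G : ℝ) ≤ ((t - 1).choose 2 : ℝ) * (n : ℝ) ^ 2 := by
    exact_mod_cast hnat
  linarith
end

section
/- If G is an n-vertex K_{2,t}-free graph with m edges and k ≥ 5 is odd, then the number of copies of the cycle C_k in G is at most (1/(2k))·(t-1)^{(k-1)/2}·2m·n^{(k-3)/2}. -/
open SimpleGraph Finset

/-! ### Auxiliary lemmas -/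

/-- If `u ≠ v` have `t` common neighbours `W` (possibly `t = 0`), then `G` contains a copy of
`K_{2,t}`. -/
lemma aux_copy_construct {n t : ℕ} {G : SimpleGraph (Fin n)} {u v : Fin n} (huv : u ≠ v)
    (W : Finset (Fin n)) (hWcard : W.card = t)
    (hWu : ∀ w ∈ W, G.Adj u w) (hWv : ∀ w ∈ W, G.Adj v w) :
    ¬ FreeOf (completeBipartiteGraph (Fin 2) (Fin t)) G := by
  intro hG
  have huW : u ∉ W := fun h => G.irrefl (hWu u h)
  have hvW : v ∉ W := fun h => G.irrefl (hWv v h)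
  set H : G.Subgraph :=
    { verts := {u, v} ∪ ↑W
      Adj := fun x y => ((x = u ∨ x = v) ∧ y ∈ W) ∨ ((y = u ∨ y = v) ∧ x ∈ W)
      adj_sub := by
        rintro x y (⟨(rfl | rfl), hy⟩ | ⟨(rfl | rfl), hx⟩)
        · exact hWu y hy
        · exact hWv y hy
        · exact (hWu x hx).symm
        · exact (hWv x hx).symm
      edge_vert := by
        rintro x y (⟨(rfl | rfl), hy⟩ | ⟨(rfl | rfl), hx⟩)
        · exact Or.inl (Or.inl rfl)
        · exact Or.inl (Or.inr rfl)
        · exact Or.inr hx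
        · exact Or.inr hx
      symm := by
        constructor; rintro x y (h | h)
        · exact Or.inr h
        · exact Or.inl h } with hH
  apply hG H
  have e : Fin t ≃ W := (Finset.equivFinOfCardEq hWcard).symm
  have hu : u ∈ H.verts := Or.inl (Or.inl rfl)
  have hv : v ∈ H.verts := Or.inl (Or.inr rfl)
  set φ : Fin 2 ⊕ Fin t → H.verts :=
    Sum.elim (fun i => if i = 0 then ⟨u, hu⟩ else ⟨v, hv⟩)
      (fun j => ⟨(e j : Fin n), Or.inr (e j).2⟩) with hφ
  have hbij : Function.Bijective φ := by
    constructor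
    · rintro (i | i) (j | j) h <;>
        simp only [hφ, Sum.elim_inl, Sum.elim_inr, Subtype.ext_iff] at h
      · congr 1
        fin_cases i <;> fin_cases j <;> simp_all [Subtype.ext_iff, huv.symm]
      · exfalso
        split_ifs at h
        · have h' : u = ↑(e j) := h
          exact huW (by rw [h']; exact (e j).2)
        · have h' : v = ↑(e j) := h
          exact hvW (by rw [h']; exact (e j).2)
      · exfalso
        split_ifs at h
        · have h' : (↑(e i) : Fin n) = u := h
          exact huW (by rw [← h']; exact (e i).2)
        · have h' : (↑(e i) : Fin n) = v := h
          exact hvW (by rw [← h']; exact (e i).2)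
      · exact congrArg Sum.inr (e.injective (Subtype.ext h))
    · rintro ⟨x, (hx | hx) | hx⟩
      · exact ⟨Sum.inl 0, Subtype.ext hx.symm⟩
      · exact ⟨Sum.inl 1, Subtype.ext hx.symm⟩
      · exact ⟨Sum.inr (e.symm ⟨x, hx⟩), by simp [hφ]⟩
  refine ⟨⟨Equiv.ofBijective φ hbij, ?_⟩⟩
  rintro (i | i) (j | j) <;>
    simp only [Equiv.ofBijective_apply, hφ, Sum.elim_inl, Sum.elim_inr, Subgraph.coe_adj,
      completeBipartiteGraph]
  · constructor
    · rintro (⟨_, hw⟩ | ⟨_, hw⟩) <;> split_ifs at hw <;> simp_all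
    · simp
  · constructor
    · intro; simp
    · intro
      exact Or.inl ⟨by split_ifs <;> simp, (e j).2⟩
  · constructor
    · intro; simp
    · intro
      exact Or.inr ⟨by split_ifs <;> simp, (e i).2⟩
  · constructor
    · rintro (⟨(h | h), _⟩ | ⟨(h | h), _⟩)
      · exact absurd (show u ∈ W from h ▸ (e i).2) huW
      · exact absurd (show v ∈ W from h ▸ (e i).2) hvW
      · exact absurd (show u ∈ W from h ▸ (e j).2) huW
      · exact absurd (show v ∈ W from h ▸ (e j).2) hvW
    · simp

open scoped Classical in
/-- In a `K_{2,t}`-free graph, two distinct vertices have at most `t - 1` common neighbours. -/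
lemma aux_commonNbrs_bound {n t : ℕ} {G : SimpleGraph (Fin n)}
    (hG : FreeOf (completeBipartiteGraph (Fin 2) (Fin t)) G)
    {u v : Fin n} (huv : u ≠ v) :
    (univ.filter fun x => G.Adj u x ∧ G.Adj v x).card ≤ t - 1 := by
  by_contra hlt
  push_neg at hlt
  have ht : t ≤ (univ.filter fun x => G.Adj u x ∧ G.Adj v x).card := by omega
  obtain ⟨W, hWsub, hWcard⟩ := Finset.exists_subset_card_eq ht
  exact aux_copy_construct huv W hWcard
    (fun w hw => (Finset.mem_filter.1 (hWsub hw)).2.1)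
    (fun w hw => (Finset.mem_filter.1 (hWsub hw)).2.2) hG

section CycAut
variable {k : ℕ} [NeZero k]
open Fin.CommRing

/-- Rotation isomorphism of the cycle graph. -/
def aux_rotIso (a : Fin k) : cycleGraph k ≃g cycleGraph k :=
  ⟨Equiv.addRight a, by
    intro x y
    simp only [Equiv.coe_addRight, cycleGraph_adj']
    have h1 : x + a - (y + a) = x - y := by ring
    have h2 : y + a - (x + a) = y - x := by ring
    rw [h1, h2]⟩

/-- Reflection isomorphism of the cycle graph. -/
def aux_flipIso (a : Fin k) : cycleGraph k ≃g cycleGraph k :=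
  ⟨Equiv.subLeft a, by
    intro x y
    simp only [Equiv.subLeft_apply, cycleGraph_adj']
    have h1 : a - x - (a - y) = y - x := by ring
    have h2 : a - y - (a - x) = x - y := by ring
    rw [h1, h2, or_comm]⟩

/-- The `2k` dihedral isomorphisms of the cycle graph. -/
def aux_autC (c : Fin k × Bool) : cycleGraph k ≃g cycleGraph k :=
  if c.2 then aux_flipIso c.1 else aux_rotIso c.1

lemma aux_autC_apply (c : Fin k × Bool) (x : Fin k) :
    aux_autC c x = if c.2 then c.1 - x else x + c.1 := by
  rcases c with ⟨a, b⟩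
  cases b <;> simp [aux_autC, aux_rotIso, aux_flipIso]

lemma aux_finTwoNeZero (hk : 5 ≤ k) : (1 : Fin k) + 1 ≠ 0 := by
  intro h
  have hv : ((1 : Fin k) + 1).val = 2 := by
    rw [Fin.add_def]
    simp [Fin.val_one', Nat.mod_eq_of_lt (show 1 < k by omega),
      Nat.mod_eq_of_lt (show 2 < k by omega)]
  rw [h] at hv
  simp at hv

lemma aux_autC_inj (hk : 5 ≤ k) {c c' : Fin k × Bool} (h : ⇑(aux_autC c) = ⇑(aux_autC c')) :
    c = c' := by
  have h0 := congrFun h 0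
  have h1 := congrFun h 1
  rw [aux_autC_apply, aux_autC_apply] at h0 h1
  rcases c with ⟨a, b⟩; rcases c' with ⟨a', b'⟩
  cases b <;> cases b' <;> simp_all
  · exact aux_finTwoNeZero hk (by linear_combination h1)
  · exact aux_finTwoNeZero hk (by linear_combination -h1)

lemma aux_cycle_adj_succ (hk : 5 ≤ k) (i : Fin k) : (cycleGraph k).Adj i (i + 1) := by
  rw [cycleGraph_adj']
  right
  have : i + 1 - i = 1 := by ring
  rw [this]
  simp [Fin.val_one', Nat.mod_eq_of_lt (by omega : 1 < k)]

lemma aux_fin_succ_mk (hk1 : 1 < k) (c : ℕ) (h : c + 1 < k) (h' : c < k) :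
    (⟨c, h'⟩ : Fin k) + 1 = ⟨c + 1, h⟩ := by
  rw [Fin.add_def]
  apply Fin.ext
  rw [Fin.val_one', Nat.mod_eq_of_lt hk1]
  show (c + 1) % k = c + 1
  exact Nat.mod_eq_of_lt h

lemma aux_fin_last_succ (hk1 : 1 < k) (h' : k - 1 < k) (h0 : 0 < k) :
    (⟨k - 1, h'⟩ : Fin k) + 1 = ⟨0, h0⟩ := by
  rw [Fin.add_def]
  apply Fin.ext
  rw [Fin.val_one', Nat.mod_eq_of_lt hk1]
  show (k - 1 + 1) % k = 0
  rw [Nat.sub_add_cancel (by omega), Nat.mod_self]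

end CycAut

instance aux_subgraphFinite {V : Type*} [Finite V] (G : SimpleGraph V) : Finite G.Subgraph := by
  apply Finite.of_injective (fun H : G.Subgraph => (H.verts, H.Adj))
  intro a b h
  simp only [Prod.mk.injEq] at h
  exact SimpleGraph.Subgraph.ext h.1 h.2

/-- A labelled copy of a cycle determines the subgraph. -/
lemma aux_copy_eq_of_map_eq {n k : ℕ} {G : SimpleGraph (Fin n)} {G1 G2 : G.Subgraph}
    (ψ1 : cycleGraph k ≃g G1.coe) (ψ2 : cycleGraph k ≃g G2.coe)
    (h : (fun i => ((ψ1 i : G1.verts) : Fin n)) = fun i => ((ψ2 i : G2.verts) : Fin n)) :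
    G1 = G2 := by
  have hv : ∀ (G' : G.Subgraph) (ψ : cycleGraph k ≃g G'.coe),
      G'.verts = Set.range (fun i => ((ψ i : G'.verts) : Fin n)) := by
    intro G' ψ
    ext x
    constructor
    · intro hx
      obtain ⟨i, hi⟩ := ψ.surjective ⟨x, hx⟩
      exact ⟨i, by show ((ψ i : G'.verts) : Fin n) = x; rw [hi]⟩
    · rintro ⟨i, rfl⟩
      exact (ψ i).2
  have ha : ∀ (G' : G.Subgraph) (ψ : cycleGraph k ≃g G'.coe) (x y : Fin n),
      G'.Adj x y ↔ ∃ i j : Fin k, (cycleGraph k).Adj i j ∧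
        x = ((ψ i : G'.verts) : Fin n) ∧ y = ((ψ j : G'.verts) : Fin n) := by
    intro G' ψ x y
    constructor
    · intro hxy
      have hx : x ∈ G'.verts := G'.edge_vert hxy
      have hy : y ∈ G'.verts := G'.edge_vert hxy.symm
      refine ⟨ψ.symm ⟨x, hx⟩, ψ.symm ⟨y, hy⟩, ?_, ?_, ?_⟩
      · exact ψ.symm.map_rel_iff.mpr (by rw [SimpleGraph.Subgraph.coe_adj]; exact hxy)
      · rw [ψ.apply_symm_apply]
      · rw [ψ.apply_symm_apply]
    · rintro ⟨i, j, hij, rfl, rfl⟩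
      have h' := ψ.map_rel_iff.mpr hij
      rwa [SimpleGraph.Subgraph.coe_adj] at h'
  apply SimpleGraph.Subgraph.ext
  · rw [hv G1 ψ1, hv G2 ψ2, h]
  · funext x y
    rw [eq_iff_iff, ha G1 ψ1, ha G2 ψ2]
    constructor <;> rintro ⟨i, j, hij, hx, hy⟩ <;> refine ⟨i, j, hij, ?_, ?_⟩
    · rw [hx, congrFun h i]
    · rw [hy, congrFun h j]
    · rw [hx, ← congrFun h i]
    · rw [hy, ← congrFun h j]

open scoped Classical in
lemma aux_lower_bound {n k : ℕ} [NeZero k] (hk : 5 ≤ k) (G : SimpleGraph (Fin n)) :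
    numCopies (cycleGraph k) G * (k * 2) ≤
      (univ.filter fun f : Fin k → Fin n =>
        Function.Injective f ∧ ∀ i : Fin k, G.Adj (f i) (f (i + 1))).card := by
  haveI := Fintype.ofFinite G.Subgraph
  set S := (univ.filter fun f : Fin k → Fin n =>
      Function.Injective f ∧ ∀ i : Fin k, G.Adj (f i) (f (i + 1))) with hS
  set C : Finset G.Subgraph := univ.filter (fun G' => IsCopyOf (cycleGraph k) G') with hC
  have hnum : numCopies (cycleGraph k) G = C.card := by
    rw [numCopies, show {G' : G.Subgraph | IsCopyOf (cycleGraph k) G'} = ↑C by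
      ext x; simp [hC]]
    exact Set.ncard_coe_finset _
  rw [hnum]
  rcases C.eq_empty_or_nonempty with hCe | ⟨G0, hG0⟩
  · simp [hCe]
  have hcop0 : IsCopyOf (cycleGraph k) G0 := (mem_filter.1 hG0).2
  set junk : Fin k → Fin n := fun _ => ((hcop0.some (0 : Fin k) : G0.verts) : Fin n) with hjunk
  set M : G.Subgraph × (Fin k × Bool) → (Fin k → Fin n) := fun p =>
    if h : IsCopyOf (cycleGraph k) p.1 then
      fun i => ((((aux_autC p.2).trans h.some) i : p.1.verts) : Fin n)
    else junk with hM
  have key : C.card * (k * 2) = (C ×ˢ (univ : Finset (Fin k × Bool))).card := by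
    rw [Finset.card_product, Finset.card_univ, Fintype.card_prod, Fintype.card_fin,
      Fintype.card_bool]
  rw [key]
  apply Finset.card_le_card_of_injOn M
  · rintro ⟨G', c⟩ hp
    have hcop : IsCopyOf (cycleGraph k) G' := (mem_filter.1 (Finset.mem_product.1 hp).1).2
    set ψ : cycleGraph k ≃g G'.coe := (aux_autC c).trans hcop.some with hψ
    have hMp : M (G', c) = fun i => ((ψ i : G'.verts) : Fin n) := by
      simp only [hM, dif_pos hcop]; rfl
    rw [Finset.mem_coe, hS, mem_filter, hMp]
    refine ⟨mem_univ _, ?_, ?_⟩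
    · intro i j hij
      exact ψ.injective (Subtype.ext hij)
    · intro i
      have hc : (cycleGraph k).Adj i (i + 1) := aux_cycle_adj_succ hk i
      have h' := ψ.map_rel_iff.mpr hc
      rw [SimpleGraph.Subgraph.coe_adj] at h'
      exact G'.adj_sub h'
  · rintro ⟨G1, c1⟩ hp ⟨G2, c2⟩ hq heq
    have h1 : IsCopyOf (cycleGraph k) G1 := (mem_filter.1 (Finset.mem_product.1 hp).1).2
    have h2 : IsCopyOf (cycleGraph k) G2 := (mem_filter.1 (Finset.mem_product.1 hq).1).2
    simp only [hM, dif_pos h1, dif_pos h2] at heq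
    have hGG : G1 = G2 :=
      aux_copy_eq_of_map_eq ((aux_autC c1).trans h1.some) ((aux_autC c2).trans h2.some) heq
    subst hGG
    have hcc : c1 = c2 := by
      apply aux_autC_inj hk
      funext i
      have := congrFun heq i
      exact h1.some.injective (Subtype.ext this)
    rw [hcc]

open scoped Classical in
lemma aux_dart_filter_card {n : ℕ} (G : SimpleGraph (Fin n)) :
    (univ.filter fun e : Fin n × Fin n => G.Adj e.1 e.2).card = 2 * G.edgeFinset.card := by
  rw [← SimpleGraph.dart_card_eq_twice_card_edges, ← Finset.card_univ]
  apply Finset.card_bij (fun (e : Fin n × Fin n) he => (⟨e, (mem_filter.1 he).2⟩ : G.Dart))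
  · intro e he; exact mem_univ _
  · intro e he e' he' h
    exact congrArg SimpleGraph.Dart.toProd h
  · intro d _
    exact ⟨d.toProd, mem_filter.2 ⟨mem_univ _, d.adj⟩, rfl⟩

open scoped Classical in
lemma aux_upper_bound {n t k s : ℕ} [NeZero k] (hs : k = 2 * s + 5)
    (G : SimpleGraph (Fin n))
    (hG : FreeOf (completeBipartiteGraph (Fin 2) (Fin t)) G) :
    (univ.filter fun f : Fin k → Fin n =>
      Function.Injective f ∧ ∀ i : Fin k, G.Adj (f i) (f (i + 1))).card ≤
      2 * G.edgeFinset.card * (t - 1) ^ (s + 2) * n ^ (s + 1) := by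
  have hk1 : 1 < k := by omega
  set S := (univ.filter fun f : Fin k → Fin n =>
      Function.Injective f ∧ ∀ i : Fin k, G.Adj (f i) (f (i + 1))) with hS
  set key : (Fin k → Fin n) → (Fin n × Fin n) × (Fin (s + 1) → Fin n) := fun f =>
    ((f ⟨0, by omega⟩, f ⟨1, by omega⟩), fun j => f ⟨2 * j.1 + 3, by have := j.2; omega⟩)
    with hkey
  have posX : ∀ j : Fin (s + 2), 2 * j.1 + 1 < k := fun j => by have := j.2; omega
  have posC : ∀ j : Fin (s + 2), 2 * j.1 + 2 < k := fun j => by have := j.2; omega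
  set pY : Fin (s + 2) → Fin k := fun j =>
    if h : j.1 = s + 1 then ⟨0, by omega⟩ else ⟨2 * j.1 + 3, by have := j.2; omega⟩ with hpY
  have fiber_bound : ∀ p : (Fin n × Fin n) × (Fin (s + 1) → Fin n),
      (S.filter fun f => key f = p).card ≤
        if G.Adj p.1.1 p.1.2 then (t - 1) ^ (s + 2) else 0 := by
    intro p
    rcases (S.filter fun f => key f = p).eq_empty_or_nonempty with he | ⟨f0, hf0⟩
    · simp [he]
    have hmem : ∀ f ∈ S.filter fun f => key f = p,
        Function.Injective f ∧ (∀ i : Fin k, G.Adj (f i) (f (i + 1))) ∧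
        f ⟨0, by omega⟩ = p.1.1 ∧ f ⟨1, by omega⟩ = p.1.2 ∧
        ∀ j : Fin (s + 1), f ⟨2 * j.1 + 3, by have := j.2; omega⟩ = p.2 j := by
      intro f hf
      obtain ⟨hfS, hfk⟩ := mem_filter.1 hf
      obtain ⟨-, hinj, hadj⟩ := mem_filter.1 hfS
      refine ⟨hinj, hadj, ?_, ?_, ?_⟩
      · exact congrArg (fun q => q.1.1) hfk
      · exact congrArg (fun q => q.1.2) hfk
      · intro j; exact congrFun (congrArg Prod.snd hfk) j
    obtain ⟨hf0inj, hf0adj, hf00, hf01, hf0w⟩ := hmem f0 hf0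
    have hadjp : G.Adj p.1.1 p.1.2 := by
      rw [← hf00, ← hf01]
      have := hf0adj ⟨0, by omega⟩
      rwa [aux_fin_succ_mk hk1 0 (by omega) (by omega)] at this
    rw [if_pos hadjp]
    set X : Fin (s + 2) → Fin n := fun j =>
      if h : j.1 = 0 then p.1.2 else p.2 ⟨j.1 - 1, by have := j.2; omega⟩ with hX
    set Y : Fin (s + 2) → Fin n := fun j =>
      if h : j.1 = s + 1 then p.1.1 else p.2 ⟨j.1, by have := j.2; omega⟩ with hY
    have hXf : ∀ f ∈ S.filter fun f => key f = p, ∀ j : Fin (s + 2),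
        X j = f ⟨2 * j.1 + 1, posX j⟩ := by
      intro f hf j
      obtain ⟨-, -, -, h1, hw⟩ := hmem f hf
      rw [hX]
      dsimp only
      split_ifs with h0
      · rw [← h1]; congr 1; exact Fin.ext (by simp [h0])
      · rw [← hw ⟨j.1 - 1, by have := j.2; omega⟩]
        congr 1
        exact Fin.ext (by simp; omega)
    have hYf : ∀ f ∈ S.filter fun f => key f = p, ∀ j : Fin (s + 2),
        Y j = f (pY j) := by
      intro f hf j
      obtain ⟨-, -, h0, -, hw⟩ := hmem f hf
      rw [hY, hpY]
      dsimp only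
      split_ifs with hj
      · rw [← h0]
      · rw [← hw ⟨j.1, by have := j.2; omega⟩]
    have hXY : ∀ j : Fin (s + 2), X j ≠ Y j := by
      intro j
      rw [hXf f0 hf0 j, hYf f0 hf0 j]
      intro h
      have h2 := hf0inj h
      rw [hpY] at h2
      dsimp only at h2
      split_ifs at h2 with hj <;> rw [Fin.ext_iff] at h2 <;> simp at h2 <;> omega
    refine le_trans (Finset.card_le_card_of_injOn
      (t := Fintype.piFinset fun j : Fin (s + 2) =>
        univ.filter fun x => G.Adj (X j) x ∧ G.Adj (Y j) x)
      (fun f => fun j : Fin (s + 2) => f ⟨2 * j.1 + 2, posC j⟩) ?_ ?_) ?_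
    · intro f hf
      rw [Finset.mem_coe, Fintype.mem_piFinset]
      intro j
      obtain ⟨-, hadj, -, -, -⟩ := hmem f hf
      rw [mem_filter, hXf f hf j, hYf f hf j]
      refine ⟨mem_univ _, ?_, ?_⟩
      · have := hadj ⟨2 * j.1 + 1, posX j⟩
        rwa [aux_fin_succ_mk hk1 _ (posC j) (posX j)] at this
      · have had := hadj ⟨2 * j.1 + 2, posC j⟩
        rw [hpY]
        dsimp only
        split_ifs with hj
        · have hlast : (⟨2 * j.1 + 2, posC j⟩ : Fin k) = ⟨k - 1, by omega⟩ :=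
            Fin.ext (by simp; omega)
          rw [hlast, aux_fin_last_succ hk1 _ (by omega)] at had
          rw [hlast]
          exact had.symm
        · have h3 : 2 * j.1 + 3 < k := by have := j.2; omega
          rw [aux_fin_succ_mk hk1 _ h3 (posC j)] at had
          exact had.symm
    · intro f hf g hg hfg
      obtain ⟨-, -, hf0', hf1', hfw⟩ := hmem f hf
      obtain ⟨-, -, hg0', hg1', hgw⟩ := hmem g hg
      funext i
      rcases Nat.even_or_odd i.1 with ⟨c, hc⟩ | ⟨c, hc⟩
      · rcases Nat.eq_zero_or_pos c with rfl | hcpos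
        · have hi : i = ⟨0, by omega⟩ := Fin.ext (by show i.1 = 0; omega)
          rw [hi, hf0', hg0']
        · have hck : c - 1 < s + 2 := by have := i.2; omega
          have h2 := congrFun hfg ⟨c - 1, hck⟩
          dsimp only at h2
          have hi : i = ⟨2 * (c - 1) + 2, posC ⟨c - 1, hck⟩⟩ := Fin.ext (by simp; omega)
          rw [hi]
          exact h2
      · rcases Nat.eq_zero_or_pos c with rfl | hcpos
        · have hi : i = ⟨1, by omega⟩ := Fin.ext (by show i.1 = 1; omega)
          rw [hi, hf1', hg1']
        · have hck : c - 1 < s + 1 := by have := i.2; omega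
          have hi : i = ⟨2 * (c - 1) + 3, by have := i.2; omega⟩ := Fin.ext (by simp; omega)
          rw [hi, hfw ⟨c - 1, hck⟩, hgw ⟨c - 1, hck⟩]
    · rw [Fintype.card_piFinset]
      calc ∏ j : Fin (s + 2), (univ.filter fun x => G.Adj (X j) x ∧ G.Adj (Y j) x).card
          ≤ ∏ _j : Fin (s + 2), (t - 1) := by
            apply Finset.prod_le_prod'
            intro j _
            exact aux_commonNbrs_bound hG (hXY j)
        _ = (t - 1) ^ (s + 2) := by rw [Finset.prod_const, Finset.card_univ, Fintype.card_fin]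
  calc S.card = ∑ p ∈ univ, ((S.filter fun f => key f = p).card) :=
        Finset.card_eq_sum_card_fiberwise (fun f _ => mem_univ (key f))
    _ ≤ ∑ p : (Fin n × Fin n) × (Fin (s + 1) → Fin n),
          (if G.Adj p.1.1 p.1.2 then (t - 1) ^ (s + 2) else 0) :=
        Finset.sum_le_sum fun p _ => fiber_bound p
    _ = ∑ e : Fin n × Fin n, ∑ _w : Fin (s + 1) → Fin n,
          (if G.Adj e.1 e.2 then (t - 1) ^ (s + 2) else 0) := by
        rw [← Finset.univ_product_univ, Finset.sum_product]
    _ = ∑ e : Fin n × Fin n, n ^ (s + 1) * (if G.Adj e.1 e.2 then (t - 1) ^ (s + 2) else 0) := by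
        apply Finset.sum_congr rfl
        intro e _
        rw [Finset.sum_const, Finset.card_univ, Fintype.card_fun, Fintype.card_fin,
          Fintype.card_fin, smul_eq_mul]
    _ = n ^ (s + 1) * ∑ e ∈ univ.filter (fun e : Fin n × Fin n => G.Adj e.1 e.2),
          (t - 1) ^ (s + 2) := by
        rw [← Finset.mul_sum, Finset.sum_filter]
    _ = 2 * G.edgeFinset.card * (t - 1) ^ (s + 2) * n ^ (s + 1) := by
        rw [Finset.sum_const, smul_eq_mul, aux_dart_filter_card]
        ring

theorem stmt5 (n t k m : ℕ) (hk : 5 ≤ k) (hko : Odd k) (G : SimpleGraph (Fin n))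
    (hm : G.edgeSet.ncard = m)
    (hG : FreeOf (completeBipartiteGraph (Fin 2) (Fin t)) G) :
    (numCopies (cycleGraph k) G : ℝ) ≤
      (1 / (2 * (k : ℝ))) * ((t : ℝ) - 1) ^ ((k - 1) / 2) * (2 * (m : ℝ)) *
        (n : ℝ) ^ ((k - 3) / 2) := by
  classical
  haveI : NeZero k := ⟨by omega⟩
  obtain ⟨s, hs⟩ : ∃ s, k = 2 * s + 5 := by
    obtain ⟨c, hc⟩ := hko
    exact ⟨c - 2, by omega⟩
  have hexp1 : (k - 1) / 2 = s + 2 := by omega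
  have hexp2 : (k - 3) / 2 = s + 1 := by omega
  rw [hexp1, hexp2]
  have hmc : G.edgeFinset.card = m := by
    rw [← hm, ← SimpleGraph.coe_edgeFinset, Set.ncard_coe_finset]
  have chain : numCopies (cycleGraph k) G * (k * 2) ≤ 2 * m * (t - 1) ^ (s + 2) * n ^ (s + 1) := by
    calc numCopies (cycleGraph k) G * (k * 2) ≤ _ := aux_lower_bound hk G
      _ ≤ 2 * G.edgeFinset.card * (t - 1) ^ (s + 2) * n ^ (s + 1) := aux_upper_bound hs G hG
      _ = 2 * m * (t - 1) ^ (s + 2) * n ^ (s + 1) := by rw [hmc]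
  rcases Nat.eq_zero_or_pos t with rfl | ht
  · -- t = 0 : the graph has no edges at all
    have hm0 : m = 0 := by
      rw [← hmc]
      rw [Finset.card_eq_zero]
      by_contra hne
      obtain ⟨e, he⟩ := Finset.nonempty_of_ne_empty hne
      rw [SimpleGraph.mem_edgeFinset] at he
      induction e with
      | _ u v =>
        rw [SimpleGraph.mem_edgeSet] at he
        exact aux_copy_construct he.ne ∅ rfl (by simp) (by simp) hG
    have hnc : numCopies (cycleGraph k) G = 0 := by
      have hle : numCopies (cycleGraph k) G * (k * 2) = 0 := by
        have hz : 2 * m * ((0 : ℕ) - 1) ^ (s + 2) * n ^ (s + 1) = 0 := by norm_num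
        omega
      rcases Nat.mul_eq_zero.1 hle with h | h
      · exact h
      · omega
    rw [hnc, hm0]
    norm_num
  · -- t ≥ 1
    have hcast : ((t - 1 : ℕ) : ℝ) = (t : ℝ) - 1 := by
      push_cast [ht]
      ring
    have key : (numCopies (cycleGraph k) G : ℝ) * (2 * k) ≤
        2 * m * ((t : ℝ) - 1) ^ (s + 2) * n ^ (s + 1) := by
      rw [← hcast]
      have := chain
      have hcast2 : ((numCopies (cycleGraph k) G * (k * 2) : ℕ) : ℝ) ≤
          ((2 * m * (t - 1) ^ (s + 2) * n ^ (s + 1) : ℕ) : ℝ) := Nat.cast_le.2 this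
      push_cast at hcast2 ⊢
      linarith
    have h2k : (0 : ℝ) < 2 * k := by positivity
    rw [show (1 / (2 * (k : ℝ))) * ((t : ℝ) - 1) ^ (s + 2) * (2 * (m : ℝ)) * (n : ℝ) ^ (s + 1) =
        (2 * m * ((t : ℝ) - 1) ^ (s + 2) * n ^ (s + 1)) / (2 * k) by
      rw [div_eq_mul_inv]; ring]
    rw [le_div_iff₀ h2k]
    exact key
end

section
/- For any graph F and any r ≥ 2: ex(n, K_r, F) ≤ ex_r(n, Berge-F). -/
open SimpleGraph Finset

/-- The hypergraph `H` (a family of hyperedges) contains a Berge copy of the graph `F`: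
there is an injection `φ` of the vertices of `F` and an injection `f` from the edges of `F`
to the hyperedges of `H` such that each edge `e` of `F` satisfies `φ '' e ⊆ f e`. -/
def HasBerge {V W : Type*} (F : SimpleGraph W) (H : Finset (Finset V)) : Prop :=
  ∃ (φ : W ↪ V) (f : F.edgeSet → Finset V),
    Function.Injective f ∧ (∀ e, f e ∈ H) ∧
      ∀ e : F.edgeSet, ∀ w ∈ (e : Sym2 W), φ w ∈ f e

/-- `ex_r(n, Berge-F)`: the maximum number of hyperedges in an `r`-uniform `n`-vertex
hypergraph with no Berge-`F`. -/
noncomputable def exBergeUnif (n r : ℕ) {W : Type*} (F : SimpleGraph W) : ℕ :=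
  sSup {m | ∃ H : Finset (Finset (Fin n)),
    (∀ s ∈ H, s.card = r) ∧ ¬ HasBerge F H ∧ H.card = m}

lemma copy_top_adj {n r : ℕ} {G : SimpleGraph (Fin n)} {G' : G.Subgraph}
    (h : IsCopyOf (⊤ : SimpleGraph (Fin r)) G') :
    ∀ a b, G'.Adj a b ↔ a ∈ G'.verts ∧ b ∈ G'.verts ∧ a ≠ b := by
  obtain ⟨e⟩ := h
  intro a b
  constructor
  · intro hab
    exact ⟨hab.fst_mem, hab.snd_mem, (G'.adj_sub hab).ne⟩
  · rintro ⟨ha, hb, hne⟩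
    have hsub : (⟨a, ha⟩ : G'.verts) ≠ ⟨b, hb⟩ := by simpa [Subtype.ext_iff] using hne
    have htop : (⊤ : SimpleGraph (Fin r)).Adj (e.symm ⟨a, ha⟩) (e.symm ⟨b, hb⟩) :=
      by simpa using e.symm.injective.ne hsub
    have := e.map_rel_iff.mpr htop
    simpa using this

lemma copy_top_card {n r : ℕ} {G : SimpleGraph (Fin n)} {G' : G.Subgraph}
    (h : IsCopyOf (⊤ : SimpleGraph (Fin r)) G') : G'.verts.ncard = r := by
  obtain ⟨e⟩ := h
  have : Nat.card G'.verts = Nat.card (Fin r) := Nat.card_congr e.toEquiv.symm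
  simpa [Nat.card_coe_set_eq] using this

theorem stmt11 {W : Type*} (F : SimpleGraph W) (n r : ℕ) (hr : 2 ≤ r) :
    exC n (⊤ : SimpleGraph (Fin r)) F ≤ exBergeUnif n r F := by
  classical
  apply csSup_le'
  rintro m ⟨G, hfree, hcount⟩
  set S : Set G.Subgraph := {G' | IsCopyOf (⊤ : SimpleGraph (Fin r)) G'} with hS
  set vmap : G.Subgraph → Finset (Fin n) := fun G' => (G'.verts.toFinite).toFinset with hvmap
  have hmemv : ∀ (G' : G.Subgraph) (a : Fin n), a ∈ vmap G' ↔ a ∈ G'.verts := by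
    intro G' a; rw [hvmap]; exact Set.Finite.mem_toFinset _
  -- injectivity of vmap on S
  have hinj : Set.InjOn vmap S := by
    intro G₁ h1 G₂ h2 hv
    have hv' : G₁.verts = G₂.verts := by
      ext a
      rw [← hmemv G₁ a, ← hmemv G₂ a, hv]
    have hadj : G₁.Adj = G₂.Adj := by
      ext a b
      rw [copy_top_adj h1, copy_top_adj h2, hv']
    exact SimpleGraph.Subgraph.ext hv' hadj
  set H : Finset (Finset (Fin n)) := ((vmap '' S).toFinite).toFinset with hH
  have hmemH : ∀ s, s ∈ H ↔ ∃ G' ∈ S, vmap G' = s := by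
    intro s; simp [hH, Set.Finite.mem_toFinset, Set.mem_image]
  refine le_csSup ⟨Fintype.card (Finset (Fin n)), ?_⟩ ?_
  · rintro m' ⟨H', -, -, rfl⟩
    exact Finset.card_le_univ H'
  refine ⟨H, ?_, ?_, ?_⟩
  · -- uniformity
    intro s hs
    obtain ⟨G', hG', rfl⟩ := (hmemH s).mp hs
    have : (vmap G').card = G'.verts.ncard := by
      rw [hvmap]
      exact (Set.ncard_eq_toFinset_card G'.verts _).symm
    rw [this, copy_top_card hG']
  · -- no Berge-F
    rintro ⟨φ, f, finj, fmem, hcov⟩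
    have key : ∀ {w w' : W}, F.Adj w w' → G.Adj (φ w) (φ w') := by
      intro w w' hww'
      set e : F.edgeSet := ⟨s(w, w'), hww'⟩ with he
      obtain ⟨G'', hG'', hvG⟩ := (hmemH (f e)).mp (fmem e)
      have hw : φ w ∈ G''.verts := by
        rw [← hmemv, hvG]
        exact hcov e w (by simp [he])
      have hw' : φ w' ∈ G''.verts := by
        rw [← hmemv, hvG]
        exact hcov e w' (by simp [he])
      have hne : φ w ≠ φ w' := fun hc => hww'.ne (φ.injective hc)
      exact G''.adj_sub ((copy_top_adj hG'' _ _).mpr ⟨hw, hw', hne⟩)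
    set G' : G.Subgraph :=
      { verts := Set.range φ
        Adj := fun a b => ∃ w w', F.Adj w w' ∧ a = φ w ∧ b = φ w'
        adj_sub := by
          rintro a b ⟨w, w', hww', rfl, rfl⟩
          exact key hww'
        edge_vert := by
          rintro a b ⟨w, w', hww', rfl, rfl⟩
          exact ⟨w, rfl⟩
        symm := by
          refine ⟨?_⟩
          rintro a b ⟨w, w', hww', rfl, rfl⟩
          exact ⟨w', w, hww'.symm, rfl, rfl⟩ } with hG'
    apply hfree G'
    refine ⟨⟨Equiv.ofInjective φ φ.injective, ?_⟩⟩
    intro w w'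
    show G'.Adj (φ w) (φ w') ↔ F.Adj w w'
    constructor
    · rintro ⟨u, u', huu', h1, h2⟩
      rw [φ.injective h1, φ.injective h2]
      exact huu'
    · intro h
      exact ⟨w, w', h, rfl, rfl⟩
  · -- cardinality
    have h1 : H.card = (vmap '' S).ncard :=
      (Set.ncard_eq_toFinset_card _ _).symm
    rw [h1, Set.ncard_image_of_injOn hinj]
    exact hcount
end

section
/- For any graph F and any r ≥ 2: ex_r(n, Berge-F) ≤ ex(n, K_r, F) + ex(n, F). -/
open SimpleGraph Finset

lemma subgraphFinite {V : Type*} [Finite V] (G : SimpleGraph V) : Finite G.Subgraph := by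
  have : Finite (Set V × (V → V → Prop)) := by infer_instance
  exact Finite.of_injective (fun G' : G.Subgraph => (G'.verts, G'.Adj)) (by
    intro a b h
    rw [Prod.ext_iff] at h
    exact SimpleGraph.Subgraph.ext h.1 h.2)

lemma greedy {n : ℕ} (H : Finset (Finset (Fin n))) :
    ∃ (E : Finset (Sym2 (Fin n))) (g : Sym2 (Fin n) → Finset (Fin n)),
      Set.InjOn g ↑E ∧
      (∀ p ∈ E, g p ∈ H ∧ ¬ p.IsDiag ∧ ∀ v ∈ p, v ∈ g p) ∧
      (∀ h ∈ H, h ∉ E.image g → ∀ p : Sym2 (Fin n), ¬ p.IsDiag →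
        (∀ v ∈ p, v ∈ h) → p ∈ E) := by
  classical
  induction H using Finset.induction_on with
  | empty =>
      exact ⟨∅, fun _ => ∅, by simp [Set.InjOn], by simp, by simp⟩
  | @insert a H ha ih =>
      obtain ⟨E, g, hinj, hE, hcov⟩ := ih
      by_cases hc : ∃ p : Sym2 (Fin n), ¬ p.IsDiag ∧ (∀ v ∈ p, v ∈ a) ∧ p ∉ E
      · obtain ⟨p, hpd, hpa, hpE⟩ := hc
        refine ⟨insert p E, Function.update g p a, ?_, ?_, ?_⟩
        · intro q hq q' hq' hgq
          simp only [coe_insert, Set.mem_insert_iff, mem_coe] at hq hq'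
          rcases hq with rfl | hq <;> rcases hq' with rfl | hq'
          · rfl
          · rw [Function.update_self, Function.update_of_ne (by intro h'; exact hpE (h' ▸ hq'))] at hgq
            exact absurd (hgq ▸ (hE q' hq').1) ha
          · rw [Function.update_self, Function.update_of_ne (by intro h'; exact hpE (h' ▸ hq))] at hgq
            exact absurd (hgq.symm ▸ (hE q hq).1) ha
          · rw [Function.update_of_ne (by intro h'; exact hpE (h' ▸ hq)),
              Function.update_of_ne (by intro h'; exact hpE (h' ▸ hq'))] at hgq
            exact hinj hq hq' hgq
        · intro q hq
          rcases Finset.mem_insert.mp hq with rfl | hq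
          · refine ⟨?_, hpd, ?_⟩
            · rw [Function.update_self]; exact Finset.mem_insert_self _ _
            · rw [Function.update_self]; exact hpa
          · rw [Function.update_of_ne (by intro h'; exact hpE (h' ▸ hq))]
            exact ⟨Finset.mem_insert_of_mem (hE q hq).1, (hE q hq).2.1, (hE q hq).2.2⟩
        · intro h hh hhim q hqd hqh
          have himg : (insert p E).image (Function.update g p a)
              = insert a (E.image g) := by
            rw [Finset.image_insert, Function.update_self]
            congr 1
            apply Finset.image_congr
            intro x hx
            exact Function.update_of_ne (by intro h'; exact hpE (h' ▸ hx)) _ _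
          rw [himg] at hhim
          have hha : h ≠ a := by rintro rfl; exact hhim (Finset.mem_insert_self _ _)
          have hhH : h ∈ H := (Finset.mem_insert.mp hh).resolve_left hha
          exact Finset.mem_insert_of_mem
            (hcov h hhH (fun hx => hhim (Finset.mem_insert_of_mem hx)) q hqd hqh)
      · push_neg at hc
        refine ⟨E, g, hinj, fun q hq =>
          ⟨Finset.mem_insert_of_mem (hE q hq).1, (hE q hq).2.1, (hE q hq).2.2⟩, ?_⟩
        intro h hh hhim q hqd hqh
        rcases Finset.mem_insert.mp hh with rfl | hhH
        · exact hc q hqd hqh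
        · exact hcov h hhH hhim q hqd hqh

theorem stmt12 {W : Type*} (F : SimpleGraph W) (n r : ℕ) (hr : 2 ≤ r) :
    exBergeUnif n r F ≤ exC n (⊤ : SimpleGraph (Fin r)) F + exE n F := by
  classical
  refine csSup_le' ?_
  rintro m ⟨H, hunif, hnb, rfl⟩
  obtain ⟨E, g, hinj, hE, hcov⟩ := greedy H
  set G : SimpleGraph (Fin n) := SimpleGraph.fromEdgeSet ↑E with hG
  have hedge : G.edgeSet = ↑E := by
    rw [hG, SimpleGraph.edgeSet_fromEdgeSet]
    ext p
    simp only [Set.mem_diff, Finset.mem_coe, Set.mem_setOf_eq, and_iff_left_iff_imp]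
    exact fun hp => (hE p hp).2.1
  -- F-freeness of G
  have hfree : FreeOf F G := by
    intro G' hcopy
    obtain ⟨iso⟩ := hcopy
    apply hnb
    set φf : W → Fin n := fun w => ((iso w : G'.verts) : Fin n) with hφf
    have hφ : Function.Injective φf := by
      intro w w' hw
      exact iso.injective (Subtype.ext hw)
    have hmem : ∀ q ∈ F.edgeSet, Sym2.map φf q ∈ E := by
      intro q
      induction q with
      | _ a b =>
        intro hq
        have hadj : F.Adj a b := hq
        have h2 : G'.coe.Adj (iso a) (iso b) := iso.map_rel_iff.mpr hadj
        have h3 : G.Adj (φf a) (φf b) := G'.adj_sub h2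
        have h4 : s(φf a, φf b) ∈ G.edgeSet := h3
        rw [hedge] at h4
        simpa using h4
    refine ⟨⟨φf, hφ⟩, fun e => g (Sym2.map φf ↑e), ?_, ?_, ?_⟩
    · intro e e' h
      have h1 := hinj (hmem _ e.2) (hmem _ e'.2) h
      exact Subtype.ext (Sym2.map.injective hφ h1)
    · exact fun e => (hE _ (hmem _ e.2)).1
    · intro e w hw
      exact (hE _ (hmem _ e.2)).2.2 _ (Sym2.mem_map.mpr ⟨w, hw, rfl⟩)
  set A := E.image g with hA
  have hAH : A ⊆ H := by
    intro x hx
    obtain ⟨p, hp, rfl⟩ := Finset.mem_image.mp hx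
    exact (hE p hp).1
  have hsplit : H.card = (H \ A).card + A.card :=
    (Finset.card_sdiff_add_card_eq_card hAH).symm
  have bound1 : A.card ≤ exE n F := by
    have h1 : A.card = G.edgeSet.ncard := by
      rw [hA, Finset.card_image_of_injOn hinj, hedge, Set.ncard_coe_finset]
    rw [h1]
    refine le_csSup ⟨Nat.card (Sym2 (Fin n)), ?_⟩ ⟨G, hfree, rfl⟩
    rintro m ⟨G₀, -, rfl⟩
    calc G₀.edgeSet.ncard ≤ (Set.univ : Set (Sym2 (Fin n))).ncard :=
          Set.ncard_le_ncard (Set.subset_univ _) Set.finite_univ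
      _ = _ := Set.ncard_univ _
  have bound2 : (H \ A).card ≤ exC n (⊤ : SimpleGraph (Fin r)) F := by
    have hadjh : ∀ h ∈ H \ A, ∀ x ∈ h, ∀ y ∈ h, x ≠ y → G.Adj x y := by
      intro h hh x hx y hy hxy
      obtain ⟨hh1, hh2⟩ := Finset.mem_sdiff.mp hh
      have hp : s(x, y) ∈ E := by
        refine hcov h hh1 hh2 s(x, y) ?_ ?_
        · simpa using hxy
        · intro v hv
          rcases Sym2.mem_iff.mp hv with rfl | rfl
          · exact hx
          · exact hy
      have : s(x, y) ∈ G.edgeSet := by rw [hedge]; exact hp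
      exact this
    have hK : ∀ h ∈ H \ A, IsCopyOf (⊤ : SimpleGraph (Fin r))
        ((⊤ : G.Subgraph).induce ↑h) := by
      intro h hh
      have hcardr : Fintype.card ↑h = r := by
        rw [Fintype.card_coe]
        exact hunif h (Finset.mem_sdiff.mp hh).1
      let e : Fin r ≃ (↑h : Set (Fin n)) := (Fintype.equivFinOfCardEq hcardr).symm
      refine ⟨⟨e, ?_⟩⟩
      intro a b
      simp only [SimpleGraph.Subgraph.coe_adj, SimpleGraph.Subgraph.induce_adj,
        SimpleGraph.Subgraph.top_adj, top_adj]
      constructor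
      · rintro ⟨-, -, hadj⟩
        intro hab
        exact hadj.ne (by rw [hab])
      · intro hab
        refine ⟨(e a).2, (e b).2, ?_⟩
        refine hadjh h hh _ (e a).2 _ (e b).2 ?_
        intro hval
        exact hab (e.injective (Subtype.ext hval))
    have : Finite G.Subgraph := subgraphFinite G
    have hKinj : Set.InjOn (fun h : Finset (Fin n) => (⊤ : G.Subgraph).induce ↑h)
        ↑(H \ A) := by
      intro h1 _ h2 _ hE12
      have : (↑h1 : Set (Fin n)) = ↑h2 := congrArg SimpleGraph.Subgraph.verts hE12
      exact Finset.coe_injective this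
    have hKle : (H \ A).card ≤ numCopies (⊤ : SimpleGraph (Fin r)) G := by
      calc (H \ A).card = (↑(H \ A) : Set (Finset (Fin n))).ncard :=
            (Set.ncard_coe_finset _).symm
        _ = ((fun h : Finset (Fin n) => (⊤ : G.Subgraph).induce ↑h) '' ↑(H \ A)).ncard :=
            (Set.ncard_image_of_injOn hKinj).symm
        _ ≤ {G' : G.Subgraph | IsCopyOf (⊤ : SimpleGraph (Fin r)) G'}.ncard := by
            refine Set.ncard_le_ncard ?_ (Set.toFinite _)
            rintro - ⟨h, hh, rfl⟩
            exact hK h (by exact_mod_cast hh)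
        _ = numCopies (⊤ : SimpleGraph (Fin r)) G := rfl
    refine hKle.trans (le_csSup ⟨Nat.card (Set (Fin n) × (Fin n → Fin n → Prop)), ?_⟩
      ⟨G, hfree, rfl⟩)
    rintro m ⟨G₀, -, rfl⟩
    have hfin : Finite G₀.Subgraph := subgraphFinite G₀
    calc numCopies (⊤ : SimpleGraph (Fin r)) G₀
        ≤ (Set.univ : Set G₀.Subgraph).ncard :=
          Set.ncard_le_ncard (Set.subset_univ _) Set.finite_univ
      _ = Nat.card G₀.Subgraph := Set.ncard_univ _
      _ ≤ Nat.card (Set (Fin n) × (Fin n → Fin n → Prop)) :=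
          Nat.card_le_card_of_injective (fun G' : G₀.Subgraph => (G'.verts, G'.Adj)) (by
            intro a b h
            rw [Prod.ext_iff] at h
            exact SimpleGraph.Subgraph.ext h.1 h.2)
  rw [hsplit]
  exact Nat.add_le_add bound2 bound1
end

section
/- For any graph F, the maximum number of hyperedges in an n-vertex (non-uniform) hypergraph with no Berge-F subhypergraph equals the maximum, over all n-vertex F-free graphs G, of the total number of cliques (of all sizes) of G. -/
open SimpleGraph Finset

lemma free_iff {W V : Type*} (F : SimpleGraph W) (G : SimpleGraph V) :
    ¬ FreeOf F G ↔ ∃ φ : W ↪ V, ∀ a b, F.Adj a b → G.Adj (φ a) (φ b) := by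
  constructor
  · intro hnf
    rw [FreeOf] at hnf
    push_neg at hnf
    obtain ⟨G', ⟨iso⟩⟩ := hnf
    refine ⟨⟨fun w => (iso w : V), fun a b hab => iso.toEquiv.injective (Subtype.ext hab)⟩,
      fun a b hab => ?_⟩
    exact G'.adj_sub (iso.map_rel_iff.2 hab)
  · rintro ⟨φ, hφ⟩ hfree
    refine hfree ⟨Set.range φ,
      fun x y => ∃ a b, F.Adj a b ∧ φ a = x ∧ φ b = y, ?_, ?_, ?_⟩ ⟨?_⟩
    · rintro x y ⟨a, b, hab, rfl, rfl⟩; exact hφ a b hab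
    · rintro x y ⟨a, b, hab, rfl, rfl⟩; exact ⟨a, rfl⟩
    · refine ⟨?_⟩; rintro x y ⟨a, b, hab, rfl, rfl⟩; exact ⟨b, a, hab.symm, rfl, rfl⟩
    · refine ⟨Equiv.ofBijective (fun w => ⟨φ w, ⟨w, rfl⟩⟩) ⟨?_, ?_⟩, ?_⟩
      · intro a b hab
        exact φ.injective (congrArg Subtype.val hab)
      · rintro ⟨x, w, rfl⟩; exact ⟨w, rfl⟩
      · intro a b
        simp only [Equiv.ofBijective_apply, SimpleGraph.Subgraph.coe_adj]
        constructor
        · rintro ⟨a', b', hab, ha, hb⟩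
          rwa [φ.injective ha, φ.injective hb] at hab
        · intro hab; exact ⟨a, b, hab, rfl, rfl⟩

lemma key {n : ℕ} (A : Finset (Finset (Fin n))) :
    ∃ (E : Finset (Finset (Fin n))) (β ι : Finset (Fin n) → Finset (Fin n)),
      (∀ e ∈ E, e.card = 2) ∧
      (∀ e ∈ E, β e ∈ A ∧ e ⊆ β e) ∧
      Set.InjOn β E ∧
      (∀ h ∈ A, ∀ p ⊆ ι h, p.card = 2 → p ∈ E) ∧
      Set.InjOn ι A ∧
      (∀ h ∈ A, ι h = h ∨ (ι h ⊆ h ∧ (ι h).card = 2 ∧ ι h ∉ A)) ∧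
      (∀ q ∈ A, q.card = 2 → q ∈ E) := by
  induction A using Finset.strongInduction with
  | _ A IH =>
  rcases A.eq_empty_or_nonempty with rfl | hA
  · exact ⟨∅, id, id, by simp, by simp, by simp,
      by simp, by simp [Set.InjOn], by simp, by simp⟩
  obtain ⟨h, hh, hmax⟩ := Finset.exists_max_image A Finset.card hA
  obtain ⟨E, β, ι, hE2, hβ, hβinj, hcl, hιinj, hbr, h2E⟩ :=
    IH (A.erase h) (Finset.erase_ssubset hh)
  have hsub : A.erase h ⊆ A := Finset.erase_subset _ _
  -- a hyperedge `y ≠ h` whose image is a "fresh pair" cannot have image `h`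
  have fresh_ne_h : ∀ y, y ∈ A.erase h → ι y ∉ A.erase h → ι y ⊆ y → (ι y).card = 2 →
      ι y ≠ h := by
    intro y hy hf hsub2 hc2 hEq
    have hyne : ι y ≠ y := by intro hxy; rw [hxy] at hf; exact hf hy
    have hlt : (ι y).card < y.card := Finset.card_lt_card (ssubset_of_ne_of_subset hyne hsub2)
    have h1 : y.card ≤ h.card := hmax y (hsub hy)
    have h2 : h.card = 2 := by rw [← hEq]; exact hc2
    omega
  -- the "otherwise" branch for edges other than h, used in both cases
  have hbr' : ∀ h', h' ∈ A.erase h →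
      ι h' = h' ∨ (ι h' ⊆ h' ∧ (ι h').card = 2 ∧ ι h' ∉ A) := by
    intro h' hh''
    rcases hbr h' hh'' with h1 | ⟨hs, hc2, hnA⟩
    · exact Or.inl h1
    · refine Or.inr ⟨hs, hc2, fun hmem => ?_⟩
      have : ι h' ≠ h := fresh_ne_h h' hh'' hnA hs hc2
      exact hnA (Finset.mem_erase.2 ⟨this, hmem⟩)
  by_cases hc : ∀ p ⊆ h, p.card = 2 → p ∈ E
  · -- case B : h is already a clique; map it to itself
    refine ⟨E, β, Function.update ι h h, hE2,
      fun e he => ⟨hsub (hβ e he).1, (hβ e he).2⟩, hβinj, ?_, ?_, ?_, ?_⟩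
    · intro h' hh' p hp hp2
      rcases eq_or_ne h' h with heq | hne
      · rw [heq, Function.update_self] at hp; exact hc p hp hp2
      · rw [Function.update_of_ne hne] at hp
        exact hcl h' (Finset.mem_erase.2 ⟨hne, hh'⟩) p hp hp2
    · have himg : ∀ y, y ∈ A.erase h → Function.update ι h h y ≠ h := by
        intro y hy' hEq
        have hyne : y ≠ h := (Finset.mem_erase.1 hy').1
        rw [Function.update_of_ne hyne] at hEq
        rcases hbr y hy' with h1 | ⟨hs, hc2, hnA⟩
        · exact hyne (h1 ▸ hEq)
        · exact fresh_ne_h y hy' hnA hs hc2 hEq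
      intro x hx y hy hxy
      rcases eq_or_ne x h with heqx | hxne <;> rcases eq_or_ne y h with heqy | hyne
      · rw [heqx, heqy]
      · exfalso
        rw [heqx, Function.update_self] at hxy
        exact himg y (Finset.mem_erase.2 ⟨hyne, hy⟩) hxy.symm
      · exfalso
        rw [heqy, Function.update_self] at hxy
        exact himg x (Finset.mem_erase.2 ⟨hxne, hx⟩) hxy
      · rw [Function.update_of_ne hxne, Function.update_of_ne hyne] at hxy
        exact hιinj (Finset.mem_erase.2 ⟨hxne, hx⟩) (Finset.mem_erase.2 ⟨hyne, hy⟩) hxy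
    · intro h' hh'
      rcases eq_or_ne h' h with heq | hne
      · left; rw [heq, Function.update_self]
      · rw [Function.update_of_ne hne]
        exact hbr' h' (Finset.mem_erase.2 ⟨hne, hh'⟩)
    · intro q hq hq2
      rcases eq_or_ne q h with heq | hne
      · exact hc q (by rw [heq]) hq2
      · exact h2E q (Finset.mem_erase.2 ⟨hne, hq⟩) hq2
  · -- case A : pick a fresh pair p inside h
    push_neg at hc
    obtain ⟨p, hp_sub, hp2, hpE⟩ := hc
    have hpA' : p ∉ A.erase h := fun hm => hpE (h2E p hm hp2)
    have hEp : ∀ e, e ∈ E → e ≠ p := fun e he heq => hpE (heq ▸ he)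
    refine ⟨insert p E, Function.update β p h, Function.update ι h p, ?_, ?_, ?_, ?_, ?_, ?_, ?_⟩
    · intro e he
      rcases Finset.mem_insert.1 he with heq | he'
      · rw [heq]; exact hp2
      · exact hE2 e he'
    · intro e he
      rcases Finset.mem_insert.1 he with heq | he'
      · rw [heq, Function.update_self]; exact ⟨hh, heq ▸ hp_sub⟩
      · rw [Function.update_of_ne (hEp e he')]
        exact ⟨hsub (hβ e he').1, (hβ e he').2⟩
    · intro x hx y hy hxy
      simp only [Finset.coe_insert, Set.mem_insert_iff, Finset.mem_coe] at hx hy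
      rcases hx with heqx | hx <;> rcases hy with heqy | hy
      · rw [heqx, heqy]
      · exfalso
        rw [heqx, Function.update_self, Function.update_of_ne (hEp y hy)] at hxy
        exact (Finset.mem_erase.1 (hβ y hy).1).1 hxy.symm
      · exfalso
        rw [heqy, Function.update_self, Function.update_of_ne (hEp x hx)] at hxy
        exact (Finset.mem_erase.1 (hβ x hx).1).1 hxy
      · rw [Function.update_of_ne (hEp x hx), Function.update_of_ne (hEp y hy)] at hxy
        exact hβinj hx hy hxy
    · intro h' hh' q hq hq2
      rcases eq_or_ne h' h with heq | hne
      · rw [heq, Function.update_self] at hq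
        have : q = p := Finset.eq_of_subset_of_card_le hq (by omega)
        exact this ▸ Finset.mem_insert_self p E
      · rw [Function.update_of_ne hne] at hq
        exact Finset.mem_insert_of_mem (hcl h' (Finset.mem_erase.2 ⟨hne, hh'⟩) q hq hq2)
    · have haux : ∀ y, y ∈ A.erase h → ι y ≠ p := by
        intro y hy' hEq
        rcases hbr y hy' with h1 | ⟨hs, hc2, hnA⟩
        · rw [h1] at hEq; exact hpA' (hEq ▸ hy')
        · exact hpE (hEq ▸ hcl y hy' (ι y) Finset.Subset.rfl hc2)
      intro x hx y hy hxy
      rcases eq_or_ne x h with heqx | hxne <;> rcases eq_or_ne y h with heqy | hyne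
      · rw [heqx, heqy]
      · exfalso
        rw [heqx, Function.update_self, Function.update_of_ne hyne] at hxy
        exact haux y (Finset.mem_erase.2 ⟨hyne, hy⟩) hxy.symm
      · exfalso
        rw [heqy, Function.update_self, Function.update_of_ne hxne] at hxy
        exact haux x (Finset.mem_erase.2 ⟨hxne, hx⟩) hxy
      · rw [Function.update_of_ne hxne, Function.update_of_ne hyne] at hxy
        exact hιinj (Finset.mem_erase.2 ⟨hxne, hx⟩) (Finset.mem_erase.2 ⟨hyne, hy⟩) hxy
    · intro h' hh'
      rcases eq_or_ne h' h with heq | hne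
      · rw [heq, Function.update_self]
        rcases eq_or_ne p h with heqp | hpne
        · exact Or.inl heqp
        · refine Or.inr ⟨hp_sub, hp2, fun hmem => ?_⟩
          exact hpA' (Finset.mem_erase.2 ⟨hpne, hmem⟩)
      · rw [Function.update_of_ne hne]
        exact hbr' h' (Finset.mem_erase.2 ⟨hne, hh'⟩)
    · intro q hq hq2
      rcases eq_or_ne q h with heq | hne
      · have : p = q := Finset.eq_of_subset_of_card_le (heq ▸ hp_sub) (by omega)
        exact this ▸ Finset.mem_insert_self p E
      · exact Finset.mem_insert_of_mem (h2E q (Finset.mem_erase.2 ⟨hne, hq⟩) hq2)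

section helpers
variable {V : Type*} [DecidableEq V]

private def pairFinset : Sym2 V → Finset V :=
  Sym2.lift ⟨fun a b => {a, b}, fun a b => Finset.pair_comm a b⟩

@[simp] private lemma pairFinset_mk (a b : V) : pairFinset s(a, b) = {a, b} := rfl

private lemma pairFinset_injective : Function.Injective (pairFinset (V := V)) := by
  intro z w hzw
  induction z using Sym2.ind with | _ a b =>
  induction w using Sym2.ind with | _ c d =>
  simp only [pairFinset_mk] at hzw
  have : ({a, b} : Set V) = {c, d} := by
    have := congrArg (fun s : Finset V => (s : Set V)) hzw
    simpa using this
  rw [Set.pair_eq_pair_iff] at this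
  rcases this with ⟨rfl, rfl⟩ | ⟨rfl, rfl⟩
  · rfl
  · exact Sym2.eq_swap

private lemma mem_pairFinset {x : V} {z : Sym2 V} : x ∈ pairFinset z ↔ x ∈ z := by
  induction z using Sym2.ind with | _ a b =>
  simp [Sym2.mem_iff]
end helpers

theorem stmt13 {W : Type*} (F : SimpleGraph W) (n : ℕ) :
    sSup {m | ∃ H : Finset (Finset (Fin n)), ¬ HasBerge F H ∧ H.card = m} =
      sSup {m | ∃ G : SimpleGraph (Fin n), FreeOf F G ∧
        ({s : Finset (Fin n) | G.IsClique ↑s}).ncard = m} := by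
  have hbdd2 : BddAbove {m | ∃ G : SimpleGraph (Fin n), FreeOf F G ∧
      ({s : Finset (Fin n) | G.IsClique ↑s}).ncard = m} := by
    refine ⟨Nat.card (Finset (Fin n)), ?_⟩
    rintro m ⟨G, _, rfl⟩
    have := Set.ncard_le_ncard (Set.subset_univ {s : Finset (Fin n) | G.IsClique ↑s})
      Set.finite_univ
    simpa [Set.ncard_univ] using this
  have hbdd1 : BddAbove {m | ∃ H : Finset (Finset (Fin n)), ¬ HasBerge F H ∧ H.card = m} := by
    refine ⟨Fintype.card (Finset (Fin n)), ?_⟩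
    rintro m ⟨H, _, rfl⟩
    exact Finset.card_le_univ H
  apply le_antisymm
  · refine csSup_le' ?_
    rintro m ⟨A, hBerge, rfl⟩
    obtain ⟨E, β, ι, hE2, hβ, hβinj, hcl, hιinj, hbr, h2E⟩ := key A
    let G : SimpleGraph (Fin n) :=
      { Adj := fun x y => x ≠ y ∧ ({x, y} : Finset (Fin n)) ∈ E,
        symm := ⟨fun x y hxy => ⟨hxy.1.symm, by rw [Finset.pair_comm]; exact hxy.2⟩⟩,
        loopless := ⟨fun x hx => hx.1 rfl⟩ }
    have hfree : FreeOf F G := by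
      by_contra hnf
      obtain ⟨φ, hφ⟩ := (free_iff F G).1 hnf
      apply hBerge
      have hmem : ∀ e : F.edgeSet, pairFinset (Sym2.map φ (e : Sym2 W)) ∈ E := by
        rintro ⟨e, he⟩
        induction e using Sym2.ind with | _ a b =>
        have hab : F.Adj a b := he
        have h2 := (hφ a b hab).2
        simpa using h2
      refine ⟨φ, fun e => β (pairFinset (Sym2.map φ (e : Sym2 W))), ?_, ?_, ?_⟩
      · intro e e' hee'
        have h1 := hβinj (hmem e) (hmem e') hee'
        have h2 := pairFinset_injective h1
        have h3 := Sym2.map.injective φ.injective h2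
        exact Subtype.ext h3
      · intro e; exact (hβ _ (hmem e)).1
      · intro e w hw
        exact (hβ _ (hmem e)).2 (mem_pairFinset.2 (Sym2.mem_map.2 ⟨w, hw, rfl⟩))
    refine le_trans ?_ (le_csSup hbdd2 ⟨G, hfree, rfl⟩)
    calc A.card = (↑A : Set (Finset (Fin n))).ncard := (Set.ncard_coe_finset A).symm
      _ = (ι '' ↑A).ncard := (Set.ncard_image_of_injOn hιinj).symm
      _ ≤ ({s : Finset (Fin n) | G.IsClique ↑s}).ncard := by
          refine Set.ncard_le_ncard ?_ (Set.toFinite _)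
          rintro s ⟨h, hh, rfl⟩
          intro x hx y hy hne
          refine ⟨hne, hcl h hh {x, y} ?_ (Finset.card_pair hne)⟩
          exact Finset.insert_subset (Finset.mem_coe.1 hx) (Finset.singleton_subset_iff.2
            (Finset.mem_coe.1 hy))
  · refine csSup_le' ?_
    rintro m ⟨G, hfree, rfl⟩
    have hfin : ({s : Finset (Fin n) | G.IsClique ↑s}).Finite := Set.toFinite _
    have hcard : ({s : Finset (Fin n) | G.IsClique ↑s}).ncard = hfin.toFinset.card :=
      Set.ncard_eq_toFinset_card _ hfin
    have hnB : ¬ HasBerge F hfin.toFinset := by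
      rintro ⟨φ, f, finj, fmem, fcov⟩
      refine (free_iff F G).2 ⟨φ, ?_⟩ hfree
      intro a b hab
      have he : s(a, b) ∈ F.edgeSet := hab
      have hclq : G.IsClique ↑(f ⟨s(a, b), he⟩) := (Set.Finite.mem_toFinset _).1 (fmem _)
      have ha : φ a ∈ f ⟨s(a, b), he⟩ := fcov _ a (Sym2.mem_mk_left a b)
      have hb : φ b ∈ f ⟨s(a, b), he⟩ := fcov _ b (Sym2.mem_mk_right a b)
      exact hclq (Finset.mem_coe.2 ha) (Finset.mem_coe.2 hb) (φ.injective.ne hab.ne)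
    rw [hcard]
    exact le_csSup hbdd1 ⟨hfin.toFinset, hnB, rfl⟩
end

section
/- For k ≥ 4, the maximum number of hyperedges in a 3-uniform n-vertex hypergraph containing no Berge-C_i for any 2 ≤ i ≤ k equals the maximum number of triangles in an n-vertex graph containing no cycle C_i for any 4 ≤ i ≤ k. -/
open SimpleGraph Finset

/-- The hypergraph `H` contains a Berge cycle of length `i`: distinct vertices
`v 0, …, v (i-1)` and distinct hyperedges `e 0, …, e (i-1)` of `H` with
`v j, v (j+1 mod i) ∈ e j` for all `j < i`. -/
def HasBergeCycle {V : Type*} (i : ℕ) (H : Finset (Finset V)) : Prop :=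
  ∃ (v : ℕ → V) (e : ℕ → Finset V),
    (∀ j1 j2, j1 < i → j2 < i → v j1 = v j2 → j1 = j2) ∧
    (∀ j1 j2, j1 < i → j2 < i → e j1 = e j2 → j1 = j2) ∧
    (∀ j < i, e j ∈ H) ∧
    (∀ j < i, v j ∈ e j ∧ v ((j + 1) % i) ∈ e j)

lemma succmod {i j : ℕ} (hj : j < i) : (j + 1) % i = if j + 1 = i then 0 else j + 1 := by
  split_ifs with h
  · rw [h, Nat.mod_self]
  · exact Nat.mod_eq_of_lt (by omega)

lemma succmod_lt {i : ℕ} (j : ℕ) (hi : 0 < i) : (j + 1) % i < i := Nat.mod_lt _ hi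

lemma succmod_ne {i j : ℕ} (hi : 2 ≤ i) (hj : j < i) : (j + 1) % i ≠ j := by
  rw [succmod hj]; split_ifs with h <;> omega

lemma cycleGraph_adj_nat {i a b : ℕ} (hi : 2 ≤ i) (ha : a < i) (hb : b < i) :
    (cycleGraph i).Adj ⟨a, ha⟩ ⟨b, hb⟩ ↔ (b = (a + 1) % i ∨ a = (b + 1) % i) := by
  obtain ⟨m, rfl⟩ : ∃ m, i = m + 2 := ⟨i - 2, by omega⟩
  have key : ∀ (u v : Fin (m + 2)), u - v = 1 ↔ u.val = (v.val + 1) % (m + 2) := by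
    intro u v
    rw [sub_eq_iff_eq_add, Fin.ext_iff, Fin.add_def, Fin.val_one]
    simp [Nat.add_comm]
  rw [cycleGraph_adj, key, key]
  simp only [Fin.val_mk]
  tauto

variable {n : ℕ}

/-- `G` has a cycle of length `i` given by distinct vertices with cyclically consecutive
adjacencies. -/
def HasCycle (i : ℕ) (G : SimpleGraph (Fin n)) : Prop :=
  ∃ v : ℕ → Fin n, (∀ j1 j2, j1 < i → j2 < i → v j1 = v j2 → j1 = j2) ∧
    (∀ j < i, G.Adj (v j) (v ((j + 1) % i)))

lemma hasCycle_of_copy {i : ℕ} (hi : 2 ≤ i) {G : SimpleGraph (Fin n)} (G' : G.Subgraph)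
    (h : IsCopyOf (cycleGraph i) G') : HasCycle i G := by
  obtain ⟨φ⟩ := h
  refine ⟨fun j => (φ ⟨j % i, Nat.mod_lt _ (by omega)⟩).val, ?_, ?_⟩
  · intro j1 j2 h1 h2 heq
    have := φ.toEquiv.injective (Subtype.ext heq)
    rw [Fin.mk.injEq, Nat.mod_eq_of_lt h1, Nat.mod_eq_of_lt h2] at this
    exact this
  · intro j hj
    have hadj : (cycleGraph i).Adj ⟨j % i, Nat.mod_lt _ (by omega)⟩
        ⟨(j + 1) % i % i, Nat.mod_lt _ (by omega)⟩ := by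
      rw [cycleGraph_adj_nat hi]
      left
      rw [Nat.mod_eq_of_lt (succmod_lt _ (by omega)), Nat.mod_eq_of_lt hj]
    have := φ.map_rel_iff.mpr hadj
    exact G'.adj_sub this

lemma copy_of_hasCycle {i : ℕ} (hi : 2 ≤ i) {G : SimpleGraph (Fin n)}
    (h : HasCycle i G) : ¬ FreeOf (cycleGraph i) G := by
  obtain ⟨v, hv1, hv2⟩ := h
  intro hfree
  let S : G.Subgraph :=
    { verts := {x | ∃ j < i, x = v j}
      Adj := fun a b => ∃ j < i, (a = v j ∧ b = v ((j + 1) % i)) ∨ (b = v j ∧ a = v ((j + 1) % i))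
      adj_sub := by
        rintro a b ⟨j, hj, ⟨h1, h2⟩ | ⟨h1, h2⟩⟩
        · exact h1 ▸ h2 ▸ hv2 j hj
        · exact (h1 ▸ h2 ▸ hv2 j hj).symm
      edge_vert := by
        rintro a b ⟨j, hj, ⟨h1, h2⟩ | ⟨h1, h2⟩⟩
        · exact ⟨j, hj, h1⟩
        · exact ⟨(j + 1) % i, succmod_lt _ (by omega), h2⟩
      symm := by
        refine ⟨?_⟩; rintro a b ⟨j, hj, h | h⟩
        exacts [⟨j, hj, Or.inr h⟩, ⟨j, hj, Or.inl h⟩] }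
  apply hfree S
  have hmem : ∀ a : Fin i, v a.val ∈ S.verts := fun a => ⟨a.val, a.isLt, rfl⟩
  let f : Fin i → S.verts := fun a => ⟨v a.val, hmem a⟩
  have hinj : Function.Injective f := by
    intro a b hab
    exact Fin.ext (hv1 a.val b.val a.isLt b.isLt (congrArg Subtype.val hab))
  have hsurj : Function.Surjective f := by
    rintro ⟨x, j, hj, rfl⟩
    exact ⟨⟨j, hj⟩, rfl⟩
  refine ⟨⟨Equiv.ofBijective f ⟨hinj, hsurj⟩, ?_⟩⟩
  intro a b
  show S.Adj (v a.val) (v b.val) ↔ (cycleGraph i).Adj a b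
  constructor
  · rintro ⟨j, hj, ⟨h1, h2⟩ | ⟨h1, h2⟩⟩
    · have ha := hv1 a.val j a.isLt hj h1
      have hb := hv1 b.val ((j + 1) % i) b.isLt (succmod_lt _ (by omega)) h2
      rw [← Fin.eta a a.isLt, ← Fin.eta b b.isLt, cycleGraph_adj_nat hi]
      left; rw [hb, ha]
    · have hb := hv1 b.val j b.isLt hj h1
      have ha := hv1 a.val ((j + 1) % i) a.isLt (succmod_lt _ (by omega)) h2
      rw [← Fin.eta a a.isLt, ← Fin.eta b b.isLt, cycleGraph_adj_nat hi]
      right; rw [ha, hb]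
  · intro hadj
    rw [← Fin.eta a a.isLt, ← Fin.eta b b.isLt, cycleGraph_adj_nat hi] at hadj
    rcases hadj with hb | ha
    · exact ⟨a.val, a.isLt, Or.inl ⟨rfl, by rw [hb]⟩⟩
    · exact ⟨b.val, b.isLt, Or.inr ⟨rfl, by rw [ha]⟩⟩

/-- The 3-element cliques (triangles) of `G`, as a finset of finsets. -/
noncomputable def triFinset (G : SimpleGraph (Fin n)) : Finset (Finset (Fin n)) := by
  classical exact (Finset.univ.powersetCard 3).filter (fun s => G.IsClique ↑s)

lemma mem_triFinset {G : SimpleGraph (Fin n)} {s : Finset (Fin n)} :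
    s ∈ triFinset G ↔ s.card = 3 ∧ G.IsClique ↑s := by
  classical
  simp [triFinset, Finset.mem_powersetCard, and_comm]

/-- The subgraph of `G` induced on the triangle `s`. -/
def triSub (G : SimpleGraph (Fin n)) (s : Finset (Fin n)) : G.Subgraph where
  verts := ↑s
  Adj a b := G.Adj a b ∧ a ∈ s ∧ b ∈ s
  adj_sub h := h.1
  edge_vert h := h.2.1
  symm := ⟨fun a b h => ⟨h.1.symm, h.2.2, h.2.1⟩⟩

lemma isCopy_triSub {G : SimpleGraph (Fin n)} {s : Finset (Fin n)} (hs : s ∈ triFinset G) :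
    IsCopyOf (cycleGraph 3) (triSub G s) := by
  rw [mem_triFinset] at hs
  obtain ⟨hcard, hclique⟩ := hs
  let e : Fin 3 ≃ {x // x ∈ s} := (s.equivFinOfCardEq hcard).symm
  let f : Fin 3 → (triSub G s).verts := fun a => ⟨(e a).val, (e a).prop⟩
  have hinj : Function.Injective f := by
    intro a b hab
    exact e.injective (Subtype.ext (congrArg Subtype.val hab))
  have hsurj : Function.Surjective f := by
    rintro ⟨x, hx⟩
    exact ⟨e.symm ⟨x, hx⟩, by simp [f, e]⟩
  refine ⟨⟨Equiv.ofBijective f ⟨hinj, hsurj⟩, ?_⟩⟩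
  intro a b
  show (triSub G s).Adj (e a).val (e b).val ↔ (cycleGraph 3).Adj a b
  rw [cycleGraph_three_eq_top]
  constructor
  · intro h
    intro hab
    exact h.1.ne (by rw [hab])
  · intro hab
    have hne : (e a).val ≠ (e b).val := fun hh =>
      (SimpleGraph.top_adj a b).mp hab (e.injective (Subtype.ext hh))
    exact ⟨hclique (e a).prop (e b).prop hne, (e a).prop, (e b).prop⟩

lemma copy_eq_triSub {G : SimpleGraph (Fin n)} {G' : G.Subgraph}
    (h : IsCopyOf (cycleGraph 3) G') :
    ∃ s ∈ triFinset G, G' = triSub G s := by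
  classical
  obtain ⟨φ⟩ := h
  let s : Finset (Fin n) := Finset.univ.image (fun x : Fin 3 => (φ x).val)
  have hvert : ∀ x : Fin 3, (φ x).val ∈ G'.verts := fun x => (φ x).prop
  have hverts : G'.verts = ↑s := by
    ext u
    constructor
    · intro hu
      have : (φ (φ.symm ⟨u, hu⟩)).val = u := by rw [φ.apply_symm_apply]
      simp only [s, Finset.coe_image, Finset.coe_univ, Set.image_univ, Set.mem_range]
      exact ⟨φ.symm ⟨u, hu⟩, this⟩
    · intro hu
      simp only [s, Finset.coe_image, Finset.coe_univ, Set.image_univ, Set.mem_range] at hu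
      obtain ⟨x, rfl⟩ := hu
      exact hvert x
  have hval_inj : Function.Injective (fun x : Fin 3 => (φ x).val) := by
    intro a b hab
    exact φ.toEquiv.injective (Subtype.ext hab)
  have hmem_iff : ∀ u, u ∈ s ↔ ∃ x : Fin 3, (φ x).val = u := by
    intro u; simp [s]
  have hadj : ∀ a b : Fin 3, a ≠ b → G'.Adj (φ a).val (φ b).val := by
    intro a b hab
    have : (cycleGraph 3).Adj a b := by rw [cycleGraph_three_eq_top]; exact hab
    exact φ.map_rel_iff.mpr this
  have hcard : s.card = 3 := by
    rw [Finset.card_image_of_injective _ hval_inj, Finset.card_univ, Fintype.card_fin]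
  have hclique : G.IsClique ↑s := by
    intro a ha b hb hab
    rw [Finset.mem_coe, hmem_iff] at ha hb
    obtain ⟨x, rfl⟩ := ha
    obtain ⟨y, rfl⟩ := hb
    exact G'.adj_sub (hadj x y (fun hxy => hab (by rw [hxy])))
  refine ⟨s, mem_triFinset.mpr ⟨hcard, hclique⟩, ?_⟩
  apply SimpleGraph.Subgraph.ext
  · exact hverts
  · ext a b
    show G'.Adj a b ↔ G.Adj a b ∧ a ∈ s ∧ b ∈ s
    constructor
    · intro h
      refine ⟨G'.adj_sub h, ?_, ?_⟩
      · rw [← Finset.mem_coe, ← hverts]; exact G'.edge_vert h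
      · rw [← Finset.mem_coe, ← hverts]; exact G'.edge_vert h.symm
    · rintro ⟨hGab, ha, hb⟩
      rw [hmem_iff] at ha hb
      obtain ⟨x, rfl⟩ := ha
      obtain ⟨y, rfl⟩ := hb
      exact hadj x y (fun hxy => hGab.ne (by rw [hxy]))

lemma numCopies_eq_triFinset_card (G : SimpleGraph (Fin n)) :
    numCopies (cycleGraph 3) G = (triFinset G).card := by
  have hset : {G' : G.Subgraph | IsCopyOf (cycleGraph 3) G'} =
      (triSub G) '' ↑(triFinset G) := by
    ext G'
    constructor
    · intro h
      obtain ⟨s, hs, rfl⟩ := copy_eq_triSub h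
      exact ⟨s, hs, rfl⟩
    · rintro ⟨s, hs, rfl⟩
      exact isCopy_triSub hs
  rw [numCopies, hset, Set.ncard_image_of_injOn, Set.ncard_coe_finset]
  intro s _ t _ hst
  have := congrArg SimpleGraph.Subgraph.verts hst
  simpa [triSub, Finset.coe_inj] using this

lemma third_elt {s : Finset (Fin n)} (h3 : s.card = 3) {a b : Fin n}
    (ha : a ∈ s) (hb : b ∈ s) (hab : a ≠ b) :
    ∃ x, x ∈ s ∧ x ≠ a ∧ x ≠ b ∧ s = {a, b, x} := by
  classical
  have hsub : ({a, b} : Finset (Fin n)) ⊆ s := by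
    intro u hu
    simp only [Finset.mem_insert, Finset.mem_singleton] at hu
    rcases hu with rfl | rfl <;> assumption
  have hcard2 : ({a, b} : Finset (Fin n)).card = 2 := Finset.card_pair hab
  have hd : (s \ {a, b}).card = 1 := by
    rw [Finset.card_sdiff_of_subset hsub, hcard2, h3]
  obtain ⟨x, hx⟩ := Finset.card_eq_one.mp hd
  have hxs : x ∈ s \ {a, b} := hx ▸ Finset.mem_singleton_self x
  rw [Finset.mem_sdiff, Finset.mem_insert, Finset.mem_singleton] at hxs
  refine ⟨x, hxs.1, fun h => hxs.2 (Or.inl h), fun h => hxs.2 (Or.inr h), ?_⟩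
  have hsub2 : ({a, b, x} : Finset (Fin n)) ⊆ s := by
    intro u hu
    simp only [Finset.mem_insert, Finset.mem_singleton] at hu
    rcases hu with rfl | rfl | rfl <;> first | assumption | exact hxs.1
  have hc3 : ({a, b, x} : Finset (Fin n)).card = 3 := by
    rw [Finset.card_insert_of_notMem, Finset.card_insert_of_notMem, Finset.card_singleton]
    · simp only [Finset.mem_singleton]
      exact fun h => hxs.2 (Or.inr h.symm)
    · simp only [Finset.mem_insert, Finset.mem_singleton]
      rintro (rfl | h)
      · exact hab rfl
      · exact hxs.2 (Or.inl h.symm)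
  exact (Finset.eq_of_subset_of_card_le hsub2 (by omega)).symm

lemma hasCycle4 {G : SimpleGraph (Fin n)} {a b c d : Fin n}
    (hab : G.Adj a b) (hbc : G.Adj b c) (hcd : G.Adj c d) (hda : G.Adj d a)
    (hac : a ≠ c) (hbd : b ≠ d) : HasCycle 4 G := by
  have h1 := hab.ne
  have h2 := hbc.ne
  have h3 := hcd.ne
  have h4 := hda.ne
  refine ⟨fun j => if j = 0 then a else if j = 1 then b else if j = 2 then c else d, ?_, ?_⟩
  · intro j1 j2 hj1 hj2 heq
    interval_cases j1 <;> interval_cases j2 <;> simp_all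
  · intro j hj
    interval_cases j <;> simp only [] <;> norm_num
    exacts [hab, hbc, hcd, hda]

lemma hasCycle4_of_two_tris {G : SimpleGraph (Fin n)} {s t : Finset (Fin n)}
    (hs : s ∈ triFinset G) (ht : t ∈ triFinset G) (hst : s ≠ t) {a b : Fin n}
    (has : a ∈ s) (hat : a ∈ t) (hbs : b ∈ s) (hbt : b ∈ t) (hab : a ≠ b) :
    HasCycle 4 G := by
  rw [mem_triFinset] at hs ht
  obtain ⟨x, hxs, hxa, hxb, hseq⟩ := third_elt hs.1 has hbs hab
  obtain ⟨y, hyt, hya, hyb, hteq⟩ := third_elt ht.1 hat hbt hab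
  have hxy : x ≠ y := by
    rintro rfl
    exact hst (hseq.trans hteq.symm)
  exact hasCycle4 (hs.2 has hxs (Ne.symm hxa)) (hs.2 hxs hbs hxb)
    (ht.2 hbt hyt (Ne.symm hyb)) (ht.2 hyt hat hya) hab hxy

lemma direction2 {G : SimpleGraph (Fin n)} {k : ℕ} (hk : 4 ≤ k)
    (hfree : ∀ i, 4 ≤ i → i ≤ k → FreeOf (cycleGraph i) G) :
    ∀ i, 2 ≤ i → i ≤ k → ¬ HasBergeCycle i (triFinset G) := by
  have hnocyc : ∀ i, 4 ≤ i → i ≤ k → ¬ HasCycle i G := fun i h4 hik hcyc =>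
    copy_of_hasCycle (by omega) hcyc (fun G' h => hfree i h4 hik G' h)
  rintro i h2 hik ⟨v, e, hv1, he1, heH, hmem⟩
  by_cases h4 : 4 ≤ i
  · -- the vertices directly form a cycle in G
    refine hnocyc i h4 hik ⟨v, hv1, ?_⟩
    intro j hj
    have hT := mem_triFinset.mp (heH j hj)
    have hne : v j ≠ v ((j + 1) % i) := by
      intro h
      exact succmod_ne (by omega) hj (hv1 ((j + 1) % i) j (succmod_lt _ (by omega)) hj h.symm)
    exact hT.2 (hmem j hj).1 (hmem j hj).2 hne
  · interval_cases i
    · -- i = 2 : two triangles sharing two vertices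
      have hmem0 := hmem 0 (by omega)
      have hmem1 := hmem 1 (by omega)
      norm_num at hmem0 hmem1
      have he01 : e 0 ≠ e 1 := fun h => by simpa using he1 0 1 (by omega) (by omega) h
      have hv01 : v 0 ≠ v 1 := fun h => by simpa using hv1 0 1 (by omega) (by omega) h
      exact hnocyc 4 le_rfl hk (hasCycle4_of_two_tris (heH 0 (by omega)) (heH 1 (by omega))
        he01 hmem0.1 hmem1.2 hmem0.2 hmem1.1 hv01)
    · -- i = 3
      have hm0 := hmem 0 (by omega); have hm1 := hmem 1 (by omega); have hm2 := hmem 2 (by omega)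
      norm_num at hm0 hm1 hm2
      have hT0 := mem_triFinset.mp (heH 0 (by omega))
      have hT1 := mem_triFinset.mp (heH 1 (by omega))
      have hT2 := mem_triFinset.mp (heH 2 (by omega))
      have hv01 : v 0 ≠ v 1 := fun h => by simpa using hv1 0 1 (by omega) (by omega) h
      have hv12 : v 1 ≠ v 2 := fun h => by simpa using hv1 1 2 (by omega) (by omega) h
      have hv02 : v 0 ≠ v 2 := fun h => by simpa using hv1 0 2 (by omega) (by omega) h
      have he01 : e 0 ≠ e 1 := fun h => by simpa using he1 0 1 (by omega) (by omega) h
      obtain ⟨x, hxT0, hx0, hx1, -⟩ := third_elt hT0.1 hm0.1 hm0.2 hv01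
      by_cases hx2 : x = v 2
      · subst hx2
        exact hnocyc 4 le_rfl hk (hasCycle4_of_two_tris (heH 0 (by omega)) (heH 1 (by omega))
          he01 hm0.2 hm1.1 hxT0 hm1.2 hv12)
      · -- cycle v0, x, v1, v2
        exact hnocyc 4 le_rfl hk (hasCycle4 (hT0.2 hm0.1 hxT0 (Ne.symm hx0))
          (hT0.2 hxT0 hm0.2 hx1) (hT1.2 hm1.1 hm1.2 hv12) (hT2.2 hm2.1 hm2.2 (Ne.symm hv02))
          hv01 (fun h => hx2 h))

lemma succmod_inj {i a b : ℕ} (ha : a < i) (hb : b < i) (h : (a + 1) % i = (b + 1) % i) :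
    a = b := by
  rw [succmod ha, succmod hb] at h
  split_ifs at h <;> omega

lemma rotate_cycle {i p : ℕ} (hi : 0 < i) {v : ℕ → Fin n} {G : SimpleGraph (Fin n)}
    (hv1 : ∀ j1 j2, j1 < i → j2 < i → v j1 = v j2 → j1 = j2)
    (hv2 : ∀ j < i, G.Adj (v j) (v ((j + 1) % i))) :
    (∀ j1 j2, j1 < i → j2 < i → v ((j1 + p) % i) = v ((j2 + p) % i) → j1 = j2) ∧
    (∀ j < i, G.Adj (v ((j + p) % i)) (v (((j + 1) % i + p) % i))) := by
  constructor
  · intro j1 j2 h1 h2 heq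
    have := hv1 _ _ (Nat.mod_lt _ hi) (Nat.mod_lt _ hi) heq
    have hmod : j1 % i = j2 % i := Nat.ModEq.add_right_cancel' p this
    rwa [Nat.mod_eq_of_lt h1, Nat.mod_eq_of_lt h2] at hmod
  · intro j hj
    have h1 : ((j + 1) % i + p) % i = ((j + p) % i + 1) % i := by
      rw [Nat.mod_add_mod, Nat.mod_add_mod]
      ring_nf
    rw [h1]
    exact hv2 _ (Nat.mod_lt _ hi)

/-- The shadow graph of a 3-uniform hypergraph. -/
def shadowG (H : Finset (Finset (Fin n))) : SimpleGraph (Fin n) where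
  Adj a b := a ≠ b ∧ ∃ e ∈ H, a ∈ e ∧ b ∈ e
  symm := by refine ⟨?_⟩; rintro a b ⟨hne, e, he, ha, hb⟩; exact ⟨hne.symm, e, he, hb, ha⟩
  loopless := by refine ⟨?_⟩; rintro a ⟨hne, -⟩; exact hne rfl

lemma shadow_lin {H : Finset (Finset (Fin n))} (hB2 : ¬ HasBergeCycle 2 H) :
    ∀ e1 ∈ H, ∀ e2 ∈ H, ∀ a b : Fin n, a ≠ b →
      a ∈ e1 → b ∈ e1 → a ∈ e2 → b ∈ e2 → e1 = e2 := by
  intro e1 he1 e2 he2 a b hab ha1 hb1 ha2 hb2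
  by_contra hne
  apply hB2
  refine ⟨fun j => if j = 0 then a else b, fun j => if j = 0 then e1 else e2, ?_, ?_, ?_, ?_⟩
  · intro j1 j2 h1 h2 heq
    interval_cases j1 <;> interval_cases j2 <;> simp_all
  · intro j1 j2 h1 h2 heq
    interval_cases j1 <;> interval_cases j2 <;> simp_all
  · intro j hj
    interval_cases j <;> simp [he1, he2]
  · intro j hj
    interval_cases j <;> norm_num
    exacts [⟨ha1, hb1⟩, ⟨hb2, ha2⟩]

lemma shadow_tri {H : Finset (Finset (Fin n))} (huni : ∀ s ∈ H, s.card = 3)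
    (hB3 : ¬ HasBergeCycle 3 H) :
    ∀ a b c : Fin n, (shadowG H).Adj a b → (shadowG H).Adj b c → (shadowG H).Adj c a →
      ({a, b, c} : Finset (Fin n)) ∈ H := by
  intro a b c hab hbc hca
  by_contra habc
  obtain ⟨hne0, e0, he0, ha0, hb0⟩ := hab
  obtain ⟨hne1, e1, he1, hb1, hc1⟩ := hbc
  obtain ⟨hne2, e2, he2, hc2, ha2⟩ := hca
  have hfull : ∀ f ∈ H, a ∈ f → b ∈ f → c ∈ f → False := by
    intro f hf haf hbf hcf
    have hsub : ({a, b, c} : Finset (Fin n)) ⊆ f := by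
      intro u hu
      simp only [Finset.mem_insert, Finset.mem_singleton] at hu
      rcases hu with rfl | rfl | rfl <;> assumption
    have hc3 : ({a, b, c} : Finset (Fin n)).card = 3 := by
      rw [Finset.card_eq_three]
      exact ⟨a, b, c, hne0, fun h => hne2 h.symm, hne1, rfl⟩
    have : ({a, b, c} : Finset (Fin n)) = f :=
      Finset.eq_of_subset_of_card_le hsub (by rw [huni f hf, hc3])
    exact habc (this ▸ hf)
  have hd01 : e0 ≠ e1 := fun h => hfull e0 he0 ha0 hb0 (h ▸ hc1)
  have hd12 : e1 ≠ e2 := fun h => hfull e1 he1 (h ▸ ha2) hb1 hc1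
  have hd02 : e0 ≠ e2 := fun h => hfull e0 he0 ha0 hb0 (h ▸ hc2)
  apply hB3
  refine ⟨fun j => if j = 0 then a else if j = 1 then b else c,
    fun j => if j = 0 then e0 else if j = 1 then e1 else e2, ?_, ?_, ?_, ?_⟩
  · intro j1 j2 h1 h2 heq
    interval_cases j1 <;> interval_cases j2 <;> simp_all
  · intro j1 j2 h1 h2 heq
    interval_cases j1 <;> interval_cases j2 <;> simp_all
  · intro j hj
    interval_cases j <;> simp [he0, he1, he2]
  · intro j hj
    interval_cases j <;> norm_num
    exacts [⟨ha0, hb0⟩, ⟨hb1, hc1⟩, ⟨hc2, ha2⟩]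

lemma shadow_triFinset {H : Finset (Finset (Fin n))} (huni : ∀ s ∈ H, s.card = 3)
    (hB3 : ¬ HasBergeCycle 3 H) : triFinset (shadowG H) = H := by
  ext s
  rw [mem_triFinset]
  constructor
  · rintro ⟨hcard, hclique⟩
    obtain ⟨a, b, c, hab, hac, hbc, rfl⟩ := Finset.card_eq_three.mp hcard
    have ha : a ∈ ({a, b, c} : Finset (Fin n)) := by simp
    have hb : b ∈ ({a, b, c} : Finset (Fin n)) := by simp
    have hc : c ∈ ({a, b, c} : Finset (Fin n)) := by simp
    exact shadow_tri huni hB3 a b c (hclique ha hb hab) (hclique hb hc hbc)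
      (hclique hc ha (Ne.symm hac))
  · intro hs
    refine ⟨huni s hs, ?_⟩
    intro a ha b hb hab
    exact ⟨hab, s, hs, ha, hb⟩

lemma shadow_nocycle {H : Finset (Finset (Fin n))} {k : ℕ} (hk : 4 ≤ k)
    (huni : ∀ s ∈ H, s.card = 3)
    (hB : ∀ i, 2 ≤ i → i ≤ k → ¬ HasBergeCycle i H) :
    ∀ i, 4 ≤ i → i ≤ k → ¬ HasCycle i (shadowG H) := by
  have hlin := shadow_lin (hB 2 le_rfl (by omega))
  intro i
  induction i using Nat.strong_induction_on with
  | _ i IH =>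
  intro h4 hik hcyc
  obtain ⟨v, hv1, hv2⟩ := hcyc
  have hi2 : 2 ≤ i := by omega
  have hi0 : 0 < i := by omega
  have hex : ∀ j, ∃ f, j < i → f ∈ H ∧ v j ∈ f ∧ v ((j + 1) % i) ∈ f := by
    intro j
    by_cases hj : j < i
    · obtain ⟨-, f, hf, hmf⟩ := hv2 j hj
      exact ⟨f, fun _ => ⟨hf, hmf.1, hmf.2⟩⟩
    · exact ⟨∅, fun h => absurd h hj⟩
  choose E hE using hex
  by_cases hdist : ∀ j1 j2, j1 < i → j2 < i → E j1 = E j2 → j1 = j2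
  · exact hB i hi2 hik ⟨v, E, hv1, hdist, fun j hj => (hE j hj).1,
      fun j hj => ⟨(hE j hj).2.1, (hE j hj).2.2⟩⟩
  push_neg at hdist
  obtain ⟨j1, j2, hj1, hj2, hEeq, hjne⟩ := hdist
  have hcons : (j1 + 1) % i = j2 ∨ (j2 + 1) % i = j1 := by
    by_contra hcc
    push_neg at hcc
    set a1 := (j1 + 1) % i with ha1
    set a2 := (j2 + 1) % i with ha2
    have ha1i : a1 < i := Nat.mod_lt _ hi0
    have ha2i : a2 < i := Nat.mod_lt _ hi0
    have d1 : a1 ≠ j1 := succmod_ne hi2 hj1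
    have d2 : a2 ≠ j2 := succmod_ne hi2 hj2
    have d3 : a1 ≠ a2 := fun h => hjne (succmod_inj hj1 hj2 h)
    have hT4 : ({j1, a1, j2, a2} : Finset ℕ).card = 4 := by
      rw [Finset.card_insert_of_notMem (by simp; omega),
        Finset.card_insert_of_notMem (by simp; omega),
        Finset.card_insert_of_notMem (by simp; omega), Finset.card_singleton]
    have hmaps : ∀ j ∈ ({j1, a1, j2, a2} : Finset ℕ), v j ∈ E j1 := by
      intro j hj
      simp only [Finset.mem_insert, Finset.mem_singleton] at hj
      rcases hj with rfl | rfl | rfl | rfl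
      · exact (hE j hj1).2.1
      · exact (hE j1 hj1).2.2
      · exact hEeq ▸ (hE j hj2).2.1
      · exact hEeq ▸ (hE j2 hj2).2.2
    have hcard3 : (E j1).card = 3 := huni _ (hE j1 hj1).1
    obtain ⟨x, hx, y, hy, hxy, hvxy⟩ :=
      Finset.exists_ne_map_eq_of_card_lt_of_maps_to (by omega) hmaps
    have hxi : x < i := by
      simp only [Finset.mem_insert, Finset.mem_singleton] at hx
      rcases hx with rfl | rfl | rfl | rfl <;> assumption
    have hyi : y < i := by
      simp only [Finset.mem_insert, Finset.mem_singleton] at hy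
      rcases hy with rfl | rfl | rfl | rfl <;> assumption
    exact hxy (hv1 x y hxi hyi hvxy)
  obtain ⟨p, q, hp, hq, hpq, hEpq⟩ :
      ∃ p q, p < i ∧ q < i ∧ (p + 1) % i = q ∧ E p = E q := by
    rcases hcons with h | h
    · exact ⟨j1, j2, hj1, hj2, h, hEeq⟩
    · exact ⟨j2, j1, hj2, hj1, h, hEeq.symm⟩
  set w : ℕ → Fin n := fun j => v ((j + p) % i) with hwdef
  obtain ⟨hw1, hw2⟩ := rotate_cycle (p := p) hi0 hv1 hv2
  set r := (q + 1) % i with hr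
  have hri : r < i := Nat.mod_lt _ hi0
  have hidx : p ≠ q ∧ q ≠ r ∧ p ≠ r := by
    have h1 := succmod hp
    have h2 := succmod hq
    rw [hpq] at h1
    rw [← hr] at h2
    split_ifs at h1 h2 <;> omega
  have hw0 : w 0 = v p := by simp only [hwdef, Nat.zero_add, Nat.mod_eq_of_lt hp]
  have hwq : w 1 = v q := by
    simp only [hwdef]
    rw [Nat.add_comm 1 p, hpq]
  have hwr : w 2 = v r := by
    simp only [hwdef, hr, ← hpq, Nat.mod_add_mod]
    congr 1
    ring_nf
  set f := E p with hf
  have hfH : f ∈ H := (hE p hp).1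
  have hf0 : w 0 ∈ f := hw0 ▸ (hE p hp).2.1
  have hf1 : w 1 ∈ f := by rw [hwq, ← hpq]; exact (hE p hp).2.2
  have hf2 : w 2 ∈ f := by rw [hwr, hr]; exact hEpq ▸ (hE q hq).2.2
  have hne01 : w 0 ≠ w 1 := fun h => hidx.1 (by
    rw [hw0, hwq] at h; exact hv1 p q hp hq h)
  have hne12 : w 1 ≠ w 2 := fun h => hidx.2.1 (by
    rw [hwq, hwr] at h; exact hv1 q r hq hri h)
  have hne02 : w 0 ≠ w 2 := fun h => hidx.2.2 (by
    rw [hw0, hwr] at h; exact hv1 p r hp hri h)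
  have hadj02 : (shadowG H).Adj (w 0) (w 2) := ⟨hne02, f, hfH, hf0, hf2⟩
  by_cases hi5 : 5 ≤ i
  · -- shorten the cycle
    apply IH (i - 1) (by omega) (by omega) (by omega)
    refine ⟨fun j => if j = 0 then w 0 else w (j + 1), ?_, ?_⟩
    · intro a b ha hb heq
      simp only at heq
      split_ifs at heq with h1 h2 h2
      · omega
      · exact absurd (hw1 0 (b + 1) hi0 (by omega) heq) (by omega)
      · exact absurd (hw1 (a + 1) 0 (by omega) hi0 heq) (by omega)
      · have := hw1 (a + 1) (b + 1) (by omega) (by omega) heq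
        omega
    · intro j hj
      rcases Nat.lt_or_ge j 1 with hj0 | hj0
      · have hj' : j = 0 := by omega
        subst hj'
        have h1 : (0 + 1) % (i - 1) = 1 := Nat.mod_eq_of_lt (by omega)
        rw [h1]
        simpa using hadj02
      · rcases Nat.lt_or_ge j (i - 2) with hjm | hjm
        · have h1 : (j + 1) % (i - 1) = j + 1 := Nat.mod_eq_of_lt (by omega)
          rw [h1]
          simp only [if_neg (by omega : ¬ j = 0), if_neg (by omega : ¬ j + 1 = 0)]
          have := hw2 (j + 1) (by omega)
          rwa [Nat.mod_eq_of_lt (by omega : j + 1 + 1 < i)] at this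
        · have hj' : j = i - 2 := by omega
          subst hj'
          have h1 : (i - 2 + 1) % (i - 1) = 0 := by
            rw [(by omega : i - 2 + 1 = i - 1), Nat.mod_self]
          rw [h1]
          have hne : ¬ (i - 2 = 0) := by omega
          simp only [hne, ite_false, ite_true, if_true, if_false, reduceIte,
            (by omega : i - 2 + 1 = i - 1)]
          have := hw2 (i - 1) (by omega)
          rw [(by omega : i - 1 + 1 = i), Nat.mod_self] at this
          exact this
  · -- i = 4 : use the triangle w0 w2 w3 and linearity
    have hi4 : i = 4 := by omega
    subst hi4
    have hadj23 : (shadowG H).Adj (w 2) (w 3) := hw2 2 (by omega)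
    have hadj30 : (shadowG H).Adj (w 3) (w 0) := hw2 3 (by omega)
    have ht : ({w 0, w 2, w 3} : Finset (Fin n)) ∈ H :=
      shadow_tri huni (hB 3 (by omega) (by omega)) _ _ _ hadj02 hadj23 hadj30
    have hw13 : w 1 ≠ w 3 := fun h => by
      have := hw1 1 3 (by omega) (by omega) h
      omega
    have hfne : f ≠ ({w 0, w 2, w 3} : Finset (Fin n)) := by
      intro h
      have : w 1 ∈ ({w 0, w 2, w 3} : Finset (Fin n)) := h ▸ hf1
      simp only [Finset.mem_insert, Finset.mem_singleton] at this
      rcases this with h' | h' | h'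
      · exact hne01 h'.symm
      · exact hne12 h'
      · exact hw13 h'
    exact hfne (hlin f hfH _ ht (w 0) (w 2) hne02 hf0 hf2 (by simp) (by simp))

theorem stmt14 (n k : ℕ) (hk : 4 ≤ k) :
    sSup {m | ∃ H : Finset (Finset (Fin n)), (∀ s ∈ H, s.card = 3) ∧
        (∀ i, 2 ≤ i → i ≤ k → ¬ HasBergeCycle i H) ∧ H.card = m} =
      sSup {m | ∃ G : SimpleGraph (Fin n),
        (∀ i, 4 ≤ i → i ≤ k → FreeOf (cycleGraph i) G) ∧
        numCopies (cycleGraph 3) G = m} := by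
  congr 1
  ext m
  simp only [Set.mem_setOf_eq]
  constructor
  · rintro ⟨H, huni, hB, hcard⟩
    refine ⟨shadowG H, ?_, ?_⟩
    · intro i h4 hik G' hcopy
      exact shadow_nocycle hk huni hB i h4 hik (hasCycle_of_copy (by omega) G' hcopy)
    · rw [numCopies_eq_triFinset_card, shadow_triFinset huni (hB 3 (by omega) (by omega)), hcard]
  · rintro ⟨G, hfree, hnum⟩
    exact ⟨triFinset G, fun s hs => (mem_triFinset.mp hs).1, direction2 hk hfree,
      by rw [← numCopies_eq_triFinset_card]; exact hnum⟩
end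

section
/- If a forest F is a subgraph of both R_k^r(2,0,k-2,0) and R_k^r(3,0,k-3,0) for k > 5, then every connected component of F contains at most one vertex of degree greater than 2. -/
open SimpleGraph

/-- Vertex labels used to build the graph `R_k^r(a,b,c,d)` (with `d = k - a - b - c`).
Position `m : Fin k` runs around the cycle: `u` at `0`, the interior of the first banana
at positions `1, …, a-1`, `v` at `a`, the `v`–`u'` connecting path at `a+1, …, a+b-1`,
`u'` at `a+b`, the interior of the second banana at `a+b+1, …, a+b+c-1`, `v'` at
`a+b+c`, and the `v'`–`u` connecting path afterwards. Interior vertices of the first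
(resp. second) banana carry the index `p` (resp. `q`) of the internal path. -/
def RVert (k r : ℕ) : Type := Fin k ⊕ (Fin k × Fin r) ⊕ (Fin k × Fin r)

/-- The vertex of `R_k^r(a,b,c,d)` at position `m` on the internal paths `p` and `q`. -/
def rLab (k r a b c : ℕ) (m : Fin k) (p q : Fin r) : RVert k r :=
  if 1 ≤ m.val ∧ m.val < a then Sum.inr (Sum.inl (m, p))
  else if a + b + 1 ≤ m.val ∧ m.val < a + b + c then Sum.inr (Sum.inr (m, q))
  else Sum.inl m

/-- The labels that actually denote vertices of `R_k^r(a,b,c,d)`. -/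
def rValid (k r a b c : ℕ) : Set (RVert k r) :=
  {x | match x with
    | Sum.inl m => ¬(1 ≤ m.val ∧ m.val < a) ∧ ¬(a + b + 1 ≤ m.val ∧ m.val < a + b + c)
    | Sum.inr (Sum.inl (m, _)) => 1 ≤ m.val ∧ m.val < a
    | Sum.inr (Sum.inr (m, _)) => a + b + 1 ≤ m.val ∧ m.val < a + b + c}

/-- The graph `R_k^r(a,b,c,d)` (with `d = k - a - b - c`), together with some
isolated invalid labels which are removed by `RGraph` below: two banana graphs
`B_a^r` (main vertices `u`, `v`) and `B_c^r` (main vertices `u'`, `v'`) joined by a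
`v`–`u'` path of length `b` and a `v'`–`u` path of length `d`. -/
def RGraphFull (k r a b c : ℕ) : SimpleGraph (RVert k r) :=
  SimpleGraph.fromRel (fun x y => ∃ (p q : Fin r) (m : Fin k),
    x = rLab k r a b c m p q ∧ y = rLab k r a b c ⟨(m.val + 1) % k, Nat.mod_lt _ m.pos⟩ p q)

/-- The graph `R_k^r(a,b,c,d)` where `d = k - a - b - c`. -/
def RGraph (k r a b c : ℕ) : SimpleGraph (rValid k r a b c) :=
  (RGraphFull k r a b c).induce (rValid k r a b c)

lemma rLab_eq (k r a : ℕ) (hak : a ≤ k) (m : Fin k) (p q : Fin r) :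
    rLab k r a 0 (k - a) m p q =
      if 1 ≤ m.1 ∧ m.1 < a then Sum.inr (Sum.inl (m, p))
      else if a + 1 ≤ m.1 then Sum.inr (Sum.inr (m, q))
      else Sum.inl m := by
  have hc : (a + 0 + 1 ≤ m.1 ∧ m.1 < a + 0 + (k - a)) ↔ a + 1 ≤ m.1 := by
    have := m.isLt; omega
  unfold rLab
  simp only [hc]
  rfl

lemma hub_congr {k r : ℕ} {x y : Fin k} (h : x.1 = y.1) :
    (Sum.inl x : RVert k r) = Sum.inl y := by
  have : x = y := Fin.ext h
  rw [this]

lemma int1_congr {k r : ℕ} {x y : Fin k} (p : Fin r) (h : x.1 = y.1) :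
    (Sum.inr (Sum.inl (x, p)) : RVert k r) = Sum.inr (Sum.inl (y, p)) := by
  have : x = y := Fin.ext h
  rw [this]

lemma int2_congr {k r : ℕ} {x y : Fin k} (q : Fin r) (h : x.1 = y.1) :
    (Sum.inr (Sum.inr (x, q)) : RVert k r) = Sum.inr (Sum.inr (y, q)) := by
  have : x = y := Fin.ext h
  rw [this]

lemma adj_int1 {k r a : ℕ} (ha : 2 ≤ a) (hak : a + 2 ≤ k) {m : Fin k} {p : Fin r}
    {y : RVert k r}
    (h : (RGraphFull k r a 0 (k - a)).Adj (Sum.inr (Sum.inl (m, p))) y) :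
    1 ≤ m.1 ∧ m.1 < a ∧
      ((m.1 + 1 = a ∧ y = Sum.inl (⟨a, by omega⟩ : Fin k)) ∨
       (∃ _h : m.1 + 1 < a, y = Sum.inr (Sum.inl (⟨m.1 + 1, by omega⟩, p))) ∨
       (m.1 = 1 ∧ y = Sum.inl (⟨0, by omega⟩ : Fin k)) ∨
       (2 ≤ m.1 ∧ y = Sum.inr (Sum.inl (⟨m.1 - 1, by have := m.isLt; omega⟩, p)))) := by
  erw [RGraphFull, fromRel_adj] at h
  obtain ⟨hne, h | h⟩ := h
  · obtain ⟨p', q', m', h1, h2⟩ := h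
    rw [rLab_eq _ _ _ (by omega)] at h1
    split_ifs at h1 with c1 c2
    · erw [Sum.inr.injEq, Sum.inl.injEq, Prod.mk.injEq] at h1
      obtain ⟨hm', hp'⟩ := h1
      subst hm'; subst hp'
      rw [rLab_eq _ _ _ (by omega)] at h2
      have hmod : (m.1 + 1) % k = m.1 + 1 := Nat.mod_eq_of_lt (by omega)
      refine ⟨c1.1, c1.2, ?_⟩
      split_ifs at h2 with d1 d2
      · have d1' : 1 ≤ (m.1 + 1) % k ∧ (m.1 + 1) % k < a := d1
        rw [hmod] at d1'
        refine Or.inr (Or.inl ⟨d1'.2, ?_⟩)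
        rw [h2]
        exact int1_congr p hmod
      · have d2' : a + 1 ≤ (m.1 + 1) % k := d2
        rw [hmod] at d2'
        exfalso
        have e1 := c1.1
        have e2 := c1.2
        omega
      · have d1' : ¬(1 ≤ (m.1 + 1) % k ∧ (m.1 + 1) % k < a) := d1
        have d2' : ¬(a + 1 ≤ (m.1 + 1) % k) := d2
        rw [hmod] at d1' d2'
        refine Or.inl ⟨by omega, ?_⟩
        rw [h2]
        exact hub_congr (show (m.1 + 1) % k = a by omega)
    · cases h1
  · obtain ⟨p', q', m', h1, h2⟩ := h
    rw [rLab_eq _ _ _ (by omega)] at h2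
    split_ifs at h2 with c1 c2
    · erw [Sum.inr.injEq, Sum.inl.injEq, Prod.mk.injEq] at h2
      obtain ⟨hm', hp'⟩ := h2
      subst hp'
      have hval : m.1 = (m'.1 + 1) % k := congrArg Fin.val hm'
      have c1' : 1 ≤ (m'.1 + 1) % k ∧ (m'.1 + 1) % k < a := c1
      rw [← hval] at c1'
      have hstep : m'.1 + 1 = m.1 := by
        rcases Nat.lt_or_ge (m'.1 + 1) k with hlt' | hge
        · rw [Nat.mod_eq_of_lt hlt'] at hval; omega
        · have hk' := m'.isLt
          have he : m'.1 + 1 = k := by omega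
          rw [he, Nat.mod_self] at hval; omega
      refine ⟨c1'.1, c1'.2, ?_⟩
      rw [rLab_eq _ _ _ (by omega)] at h1
      split_ifs at h1 with d1 d2
      · refine Or.inr (Or.inr (Or.inr ⟨by omega, ?_⟩))
        rw [h1]
        exact int1_congr p (show m'.1 = m.1 - 1 by omega)
      · omega
      · have hm1 : m.1 = 1 := by omega
        refine Or.inr (Or.inr (Or.inl ⟨hm1, ?_⟩))
        rw [h1]
        exact hub_congr (show m'.1 = 0 by omega)
    · cases h2

lemma adj_int2 {k r a : ℕ} (ha : 2 ≤ a) (hak : a + 2 ≤ k) {m : Fin k} {q : Fin r}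
    {y : RVert k r}
    (h : (RGraphFull k r a 0 (k - a)).Adj (Sum.inr (Sum.inr (m, q))) y) :
    a + 1 ≤ m.1 ∧
      ((m.1 = a + 1 ∧ y = Sum.inl (⟨a, by omega⟩ : Fin k)) ∨
       (∃ _h : a + 1 < m.1, y = Sum.inr (Sum.inr (⟨m.1 - 1, by have := m.isLt; omega⟩, q))) ∨
       (m.1 = k - 1 ∧ y = Sum.inl (⟨0, by omega⟩ : Fin k)) ∨
       (∃ _h : m.1 < k - 1, y = Sum.inr (Sum.inr (⟨m.1 + 1, by omega⟩, q)))) := by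
  erw [RGraphFull, fromRel_adj] at h
  obtain ⟨hne, h | h⟩ := h
  · obtain ⟨p', q', m', h1, h2⟩ := h
    rw [rLab_eq _ _ _ (by omega)] at h1
    split_ifs at h1 with c1 c2
    · cases h1
    · erw [Sum.inr.injEq, Sum.inr.injEq, Prod.mk.injEq] at h1
      obtain ⟨hm', hq'⟩ := h1
      subst hm'; subst hq'
      have hmk := m.isLt
      rw [rLab_eq _ _ _ (by omega)] at h2
      refine ⟨c2, ?_⟩
      split_ifs at h2 with d1 d2
      · exfalso
        have d1' : 1 ≤ (m.1 + 1) % k ∧ (m.1 + 1) % k < a := d1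
        rcases Nat.lt_or_ge (m.1 + 1) k with hlt' | hge
        · rw [Nat.mod_eq_of_lt hlt'] at d1'; omega
        · have he : m.1 + 1 = k := by omega
          rw [he, Nat.mod_self] at d1'; omega
      · have d2' : a + 1 ≤ (m.1 + 1) % k := d2
        have hlt' : m.1 + 1 < k := by
          rcases Nat.lt_or_ge (m.1 + 1) k with h' | h'
          · exact h'
          · exfalso
            have he : m.1 + 1 = k := by omega
            rw [he, Nat.mod_self] at d2'; omega
        have hmod : (m.1 + 1) % k = m.1 + 1 := Nat.mod_eq_of_lt hlt'
        refine Or.inr (Or.inr (Or.inr ⟨by omega, ?_⟩))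
        rw [h2]
        exact int2_congr q hmod
      · have d1' : ¬(1 ≤ (m.1 + 1) % k ∧ (m.1 + 1) % k < a) := d1
        have d2' : ¬(a + 1 ≤ (m.1 + 1) % k) := d2
        have he : m.1 + 1 = k := by
          rcases Nat.lt_or_ge (m.1 + 1) k with h' | h'
          · exfalso; rw [Nat.mod_eq_of_lt h'] at d1' d2'; omega
          · omega
        refine Or.inr (Or.inr (Or.inl ⟨by omega, ?_⟩))
        rw [h2]
        exact hub_congr (show (m.1 + 1) % k = 0 by rw [he, Nat.mod_self])
  · obtain ⟨p', q', m', h1, h2⟩ := h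
    rw [rLab_eq _ _ _ (by omega)] at h2
    split_ifs at h2 with c1 c2
    · cases h2
    · erw [Sum.inr.injEq, Sum.inr.injEq, Prod.mk.injEq] at h2
      obtain ⟨hm', hq'⟩ := h2
      subst hq'
      have hval : m.1 = (m'.1 + 1) % k := congrArg Fin.val hm'
      have c2' : a + 1 ≤ (m'.1 + 1) % k := c2
      rw [← hval] at c2'
      have hstep : m'.1 + 1 = m.1 := by
        rcases Nat.lt_or_ge (m'.1 + 1) k with hlt' | hge
        · rw [Nat.mod_eq_of_lt hlt'] at hval; omega
        · have hk' := m'.isLt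
          have he : m'.1 + 1 = k := by omega
          rw [he, Nat.mod_self] at hval; omega
      refine ⟨c2', ?_⟩
      rw [rLab_eq _ _ _ (by omega)] at h1
      split_ifs at h1 with d1 d2
      · omega
      · refine Or.inr (Or.inl ⟨by omega, ?_⟩)
        rw [h1]
        exact int2_congr q (show m'.1 = m.1 - 1 by omega)
      · have d1' : ¬(1 ≤ m'.1 ∧ m'.1 < a) := d1
        have d2' : ¬(a + 1 ≤ m'.1) := d2
        refine Or.inl ⟨by omega, ?_⟩
        rw [h1]
        exact hub_congr (show m'.1 = a by omega)

lemma adj_hub0 {k r a : ℕ} (ha : 2 ≤ a) (hak : a + 2 ≤ k) {y : RVert k r}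
    (h : (RGraphFull k r a 0 (k - a)).Adj (Sum.inl (⟨0, by omega⟩ : Fin k)) y) :
    (∃ p : Fin r, y = Sum.inr (Sum.inl (⟨1, by omega⟩, p))) ∨
    (∃ q : Fin r, y = Sum.inr (Sum.inr (⟨k - 1, by omega⟩, q))) := by
  erw [RGraphFull, fromRel_adj] at h
  obtain ⟨hne, h | h⟩ := h
  · obtain ⟨p', q', m', h1, h2⟩ := h
    rw [rLab_eq _ _ _ (by omega)] at h1
    split_ifs at h1 with c1 c2
    erw [Sum.inl.injEq] at h1
    have hm0 : m'.1 = 0 := by rw [← h1]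
    rw [rLab_eq _ _ _ (by omega)] at h2
    have hmod : (m'.1 + 1) % k = 1 := by rw [hm0]; exact Nat.mod_eq_of_lt (by omega)
    split_ifs at h2 with d1 d2
    · refine Or.inl ⟨p', ?_⟩
      rw [h2]
      exact int1_congr p' hmod
    · exfalso
      have d2' : a + 1 ≤ (m'.1 + 1) % k := d2
      omega
    · exfalso
      have d1' : ¬(1 ≤ (m'.1 + 1) % k ∧ (m'.1 + 1) % k < a) := d1
      omega
  · obtain ⟨p', q', m', h1, h2⟩ := h
    rw [rLab_eq _ _ _ (by omega)] at h2
    split_ifs at h2 with c1 c2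
    erw [Sum.inl.injEq] at h2
    have hm0 : (m'.1 + 1) % k = 0 := by
      have := congrArg Fin.val h2; simpa using this.symm
    have hm' : m'.1 = k - 1 := by
      have hk' := m'.isLt
      rcases Nat.lt_or_ge (m'.1 + 1) k with h' | h'
      · rw [Nat.mod_eq_of_lt h'] at hm0; omega
      · omega
    rw [rLab_eq _ _ _ (by omega)] at h1
    split_ifs at h1 with d1 d2
    · exfalso; have d1' : 1 ≤ m'.1 ∧ m'.1 < a := d1; omega
    · refine Or.inr ⟨q', ?_⟩
      rw [h1]
      exact int2_congr q' hm'
    · exfalso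
      have d2' : ¬(a + 1 ≤ m'.1) := d2
      omega

lemma chain1 {k r a : ℕ} (ha : 2 ≤ a) (hak : a + 2 ≤ k) :
    ∀ (n : ℕ) (m : Fin k) (p : Fin r)
      (W : (RGraphFull k r a 0 (k - a)).Walk (Sum.inr (Sum.inl (m, p)))
        (Sum.inl (⟨a, by omega⟩ : Fin k))),
      W.IsPath → m.1 + n = a → 1 ≤ m.1 →
      (Sum.inl (⟨0, by omega⟩ : Fin k)) ∉ W.support →
      (∀ _h2 : 2 ≤ m.1,
        Sum.inr (Sum.inl ((⟨m.1 - 1, by have := m.isLt; omega⟩ : Fin k), p)) ∉ W.support) →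
      W.length = n := by
  intro n
  induction n with
  | zero =>
    intro m p W hpath hn h1 h0 hprev
    cases W with
    | cons h W' =>
      obtain ⟨hm1, hma, hc⟩ := adj_int1 ha hak h
      omega
  | succ n ih =>
    intro m p W hpath hn h1 h0 hprev
    cases W with
    | cons h W' =>
      rename_i y
      obtain ⟨hm1, hma, hc⟩ := adj_int1 ha hak h
      erw [SimpleGraph.Walk.cons_isPath_iff] at hpath
      obtain ⟨hW', hstart⟩ := hpath
      erw [SimpleGraph.Walk.support_cons] at h0
      have h0' : (Sum.inl (⟨0, by omega⟩ : Fin k) : RVert k r) ∉ W'.support := by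
        intro hmem; exact h0 (List.mem_cons_of_mem _ hmem)
      rcases hc with ⟨hma', hy⟩ | ⟨hlt, hy⟩ | ⟨hm1', hy⟩ | ⟨hm2, hy⟩
      · subst hy
        have hn0 : n = 0 := by omega
        have hnil := (SimpleGraph.Walk.isPath_iff_eq_nil (p := W')).mp hW'
        erw [SimpleGraph.Walk.length_cons, hnil, SimpleGraph.Walk.length_nil, hn0]
      · subst hy
        have hlen : W'.length = n := by
          refine ih ⟨m.1 + 1, by omega⟩ p W' hW' (show m.1 + 1 + n = a by omega)
            (show 1 ≤ m.1 + 1 by omega) h0' ?_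
          intro _h2 hmem
          have hfin : (⟨(⟨m.1 + 1, by omega⟩ : Fin k).1 - 1, by omega⟩ : Fin k) = m :=
            Fin.ext (by simp)
          rw [hfin] at hmem
          exact hstart hmem
        exact congrArg (· + 1) hlen
      · exfalso
        apply h0
        right
        rw [← hy]
        exact W'.start_mem_support
      · exfalso
        apply hprev hm2
        erw [SimpleGraph.Walk.support_cons]
        right
        rw [← hy]
        exact W'.start_mem_support

lemma chain2 {k r a : ℕ} (ha : 2 ≤ a) (hak : a + 2 ≤ k) :
    ∀ (n : ℕ) (m : Fin k) (q : Fin r)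
      (W : (RGraphFull k r a 0 (k - a)).Walk (Sum.inr (Sum.inr (m, q)))
        (Sum.inl (⟨a, by omega⟩ : Fin k))),
      W.IsPath → m.1 = a + n →
      (Sum.inl (⟨0, by omega⟩ : Fin k)) ∉ W.support →
      (∀ _h2 : m.1 < k - 1,
        Sum.inr (Sum.inr ((⟨m.1 + 1, by omega⟩ : Fin k), q)) ∉ W.support) →
      W.length = n := by
  intro n
  induction n with
  | zero =>
    intro m q W hpath hn h0 hprev
    cases W with
    | cons h W' =>
      obtain ⟨hma, hc⟩ := adj_int2 ha hak h
      omega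
  | succ n ih =>
    intro m q W hpath hn h0 hprev
    cases W with
    | cons h W' =>
      rename_i y
      obtain ⟨hma, hc⟩ := adj_int2 ha hak h
      erw [SimpleGraph.Walk.cons_isPath_iff] at hpath
      obtain ⟨hW', hstart⟩ := hpath
      erw [SimpleGraph.Walk.support_cons] at h0
      have h0' : (Sum.inl (⟨0, by omega⟩ : Fin k) : RVert k r) ∉ W'.support := by
        intro hmem; exact h0 (List.mem_cons_of_mem _ hmem)
      rcases hc with ⟨hma', hy⟩ | ⟨hlt, hy⟩ | ⟨hm1', hy⟩ | ⟨hm2, hy⟩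
      · subst hy
        have hn0 : n = 0 := by omega
        have hnil := (SimpleGraph.Walk.isPath_iff_eq_nil (p := W')).mp hW'
        erw [SimpleGraph.Walk.length_cons, hnil, SimpleGraph.Walk.length_nil, hn0]
      · subst hy
        have hlen : W'.length = n := by
          refine ih ⟨m.1 - 1, by have := m.isLt; omega⟩ q W' hW'
            (show m.1 - 1 = a + n by omega) h0' ?_
          intro _h2 hmem
          have hfin : (⟨(⟨m.1 - 1, by have := m.isLt; omega⟩ : Fin k).1 + 1,
              by have := m.isLt; omega⟩ : Fin k) = m :=
            Fin.ext (by simp; omega)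
          rw [hfin] at hmem
          exact hstart hmem
        exact congrArg (· + 1) hlen
      · exfalso
        apply h0
        right
        rw [← hy]
        exact W'.start_mem_support
      · exfalso
        apply hprev hm2
        erw [SimpleGraph.Walk.support_cons]
        right
        rw [← hy]
        exact W'.start_mem_support

lemma path_len {k r a : ℕ} (ha : 2 ≤ a) (hak : a + 2 ≤ k)
    (W : (RGraphFull k r a 0 (k - a)).Walk (Sum.inl (⟨0, by omega⟩ : Fin k))
      (Sum.inl (⟨a, by omega⟩ : Fin k)))
    (hpath : W.IsPath) : W.length = a ∨ W.length = k - a := by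
  cases W with
  | nil => omega
  | cons h W' =>
    rename_i y
    erw [SimpleGraph.Walk.cons_isPath_iff] at hpath
    obtain ⟨hW', hstart⟩ := hpath
    obtain ⟨p, hy⟩ | ⟨q, hy⟩ := adj_hub0 ha hak h
    · subst hy
      left
      have hlen : W'.length = a - 1 := by
        refine chain1 ha hak (a - 1) ⟨1, by omega⟩ p W' hW'
          (show 1 + (a - 1) = a by omega) (le_refl 1) hstart ?_
        intro _h2 _
        exact absurd (show (2 : ℕ) ≤ 1 from _h2) (by omega)
      erw [SimpleGraph.Walk.length_cons, hlen]
      omega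
    · subst hy
      right
      have hlen : W'.length = k - 1 - a := by
        refine chain2 ha hak (k - 1 - a) ⟨k - 1, by omega⟩ q W' hW'
          (show k - 1 = a + (k - 1 - a) by omega) hstart ?_
        intro _h2 _
        exact absurd (show k - 1 < k - 1 from _h2) (by omega)
      erw [SimpleGraph.Walk.length_cons, hlen]
      omega

lemma three_nbrs {k r a : ℕ} (ha : 2 ≤ a) (hak : a + 2 ≤ k) {x : RVert k r}
    (hx : x ∈ rValid k r a 0 (k - a)) {y1 y2 y3 : RVert k r}
    (h1 : (RGraphFull k r a 0 (k - a)).Adj x y1)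
    (h2 : (RGraphFull k r a 0 (k - a)).Adj x y2)
    (h3 : (RGraphFull k r a 0 (k - a)).Adj x y3)
    (h12 : y1 ≠ y2) (h13 : y1 ≠ y3) (h23 : y2 ≠ y3) :
    x = Sum.inl (⟨0, by omega⟩ : Fin k) ∨ x = Sum.inl (⟨a, by omega⟩ : Fin k) := by
  rcases x with m | ⟨m, p⟩ | ⟨m, q⟩
  · have hx' : ¬(1 ≤ m.1 ∧ m.1 < a) ∧ ¬(a + 0 + 1 ≤ m.1 ∧ m.1 < a + 0 + (k - a)) := hx
    have hmk := m.isLt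
    rcases (show m.1 = 0 ∨ m.1 = a by omega) with h | h
    · exact Or.inl (hub_congr h)
    · exact Or.inr (hub_congr h)
  · exfalso
    have hm' : m.1 < a := (adj_int1 ha hak h1).2.1
    have key : ∀ y, (RGraphFull k r a 0 (k - a)).Adj (Sum.inr (Sum.inl (m, p))) y →
        y = (if m.1 + 1 = a then Sum.inl (⟨a, by omega⟩ : Fin k)
              else Sum.inr (Sum.inl ((⟨m.1 + 1, by omega⟩ : Fin k), p))) ∨
        y = (if m.1 = 1 then Sum.inl (⟨0, by omega⟩ : Fin k)
              else Sum.inr (Sum.inl ((⟨m.1 - 1, by have := m.isLt; omega⟩ : Fin k), p))) := by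
      intro y hy
      rcases (adj_int1 ha hak hy).2.2 with ⟨hc, hv⟩ | ⟨hc, hv⟩ | ⟨hc, hv⟩ | ⟨hc, hv⟩
      · left; rw [if_pos hc]; exact hv
      · left; rw [if_neg (by omega)]; exact hv
      · right; rw [if_pos hc]; exact hv
      · right; rw [if_neg (by omega)]; exact hv
    rcases key y1 h1 with e1 | e1 <;> rcases key y2 h2 with e2 | e2 <;>
      rcases key y3 h3 with e3 | e3 <;> subst_vars <;> simp_all <;>
        first | exact h12 rfl | exact h13 rfl | exact h23 rfl
  · exfalso
    have hm' : a + 1 ≤ m.1 := (adj_int2 ha hak h1).1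
    have hmk := m.isLt
    have key : ∀ y, (RGraphFull k r a 0 (k - a)).Adj (Sum.inr (Sum.inr (m, q))) y →
        y = (if m.1 = a + 1 then Sum.inl (⟨a, by omega⟩ : Fin k)
              else Sum.inr (Sum.inr ((⟨m.1 - 1, by omega⟩ : Fin k), q))) ∨
        y = (if m.1 = k - 1 then Sum.inl (⟨0, by omega⟩ : Fin k)
              else Sum.inr (Sum.inr ((⟨(m.1 + 1) % k, Nat.mod_lt _ (by omega)⟩ : Fin k), q))) := by
      intro y hy
      rcases (adj_int2 ha hak hy).2 with ⟨hc, hv⟩ | ⟨hc, hv⟩ | ⟨hc, hv⟩ | ⟨hc, hv⟩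
      · left; rw [if_pos hc]; exact hv
      · left; rw [if_neg (by omega)]; exact hv
      · right; rw [if_pos hc]; exact hv
      · right; rw [if_neg (by omega), hv]
        exact int2_congr q (Nat.mod_eq_of_lt (by omega)).symm
    rcases key y1 h1 with e1 | e1 <;> rcases key y2 h2 with e2 | e2 <;>
      rcases key y3 h3 with e3 | e3 <;> subst_vars <;> simp_all <;>
        first | exact h12 rfl | exact h13 rfl | exact h23 rfl

lemma path_len' {k r a : ℕ} (ha : 2 ≤ a) (hak : a + 2 ≤ k) {x y : RVert k r}
    (W : (RGraphFull k r a 0 (k - a)).Walk x y) (hW : W.IsPath)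
    (hx : x = Sum.inl (⟨0, by omega⟩ : Fin k) ∨ x = Sum.inl (⟨a, by omega⟩ : Fin k))
    (hy : y = Sum.inl (⟨0, by omega⟩ : Fin k) ∨ y = Sum.inl (⟨a, by omega⟩ : Fin k))
    (hxy : x ≠ y) : W.length = a ∨ W.length = k - a := by
  rcases hx with hx | hx <;> rcases hy with hy | hy
  · exact absurd (hx.trans hy.symm) hxy
  · have := path_len ha hak (W.copy hx hy) ((SimpleGraph.Walk.isPath_copy _ _ _).mpr hW)
    erw [SimpleGraph.Walk.length_copy] at this; exact this
  · have := path_len ha hak (W.reverse.copy hy hx) ((SimpleGraph.Walk.isPath_copy _ _ _).mpr hW.reverse)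
    erw [SimpleGraph.Walk.length_copy, SimpleGraph.Walk.length_reverse] at this; exact this
  · exact absurd (hx.trans hy.symm) hxy

lemma hub_of_deg {k r a : ℕ} (ha : 2 ≤ a) (hak : a + 2 ≤ k) {U : Type*} [Fintype U]
    (F : SimpleGraph U) [DecidableRel F.Adj]
    (f : F →g RGraph k r a 0 (k - a)) (hf : Function.Injective f)
    {v : U} (hv : 2 < F.degree v) :
    (f v).1 = Sum.inl (⟨0, by omega⟩ : Fin k) ∨ (f v).1 = Sum.inl (⟨a, by omega⟩ : Fin k) := by
  rw [← SimpleGraph.card_neighborFinset_eq_degree, Finset.two_lt_card_iff] at hv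
  obtain ⟨u1, u2, u3, hm1, hm2, hm3, h12, h13, h23⟩ := hv
  rw [SimpleGraph.mem_neighborFinset] at hm1 hm2 hm3
  refine three_nbrs ha hak (f v).2 (f.map_rel hm1) (f.map_rel hm2) (f.map_rel hm3) ?_ ?_ ?_ <;>
    · intro he
      first
      | exact h12 (hf (Subtype.ext he))
      | exact h13 (hf (Subtype.ext he))
      | exact h23 (hf (Subtype.ext he))

theorem stmt17 (k r : ℕ) (hk : 5 < k) {U : Type*} [Fintype U] (F : SimpleGraph U)
    [DecidableRel F.Adj] (hforest : F.IsAcyclic)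
    (hsub1 : ∃ f : F →g RGraph k r 2 0 (k - 2), Function.Injective f)
    (hsub2 : ∃ f : F →g RGraph k r 3 0 (k - 3), Function.Injective f) :
    ∀ v w : U, 2 < F.degree v → 2 < F.degree w → F.Reachable v w → v = w := by
  intro v w hv hw hreach
  classical
  by_contra hne
  obtain ⟨f1, hf1⟩ := hsub1
  obtain ⟨f2, hf2⟩ := hsub2
  obtain ⟨W0⟩ := hreach
  have hP : (W0.toPath : F.Walk v w).IsPath := W0.toPath.2
  set P : F.Walk v w := (W0.toPath : F.Path v w).1 with hPdef
  -- first graph, a = 2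
  let g1 : F →g RGraphFull k r 2 0 (k - 2) := ⟨fun u => (f1 u).1, fun h => f1.map_rel h⟩
  have hg1 : Function.Injective g1 := fun u u' h => hf1 (Subtype.ext h)
  have hQ1 : (P.map g1).IsPath := SimpleGraph.Walk.map_isPath_of_injective hg1 hP
  have hv1 := hub_of_deg (le_refl 2) (by omega) F f1 hf1 hv
  have hw1 := hub_of_deg (le_refl 2) (by omega) F f1 hf1 hw
  have hne1 : (f1 v).1 ≠ (f1 w).1 := fun h => hne (hf1 (Subtype.ext h))
  have hL1 := path_len' (le_refl 2) (by omega) (P.map g1) hQ1 hv1 hw1 hne1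
  rw [SimpleGraph.Walk.length_map] at hL1
  -- second graph, a = 3
  let g2 : F →g RGraphFull k r 3 0 (k - 3) := ⟨fun u => (f2 u).1, fun h => f2.map_rel h⟩
  have hg2 : Function.Injective g2 := fun u u' h => hf2 (Subtype.ext h)
  have hQ2 : (P.map g2).IsPath := SimpleGraph.Walk.map_isPath_of_injective hg2 hP
  have hv2 := hub_of_deg (by omega) (by omega) F f2 hf2 hv
  have hw2 := hub_of_deg (by omega) (by omega) F f2 hf2 hw
  have hne2 : (f2 v).1 ≠ (f2 w).1 := fun h => hne (hf2 (Subtype.ext h))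
  have hL2 := path_len' (by omega : 2 ≤ 3) (by omega) (P.map g2) hQ2 hv2 hw2 hne2
  rw [SimpleGraph.Walk.length_map] at hL2
  omega
end
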